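/- arXiv:1309.6213 — 6 statements merged into one kernel-verified Lean document; each statement's English description precedes it below -/
import Mathlib

section
/- Suppose there exist non-decreasing continuous functions σ_i : [t_0,∞) → ℝ with τ_i(t) ≤ σ_i(t) ≤ t for all t ≥ t_0 and every i = 1,…,m, such that limsup_{t→∞} ∏_{j=1}^m [ ∏_{i=1}^m ∫_{σ_j(t)}^{t} p_i(s) · exp( ∫_{τ_i(s)}^{σ_i(t)} ∑_{k=1}^m p_k(ξ) · exp( ∫_{τ_k(ξ)}^{ξ} ∑_{l=1}^m p_l(u) du ) dξ ) ds ]^{1/m} > 1/m^m. Then every solution of the equation x'(t) + ∑_{i=1}^m p_i(t) x(τ_i(t)) = 0 is oscillatory. -/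
open Real Filter MeasureTheory


lemma amgm_matrix (m : ℕ) (hm : 1 ≤ m) (a : Fin m → Fin m → ℝ) (y : Fin m → ℝ)
    (ha : ∀ i j, 0 ≤ a i j) (hy : ∀ i, 0 < y i)
    (h : ∀ j, ∑ i, a i j * y i ≤ y j) :
    ∏ j, (∏ i, a i j) ^ ((1:ℝ)/m) ≤ 1 / (m:ℝ)^m := by
  have hm0 : (0:ℝ) < m := by exact_mod_cast hm
  -- per column AM-GM
  have key : ∀ j, (∏ i, a i j * y i) ^ ((1:ℝ)/m) ≤ y j / m := by
    intro j
    have hgm := Real.geom_mean_le_arith_mean_weighted Finset.univ (fun _ => (1:ℝ)/m)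
      (fun i => a i j * y i) (fun i _ => by positivity)
      (by simp [Finset.sum_const]; field_simp) (fun i _ => mul_nonneg (ha i j) (hy i).le)
    calc (∏ i, a i j * y i) ^ ((1:ℝ)/m)
        = ∏ i, (a i j * y i) ^ ((1:ℝ)/m) := by
          rw [← Real.finset_prod_rpow _ _ (fun i _ => mul_nonneg (ha i j) (hy i).le)]
      _ ≤ ∑ i, (1:ℝ)/m * (a i j * y i) := hgm
      _ = (1/m) * ∑ i, a i j * y i := by rw [Finset.mul_sum]
      _ ≤ (1/m) * y j := by
          apply mul_le_mul_of_nonneg_left (h j) (by positivity)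
      _ = y j / m := by ring
  have hprod : ∏ j, (∏ i, a i j * y i) ^ ((1:ℝ)/m) ≤ ∏ j, y j / m := by
    apply Finset.prod_le_prod (fun j _ => Real.rpow_nonneg (Finset.prod_nonneg fun i _ => mul_nonneg (ha i j) (hy i).le) _) (fun j _ => key j)
  have hsplit : ∀ j, (∏ i, a i j * y i) ^ ((1:ℝ)/m)
      = (∏ i, a i j) ^ ((1:ℝ)/m) * (∏ i, y i) ^ ((1:ℝ)/m) := by
    intro j
    rw [← Real.mul_rpow (Finset.prod_nonneg fun i _ => ha i j)
      (Finset.prod_nonneg fun i _ => (hy i).le), ← Finset.prod_mul_distrib]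
  have hY : (0:ℝ) < ∏ i, y i := Finset.prod_pos fun i _ => hy i
  have hYpow : ∏ _j : Fin m, (∏ i, y i) ^ ((1:ℝ)/m) = ∏ i, y i := by
    rw [Finset.prod_const, Finset.card_univ, Fintype.card_fin,
      ← Real.rpow_natCast ((∏ i, y i) ^ ((1:ℝ)/m)) m, ← Real.rpow_mul hY.le]
    field_simp
    simp
  have : (∏ j, (∏ i, a i j) ^ ((1:ℝ)/m)) * ∏ i, y i ≤ (∏ j, y j) / (m:ℝ)^m := by
    calc (∏ j, (∏ i, a i j) ^ ((1:ℝ)/m)) * ∏ i, y i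
        = ∏ j, (∏ i, a i j * y i) ^ ((1:ℝ)/m) := by
          rw [Finset.prod_congr rfl (fun j _ => hsplit j), Finset.prod_mul_distrib, hYpow]
      _ ≤ ∏ j, y j / m := hprod
      _ = (∏ j, y j) / (m:ℝ)^m := by
          rw [Finset.prod_div_distrib, Finset.prod_const, Finset.card_univ, Fintype.card_fin]
  rw [← le_div_iff₀ hY] at this
  calc ∏ j, (∏ i, a i j) ^ ((1:ℝ)/m) ≤ (∏ j, y j) / (m:ℝ)^m / ∏ i, y i := this
    _ = 1 / (m:ℝ)^m := by field_simp

lemma gronwall_step (x g q : ℝ → ℝ) (a b : ℝ) (hab : a ≤ b)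
    (hx : ∀ t ∈ Set.Icc a b, HasDerivAt x (-(g t)) t)
    (hxpos : ∀ t ∈ Set.Icc a b, 0 < x t)
    (hgcont : ContinuousOn g (Set.Icc a b))
    (hqcont : ContinuousOn q (Set.Icc a b))
    (hq : ∀ t ∈ Set.Icc a b, q t * x t ≤ g t) :
    x b * Real.exp (∫ u in a..b, q u) ≤ x a := by
  have hxcont : ContinuousOn x (Set.Icc a b) := fun t ht => (hx t ht).continuousAt.continuousWithinAt
  have hxne : ∀ t ∈ Set.Icc a b, x t ≠ 0 := fun t ht => (hxpos t ht).ne'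
  have hL : ∀ t ∈ Set.uIcc a b, HasDerivAt (fun u => Real.log (x u)) (-(g t) / x t) t := by
    intro t ht
    rw [Set.uIcc_of_le hab] at ht
    exact (hx t ht).log (hxne t ht)
  have hint : IntervalIntegrable (fun t => -(g t) / x t) volume a b := by
    apply ContinuousOn.intervalIntegrable
    rw [Set.uIcc_of_le hab]
    exact (hgcont.neg).div hxcont hxne
  have hftc := intervalIntegral.integral_eq_sub_of_hasDerivAt hL hint
  -- ∫ -(g)/x ≤ ∫ -q
  have hmono : (∫ u in a..b, -(g u) / x u) ≤ ∫ u in a..b, -(q u) := by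
    apply intervalIntegral.integral_mono_on hab hint
    · exact (hqcont.neg).intervalIntegrable_of_Icc hab
    · intro u hu
      have := hq u hu
      have hxu := hxpos u hu
      rw [div_le_iff₀ hxu]
      nlinarith
  -- conclude
  have h1 : Real.log (x b) - Real.log (x a) ≤ -(∫ u in a..b, q u) := by
    rw [← hftc]
    calc (∫ u in a..b, -(g u) / x u) ≤ ∫ u in a..b, -(q u) := hmono
      _ = -(∫ u in a..b, q u) := intervalIntegral.integral_neg
  have h2 : Real.log (x b) + (∫ u in a..b, q u) ≤ Real.log (x a) := by linarith
  have ha' : a ∈ Set.Icc a b := Set.left_mem_Icc.2 hab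
  have hb' : b ∈ Set.Icc a b := Set.right_mem_Icc.2 hab
  calc x b * Real.exp (∫ u in a..b, q u)
      = Real.exp (Real.log (x b) + (∫ u in a..b, q u)) := by
        rw [Real.exp_add, Real.exp_log (hxpos b hb')]
    _ ≤ Real.exp (Real.log (x a)) := Real.exp_le_exp.2 h2
    _ = x a := Real.exp_log (hxpos a ha')

lemma primitive_contOn {f : ℝ → ℝ} {c : ℝ} (hf : ContinuousOn f (Set.Ici c)) :
    ContinuousOn (fun y => ∫ u in c..y, f u) (Set.Ici c) := by
  have hf' : Continuous (fun u => f (max u c)) :=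
    hf.comp_continuous (continuous_id.max continuous_const) (fun u => Set.mem_Ici.2 (le_max_right _ _))
  have hF' : Continuous (fun y => ∫ u in c..y, f (max u c)) :=
    intervalIntegral.continuous_primitive (fun a b => hf'.intervalIntegrable a b) c
  apply ContinuousOn.congr hF'.continuousOn
  intro y hy
  apply intervalIntegral.integral_congr
  intro u hu
  rw [Set.uIcc_of_le hy] at hu
  simp [max_eq_left hu.1]

lemma interval_split {f : ℝ → ℝ} {c a b : ℝ} (hf : ContinuousOn f (Set.Ici c))
    (ha : c ≤ a) (hb : c ≤ b) :
    (∫ u in a..b, f u) = (∫ u in c..b, f u) - (∫ u in c..a, f u) := by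
  have h1 : IntervalIntegrable f volume c b :=
    (hf.mono (by rw [Set.uIcc_of_le hb]; exact Set.Icc_subset_Ici_self)).intervalIntegrable
  have h2 : IntervalIntegrable f volume c a :=
    (hf.mono (by rw [Set.uIcc_of_le ha]; exact Set.Icc_subset_Ici_self)).intervalIntegrable
  exact (intervalIntegral.integral_interval_sub_left h1 h2).symm
lemma core
    (m : ℕ) (hm : 1 ≤ m) (t0 : ℝ)
    (p τ : Fin m → ℝ → ℝ)
    (hp_cont : ∀ i, ContinuousOn (p i) (Set.Ici t0))
    (hp_nonneg : ∀ i t, t0 ≤ t → 0 ≤ p i t)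
    (hτ_cont : ∀ i, ContinuousOn (τ i) (Set.Ici t0))
    (hτ_le : ∀ i t, t0 ≤ t → τ i t ≤ t)
    (hτ_tendsto : ∀ i, Tendsto (τ i) atTop atTop)
    (σ : Fin m → ℝ → ℝ)
    (hσ_mono : ∀ i, MonotoneOn (σ i) (Set.Ici t0))
    (hσ_ge : ∀ i t, t0 ≤ t → τ i t ≤ σ i t)
    (hσ_le : ∀ i t, t0 ≤ t → σ i t ≤ t)
    (hlimsup :
      Filter.limsup (fun t : ℝ =>
        ∏ j : Fin m,
          (∏ i : Fin m,
            ∫ s in σ j t..t, p i s *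
              Real.exp (∫ ξ in τ i s..σ i t,
                ∑ k : Fin m, p k ξ *
                  Real.exp (∫ u in τ k ξ..ξ, ∑ l : Fin m, p l u))) ^ ((1 : ℝ) / m))
        atTop > 1 / (m : ℝ) ^ m)
    (z : ℝ → ℝ) (hz_cont : Continuous z) (T0 : ℝ) (hT0 : t0 ≤ T0)
    (hzpos : ∀ t, T0 ≤ t → 0 < z t)
    (hz_sol : ∀ t, T0 ≤ t → HasDerivAt z (-(∑ i : Fin m, p i t * z (τ i t))) t) :
    False := by
  -- notation
  set Q1 : ℝ → ℝ := fun u => ∑ l : Fin m, p l u with hQ1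
  set E : Fin m → ℝ → ℝ := fun k ξ => Real.exp (∫ u in τ k ξ..ξ, Q1 u) with hE
  set Q2 : ℝ → ℝ := fun ξ => ∑ k : Fin m, p k ξ * E k ξ with hQ2
  set g : ℝ → ℝ := fun t => ∑ i : Fin m, p i t * z (τ i t) with hg
  -- thresholds
  have thr : ∀ c : ℝ, ∃ d : ℝ, c ≤ d ∧ ∀ t, d ≤ t → c ≤ t ∧ ∀ i, c ≤ τ i t := by
    intro c
    have h : ∀ᶠ t in atTop, c ≤ t ∧ ∀ i, c ≤ τ i t :=
      (eventually_ge_atTop c).and (eventually_all.2 fun i => (hτ_tendsto i).eventually_ge_atTop c)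
    obtain ⟨d, hd⟩ := eventually_atTop.1 h
    exact ⟨max d c, le_max_right _ _, fun t ht => hd t ((le_max_left _ _).trans ht)⟩
  obtain ⟨T1, hT01, hT1⟩ := thr T0
  obtain ⟨T2, hT12, hT2⟩ := thr T1
  obtain ⟨T3, hT23, hT3⟩ := thr T2
  obtain ⟨T4, hT34, hT4⟩ := thr T3
  -- basic facts
  have ht0T1 : t0 ≤ T1 := hT0.trans hT01
  have hQ1cont : ContinuousOn Q1 (Set.Ici t0) := continuousOn_finset_sum _ fun l _ => hp_cont l
  have hgcont : ContinuousOn g (Set.Ici t0) := by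
    apply continuousOn_finset_sum
    intro i _
    exact (hp_cont i).mul (hz_cont.comp_continuousOn (hτ_cont i))
  -- z is antitone on [T1, ∞)
  have hanti : AntitoneOn z (Set.Ici T1) := by
    apply antitoneOn_of_deriv_nonpos (convex_Ici T1) hz_cont.continuousOn
    · intro t ht
      rw [interior_Ici] at ht
      exact ((hz_sol t ((hT01.trans ht.le))).differentiableAt).differentiableWithinAt
    · intro t ht
      rw [interior_Ici] at ht
      have htT1 : T1 ≤ t := ht.le
      rw [(hz_sol t (hT01.trans htT1)).deriv]
      have : 0 ≤ ∑ i : Fin m, p i t * z (τ i t) := by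
        apply Finset.sum_nonneg
        intro i _
        exact mul_nonneg (hp_nonneg i t (ht0T1.trans htT1))
          (hzpos _ ((hT1 t htT1).2 i)).le
      linarith
  -- Level 1 Gronwall: for T2 ≤ a ≤ b, z b * exp(∫ a..b Q1) ≤ z a
  have G1 : ∀ a b, T2 ≤ a → a ≤ b → z b * Real.exp (∫ u in a..b, Q1 u) ≤ z a := by
    intro a b ha hab
    have hsub : Set.Icc a b ⊆ Set.Ici t0 := fun u hu =>
      (ht0T1.trans (hT12.trans (ha.trans hu.1)))
    apply gronwall_step z g Q1 a b hab
    · intro u hu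
      exact hz_sol u (hT01.trans (hT12.trans (ha.trans hu.1)))
    · intro u hu
      exact hzpos u (hT01.trans (hT12.trans (ha.trans hu.1)))
    · exact hgcont.mono hsub
    · exact hQ1cont.mono hsub
    · intro u hu
      have huT2 : T2 ≤ u := ha.trans hu.1
      rw [hQ1, hg]
      simp only
      rw [Finset.sum_mul]
      apply Finset.sum_le_sum
      intro l _
      have h1 : z u ≤ z (τ l u) := by
        apply hanti
        · exact Set.mem_Ici.2 ((hT2 u huT2).2 l)
        · exact Set.mem_Ici.2 (hT12.trans huT2)
        · exact hτ_le l u (ht0T1.trans (hT12.trans huT2))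
      exact mul_le_mul_of_nonneg_left h1 (hp_nonneg l u (ht0T1.trans (hT12.trans huT2)))
  -- continuity of E and Q2 on [T1, ∞)
  have hEcont : ∀ k, ContinuousOn (E k) (Set.Ici T1) := by
    intro k
    have hrepr : ∀ ξ ∈ Set.Ici T1, E k ξ =
        Real.exp ((∫ u in t0..ξ, Q1 u) - ∫ u in t0..(τ k ξ), Q1 u) := by
      intro ξ hξ
      rw [hE]
      simp only
      rw [interval_split hQ1cont (hT0.trans ((hT1 ξ hξ).2 k)) (ht0T1.trans hξ)]
    apply ContinuousOn.congr _ hrepr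
    apply ContinuousOn.rexp
    apply ContinuousOn.sub
    · exact (primitive_contOn hQ1cont).mono (Set.Ici_subset_Ici.2 ht0T1) |>.congr (fun _ _ => rfl)
    · apply ContinuousOn.comp (primitive_contOn hQ1cont)
        ((hτ_cont k).mono (Set.Ici_subset_Ici.2 ht0T1))
      intro ξ hξ
      exact Set.mem_Ici.2 (hT0.trans ((hT1 ξ hξ).2 k))
  have hQ2cont : ContinuousOn Q2 (Set.Ici T1) := by
    apply continuousOn_finset_sum
    intro k _
    exact ((hp_cont k).mono (Set.Ici_subset_Ici.2 ht0T1)).mul (hEcont k)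
  -- Level 2 Gronwall: for T3 ≤ a ≤ b, z b * exp(∫ a..b Q2) ≤ z a
  have G2 : ∀ a b, T3 ≤ a → a ≤ b → z b * Real.exp (∫ u in a..b, Q2 u) ≤ z a := by
    intro a b ha hab
    have hsubt0 : Set.Icc a b ⊆ Set.Ici t0 := fun u hu =>
      ht0T1.trans (hT12.trans (hT23.trans (ha.trans hu.1)))
    have hsubT1 : Set.Icc a b ⊆ Set.Ici T1 := fun u hu =>
      hT12.trans (hT23.trans (ha.trans hu.1))
    apply gronwall_step z g Q2 a b hab
    · intro u hu
      exact hz_sol u (hT01.trans (hsubT1 hu))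
    · intro u hu
      exact hzpos u (hT01.trans (hsubT1 hu))
    · exact hgcont.mono hsubt0
    · exact hQ2cont.mono hsubT1
    · intro u hu
      have huT3 : T3 ≤ u := ha.trans hu.1
      rw [hQ2, hg]
      simp only
      rw [Finset.sum_mul]
      apply Finset.sum_le_sum
      intro k _
      have hτk : T2 ≤ τ k u := (hT3 u huT3).2 k
      have h1 : z u * E k u ≤ z (τ k u) := by
        rw [hE]
        exact G1 (τ k u) u hτk (hτ_le k u (hsubt0 hu))
      calc p k u * E k u * z u = p k u * (z u * E k u) := by ring
        _ ≤ p k u * z (τ k u) :=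
            mul_le_mul_of_nonneg_left h1 (hp_nonneg k u (hsubt0 hu))
  -- eventually the limsup quantity is ≤ 1/m^m
  have hQ2P := primitive_contOn hQ2cont
  have hbound : ∀ᶠ t in atTop,
      (∏ j : Fin m,
        (∏ i : Fin m,
          ∫ s in σ j t..t, p i s *
            Real.exp (∫ ξ in τ i s..σ i t, Q2 ξ)) ^ ((1 : ℝ) / m)) ≤ 1 / (m : ℝ) ^ m ∧
      0 ≤ (∏ j : Fin m,
        (∏ i : Fin m,
          ∫ s in σ j t..t, p i s *
            Real.exp (∫ ξ in τ i s..σ i t, Q2 ξ)) ^ ((1 : ℝ) / m)) := by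
    have hσbig : ∀ᶠ t in atTop, ∀ j, T4 ≤ σ j t := by
      apply eventually_all.2
      intro j
      filter_upwards [(hτ_tendsto j).eventually_ge_atTop T4, eventually_ge_atTop t0] with t h1 h2
      exact h1.trans (hσ_ge j t h2)
    filter_upwards [hσbig, eventually_ge_atTop t0] with t hσt ht0t
    set A : Fin m → Fin m → ℝ := fun i j =>
      ∫ s in σ j t..t, p i s * Real.exp (∫ ξ in τ i s..σ i t, Q2 ξ) with hA
    -- facts about the domain
    have hdom : ∀ j, ∀ s ∈ Set.Icc (σ j t) t, t0 ≤ s ∧ T4 ≤ s := by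
      intro j s hs
      refine ⟨ht0T1.trans (hT12.trans (hT23.trans (hT34.trans ((hσt j).trans hs.1)))),
        (hσt j).trans hs.1⟩
    have hσle : ∀ j, σ j t ≤ t := fun j => hσ_le j t ht0t
    have hT1σ : ∀ i, T1 ≤ σ i t := fun i => (hT12.trans (hT23.trans (hT34.trans (hσt i))))
    -- continuity of the inner integrand in s
    have hEbcont : ∀ i j, ContinuousOn
        (fun s => p i s * Real.exp (intervalIntegral Q2 (τ i s) (σ i t) volume))
        (Set.Icc (σ j t) t) := by
      intro i j
      have hsub : Set.Icc (σ j t) t ⊆ Set.Ici t0 := fun s hs => (hdom j s hs).1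
      have hrepr : ∀ s ∈ Set.Icc (σ j t) t,
          intervalIntegral Q2 (τ i s) (σ i t) volume
            = (∫ ξ in T1..σ i t, Q2 ξ) - ∫ ξ in T1..(τ i s), Q2 ξ := by
        intro s hs
        have hsT4 : T4 ≤ s := (hσt j).trans hs.1
        have hτT3 : T3 ≤ τ i s := (hT4 s hsT4).2 i
        exact interval_split hQ2cont ((hT12.trans hT23).trans hτT3) (hT1σ i)
      apply ContinuousOn.mul ((hp_cont i).mono hsub)
      apply ContinuousOn.congr (f := fun s =>
        Real.exp ((∫ ξ in T1..σ i t, Q2 ξ) - ∫ ξ in T1..(τ i s), Q2 ξ))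
      · apply ContinuousOn.rexp
        apply ContinuousOn.sub continuousOn_const
        apply ContinuousOn.comp hQ2P ((hτ_cont i).mono hsub)
        intro s hs
        have hsT4 : T4 ≤ s := (hσt j).trans hs.1
        exact Set.mem_Ici.2 (hT12.trans (hT23.trans ((hT4 s hsT4).2 i)))
      · intro s hs
        exact congrArg rexp (hrepr s hs)
    -- nonnegativity of A
    have hAnn : ∀ i j, 0 ≤ A i j := by
      intro i j
      apply intervalIntegral.integral_nonneg (hσle j)
      intro s hs
      have hsub := hdom j s hs
      exact mul_nonneg (hp_nonneg i s hsub.1) (Real.exp_pos _).le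
    -- the key inequality per column
    have hcol : ∀ j, ∑ i, A i j * z (σ i t) ≤ z (σ j t) := by
      intro j
      have hIcc : Set.Icc (σ j t) t ⊆ Set.Ici t0 := fun s hs => (hdom j s hs).1
      -- FTC
      have hft : (∫ s in σ j t..t, g s) = z (σ j t) - z t := by
        have h1 : ∀ s ∈ Set.uIcc (σ j t) t, HasDerivAt z (-(g s)) s := by
          intro s hs
          rw [Set.uIcc_of_le (hσle j)] at hs
          exact hz_sol s (hT01.trans (hT12.trans (hT23.trans (hT34.trans ((hdom j s hs).2)))))
        have h2 : IntervalIntegrable (fun s => -(g s)) volume (σ j t) t := by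
          apply ContinuousOn.intervalIntegrable
          rw [Set.uIcc_of_le (hσle j)]
          exact (hgcont.mono hIcc).neg
        have := intervalIntegral.integral_eq_sub_of_hasDerivAt h1 h2
        rw [intervalIntegral.integral_neg] at this
        linarith
      -- lower bound of the integrand
      have hmono : (∫ s in σ j t..t, ∑ i, z (σ i t) *
          (p i s * Real.exp (∫ ξ in τ i s..σ i t, Q2 ξ)))
          ≤ ∫ s in σ j t..t, g s := by
        apply intervalIntegral.integral_mono_on (hσle j)
        · apply ContinuousOn.intervalIntegrable
          rw [Set.uIcc_of_le (hσle j)]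
          exact continuousOn_finset_sum _ fun i _ => continuousOn_const.mul (hEbcont i j)
        · apply ContinuousOn.intervalIntegrable
          rw [Set.uIcc_of_le (hσle j)]
          exact hgcont.mono hIcc
        · intro s hs
          rw [hg]
          apply Finset.sum_le_sum
          intro i _
          have hsT4 : T4 ≤ s := (hdom j s hs).2
          have hτT3 : T3 ≤ τ i s := (hT4 s hsT4).2 i
          have hτσ : τ i s ≤ σ i t := by
            calc τ i s ≤ σ i s := hσ_ge i s (hdom j s hs).1
              _ ≤ σ i t := hσ_mono i (Set.mem_Ici.2 (hdom j s hs).1) (Set.mem_Ici.2 ht0t) hs.2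
          have := G2 (τ i s) (σ i t) hτT3 hτσ
          calc z (σ i t) * (p i s * Real.exp (∫ ξ in τ i s..σ i t, Q2 ξ))
              = p i s * (z (σ i t) * Real.exp (∫ ξ in τ i s..σ i t, Q2 ξ)) := by ring
            _ ≤ p i s * z (τ i s) :=
                mul_le_mul_of_nonneg_left this (hp_nonneg i s (hdom j s hs).1)
      -- split the sum integral
      have hsplit : (∫ s in σ j t..t, ∑ i, z (σ i t) *
          (p i s * Real.exp (∫ ξ in τ i s..σ i t, Q2 ξ)))
          = ∑ i, z (σ i t) * A i j := by
        rw [intervalIntegral.integral_finset_sum]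
        · apply Finset.sum_congr rfl
          intro i _
          rw [intervalIntegral.integral_const_mul]
        · intro i _
          apply ContinuousOn.intervalIntegrable
          rw [Set.uIcc_of_le (hσle j)]
          exact continuousOn_const.mul (hEbcont i j)
      have hzt : 0 < z t := hzpos t ((hT01.trans (hT12.trans (hT23.trans (hT34.trans ((hσt j).trans (hσle j)))))))
      calc ∑ i, A i j * z (σ i t) = ∑ i, z (σ i t) * A i j := by
            apply Finset.sum_congr rfl; intro i _; ring
        _ = _ := hsplit.symm
        _ ≤ ∫ s in σ j t..t, g s := hmono
        _ = z (σ j t) - z t := hft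
        _ ≤ z (σ j t) := by linarith
    refine ⟨amgm_matrix m hm A (fun i => z (σ i t))
      hAnn (fun i => hzpos _ (hT01.trans (hT12.trans (hT23.trans (hT34.trans (hσt i)))))) hcol,
      Finset.prod_nonneg fun j _ =>
        Real.rpow_nonneg (Finset.prod_nonneg fun i _ => hAnn i j) _⟩
  -- contradiction with the limsup hypothesis
  have hcob : IsBoundedUnder (· ≥ ·) atTop (fun t : ℝ =>
      ∏ j : Fin m,
        (∏ i : Fin m,
          ∫ s in σ j t..t, p i s *
            Real.exp (∫ ξ in τ i s..σ i t, Q2 ξ)) ^ ((1 : ℝ) / m)) :=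
    ⟨0, hbound.mono fun t ht => ht.2⟩
  have hle := Filter.limsup_le_of_le hcob.isCoboundedUnder_le (hbound.mono fun t ht => ht.1)
  exact absurd hlimsup (not_lt.2 hle)

/-- **Theorem 3.1.** Suppose there exist non-decreasing continuous functions
`σ i` with `τ i t ≤ σ i t ≤ t` such that the iterated-exponential `limsup`
condition holds with lower bound `1 / m ^ m`. Then every solution of
`x'(t) + ∑ i, p i t * x (τ i t) = 0` is oscillatory. -/
theorem oscillation_several_nonmonotone_args
    (m : ℕ) (hm : 1 ≤ m) (t0 : ℝ)
    (p τ : Fin m → ℝ → ℝ)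
    (hp_cont : ∀ i, ContinuousOn (p i) (Set.Ici t0))
    (hp_nonneg : ∀ i t, t0 ≤ t → 0 ≤ p i t)
    (hτ_cont : ∀ i, ContinuousOn (τ i) (Set.Ici t0))
    (hτ_nonneg : ∀ i t, t0 ≤ t → 0 ≤ τ i t)
    (hτ_le : ∀ i t, t0 ≤ t → τ i t ≤ t)
    (hτ_tendsto : ∀ i, Tendsto (τ i) atTop atTop)
    (σ : Fin m → ℝ → ℝ)
    (hσ_cont : ∀ i, ContinuousOn (σ i) (Set.Ici t0))
    (hσ_mono : ∀ i, MonotoneOn (σ i) (Set.Ici t0))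
    (hσ_ge : ∀ i t, t0 ≤ t → τ i t ≤ σ i t)
    (hσ_le : ∀ i t, t0 ≤ t → σ i t ≤ t)
    (hlimsup :
      Filter.limsup (fun t : ℝ =>
        ∏ j : Fin m,
          (∏ i : Fin m,
            ∫ s in σ j t..t, p i s *
              Real.exp (∫ ξ in τ i s..σ i t,
                ∑ k : Fin m, p k ξ *
                  Real.exp (∫ u in τ k ξ..ξ, ∑ l : Fin m, p l u))) ^ ((1 : ℝ) / m))
        atTop > 1 / (m : ℝ) ^ m)
    (x : ℝ → ℝ) (hx_cont : Continuous x)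
    (hx_sol : ∃ T, t0 ≤ T ∧ ∀ t, T ≤ t →
      HasDerivAt x (-(∑ i : Fin m, p i t * x (τ i t))) t) :
    ∀ T : ℝ, ∃ t, T ≤ t ∧ x t = 0 := by
  intro T
  by_contra hcon
  push_neg at hcon
  obtain ⟨T', hT't0, hsol⟩ := hx_sol
  set T0 := max T T' with hT0def
  have hT0t0 : t0 ≤ T0 := hT't0.trans (le_max_right _ _)
  have hne : ∀ t, T0 ≤ t → x t ≠ 0 := fun t ht => hcon t ((le_max_left _ _).trans ht)
  have hsol' : ∀ t, T0 ≤ t → HasDerivAt x (-(∑ i : Fin m, p i t * x (τ i t))) t :=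
    fun t ht => hsol t ((le_max_right _ _).trans ht)
  have hsign : (∀ t, T0 ≤ t → 0 < x t) ∨ (∀ t, T0 ≤ t → x t < 0) := by
    rcases lt_or_gt_of_ne (hne T0 le_rfl) with h | h
    · right
      intro t ht
      rcases lt_or_gt_of_ne (hne t ht) with h' | h'
      · exact h'
      · exfalso
        have hiv := intermediate_value_Icc ht hx_cont.continuousOn
        have : (0 : ℝ) ∈ Set.Icc (x T0) (x t) := ⟨h.le, h'.le⟩
        obtain ⟨c, hc, hc0⟩ := hiv this
        exact hne c hc.1 hc0
    · left
      intro t ht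
      rcases lt_or_gt_of_ne (hne t ht) with h' | h'
      · exfalso
        have hiv := intermediate_value_Icc' ht hx_cont.continuousOn
        have : (0 : ℝ) ∈ Set.Icc (x t) (x T0) := ⟨h'.le, h.le⟩
        obtain ⟨c, hc, hc0⟩ := hiv this
        exact hne c hc.1 hc0
      · exact h'
  rcases hsign with hpos | hneg
  · exact core m hm t0 p τ hp_cont hp_nonneg hτ_cont hτ_le hτ_tendsto σ hσ_mono hσ_ge hσ_le
      hlimsup x hx_cont T0 hT0t0 hpos hsol'
  · apply core m hm t0 p τ hp_cont hp_nonneg hτ_cont hτ_le hτ_tendsto σ hσ_mono hσ_ge hσ_le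
      hlimsup (fun t => -x t) hx_cont.neg T0 hT0t0
      (fun t ht => by simpa using (hneg t ht))
    intro t ht
    have : HasDerivAt (fun t => -x t) _ t := (hsol' t ht).neg
    convert this using 1
    simp [mul_neg, Finset.sum_neg_distrib]
end

section
/- Suppose that for each i = 1,…,m, liminf_{t→∞} ∫_{τ_i(t)}^{t} p_i(s) ds = q_i > 0, and suppose the equation e^{q_i λ} = λ has a real root, with λ_i* denoting its smallest root. If x is an eventually positive solution of x'(t) + ∑_{i=1}^m p_i(t) x(τ_i(t)) = 0, then for each i = 1,…,m, liminf_{t→∞} x(τ_i(t))/x(t) ≥ λ_i*. -/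
open Real Filter MeasureTheory

private lemma aux_mono (F : ℝ → ℝ) (a b : ℝ) (hab : a ≤ b)
    (hc : ContinuousOn F (Set.Icc a b))
    (hd : ∀ t ∈ Set.Ioo a b, ∃ v, 0 ≤ v ∧ HasDerivAt F v t) : F a ≤ F b := by
  have hmono : MonotoneOn F (Set.Icc a b) := by
    apply monotoneOn_of_deriv_nonneg (convex_Icc a b) hc
    · intro t ht
      rw [interior_Icc] at ht
      obtain ⟨v, _, hv⟩ := hd t ht
      exact hv.differentiableAt.differentiableWithinAt
    · intro t ht
      rw [interior_Icc] at ht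
      obtain ⟨v, hv0, hv⟩ := hd t ht
      rw [hv.deriv]; exact hv0
  exact hmono (Set.left_mem_Icc.2 hab) (Set.right_mem_Icc.2 hab) hab

private lemma aux_anti (F : ℝ → ℝ) (a b : ℝ) (hab : a ≤ b)
    (hc : ContinuousOn F (Set.Icc a b))
    (hd : ∀ t ∈ Set.Ioo a b, ∃ v, v ≤ 0 ∧ HasDerivAt F v t) : F b ≤ F a := by
  have h := aux_mono (fun s => -F s) a b hab hc.neg ?_
  · simpa using h
  · intro t ht
    obtain ⟨v, hv0, hv⟩ := hd t ht
    exact ⟨-v, neg_nonneg.2 hv0, hv.neg⟩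

set_option maxHeartbeats 2000000 in
/-- **Lemma 3.1.** If `liminf_{t→∞} ∫_{τ i t}^{t} p i = q i > 0` and `λᵢ*` is the
smallest root of `e^{q i · λ} = λ`, then every eventually positive solution `x`
of `x'(t) + ∑ i, p i t * x (τ i t) = 0` satisfies
`liminf_{t→∞} x (τ i t) / x t ≥ λᵢ*` for each `i`. -/
theorem liminf_ratio_ge_smallest_root
    (m : ℕ) (hm : 1 ≤ m) (t0 : ℝ)
    (p τ : Fin m → ℝ → ℝ)
    (hp_cont : ∀ i, ContinuousOn (p i) (Set.Ici t0))
    (hp_nonneg : ∀ i t, t0 ≤ t → 0 ≤ p i t)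
    (hτ_cont : ∀ i, ContinuousOn (τ i) (Set.Ici t0))
    (hτ_nonneg : ∀ i t, t0 ≤ t → 0 ≤ τ i t)
    (hτ_le : ∀ i t, t0 ≤ t → τ i t ≤ t)
    (hτ_tendsto : ∀ i, Tendsto (τ i) atTop atTop)
    (q : Fin m → ℝ) (hq_pos : ∀ i, 0 < q i)
    (hq : ∀ i, Filter.liminf (fun t : ℝ => ∫ s in τ i t..t, p i s) atTop = q i)
    (lamStar : Fin m → ℝ)
    (hroot : ∀ i, Real.exp (q i * lamStar i) = lamStar i)
    (hsmallest : ∀ i lam, Real.exp (q i * lam) = lam → lamStar i ≤ lam)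
    (x : ℝ → ℝ) (hx_cont : Continuous x)
    (hx_sol : ∃ T, t0 ≤ T ∧ ∀ t, T ≤ t →
      HasDerivAt x (-(∑ i : Fin m, p i t * x (τ i t))) t)
    (hx_pos : ∃ T, t0 ≤ T ∧ ∀ t, T ≤ t → 0 < x t) :
    ∀ i : Fin m,
      lamStar i ≤ Filter.liminf (fun t : ℝ => x (τ i t) / x t) atTop := by
  intro i
  classical
  obtain ⟨Ts, hTs0, hsol⟩ := hx_sol
  obtain ⟨Tp, hTp0, hpos⟩ := hx_pos
  set xd : ℝ → ℝ := fun t => -(∑ j : Fin m, p j t * x (τ j t)) with hxd_def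
  set T0 : ℝ := max (max Ts Tp) (t0 + 1) with hT0_def
  have hT0_t0 : t0 + 1 ≤ T0 := le_max_right _ _
  have hT0d : ∀ t, T0 ≤ t → HasDerivAt x (xd t) t := fun t ht =>
    hsol t (le_trans (le_trans (le_max_left Ts Tp) (le_max_left _ _)) ht)
  have hT0p : ∀ t, T0 ≤ t → 0 < x t := fun t ht =>
    hpos t (le_trans (le_trans (le_max_right Ts Tp) (le_max_left _ _)) ht)
  have hT0ge : ∀ t, T0 ≤ t → t0 ≤ t := fun t ht => by linarith
  -- T1
  obtain ⟨T1', hT1'⟩ := eventually_atTop.1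
    ((eventually_ge_atTop T0).and (eventually_all.2 fun j => (hτ_tendsto j).eventually_ge_atTop T0))
  set T1 : ℝ := max T1' T0 with hT1_def
  have hT1 : ∀ t, T1 ≤ t → (T0 ≤ t ∧ ∀ j, T0 ≤ τ j t) := fun t ht =>
    hT1' t (le_trans (le_max_left _ _) ht)
  have hT1T0 : T0 ≤ T1 := le_max_right _ _
  have hxpos1 : ∀ t, T1 ≤ t → 0 < x t := fun t ht => hT0p t (hT1 t ht).1
  have ht0T1 : t0 + 1 ≤ T1 := le_trans hT0_t0 hT1T0
  have hsum_nonneg : ∀ t, T1 ≤ t → 0 ≤ ∑ j : Fin m, p j t * x (τ j t) := by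
    intro t ht
    apply Finset.sum_nonneg
    intro j _
    exact mul_nonneg (hp_nonneg j t (hT0ge t (hT1 t ht).1)) (hT0p _ ((hT1 t ht).2 j)).le
  have hxd_nonpos : ∀ t, T1 ≤ t → xd t ≤ 0 := fun t ht => neg_nonpos.2 (hsum_nonneg t ht)
  have hxmono : ∀ a b : ℝ, T1 ≤ a → a ≤ b → x b ≤ x a := by
    intro a b ha hab
    apply aux_anti x a b hab hx_cont.continuousOn
    intro t ht
    exact ⟨xd t, hxd_nonpos t (le_trans ha ht.1.le),
      hT0d t (le_trans hT1T0 (le_trans ha ht.1.le))⟩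
  -- T2
  obtain ⟨T2', hT2'⟩ := eventually_atTop.1
    ((eventually_ge_atTop T1).and (eventually_all.2 fun j => (hτ_tendsto j).eventually_ge_atTop T1))
  set T2 : ℝ := max T2' T1 with hT2_def
  have hT2 : ∀ t, T2 ≤ t → (T1 ≤ t ∧ ∀ j, T1 ≤ τ j t) := fun t ht =>
    hT2' t (le_trans (le_max_left _ _) ht)
  have hT2T1 : T1 ≤ T2 := le_max_right _ _
  have ht0T2 : t0 + 1 ≤ T2 := le_trans ht0T1 hT2T1
  have ht0ofT2 : ∀ t, T2 ≤ t → t0 ≤ t := fun t ht => by linarith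
  have ht0τ : ∀ t, T2 ≤ t → t0 ≤ τ i t := fun t ht => by
    have := (hT2 t ht).2 i; linarith
  have hf1 : ∀ t, T2 ≤ t → 1 ≤ x (τ i t) / x t := by
    intro t ht
    have hxt := hxpos1 t (hT2 t ht).1
    rw [le_div_iff₀ hxt, one_mul]
    exact hxmono (τ i t) t ((hT2 t ht).2 i) (hτ_le i t (ht0ofT2 t ht))
  set S : Set ℝ := {a | ∀ᶠ t in atTop, a ≤ x (τ i t) / x t} with hS_def
  have hS1 : (1:ℝ) ∈ S := eventually_atTop.2 ⟨T2, hf1⟩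
  have hSne : S.Nonempty := ⟨1, hS1⟩
  -- integrability helpers
  have hpInt : ∀ (j : Fin m) (a b : ℝ), t0 ≤ a → t0 ≤ b →
      IntervalIntegrable (p j) volume a b := by
    intro j a b ha hb
    apply ContinuousOn.intervalIntegrable
    apply (hp_cont j).mono
    intro z hz
    rcases Set.mem_uIcc.1 hz with ⟨h1, _⟩ | ⟨h1, _⟩
    · exact le_trans ha h1
    · exact le_trans hb h1
  have hprim : ∀ (j : Fin m) (W s : ℝ), t0 ≤ W → t0 < s →
      HasDerivAt (fun u => ∫ v in W..u, p j v) (p j s) s := by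
    intro j W s hW hs
    apply intervalIntegral.integral_hasDerivAt_right (hpInt j W s hW hs.le)
    · exact ⟨Set.Ioi t0, Ioi_mem_nhds hs,
        ((hp_cont j).mono Set.Ioi_subset_Ici_self).aestronglyMeasurable measurableSet_Ioi⟩
    · exact ((hp_cont j) s hs.le).continuousAt (Ici_mem_nhds hs)
  -- liminf lower bounds for the integral
  have hPnn : ∀ᶠ t in atTop, 0 ≤ ∫ s in τ i t..t, p i s := by
    filter_upwards [eventually_ge_atTop T2] with t ht
    apply intervalIntegral.integral_nonneg (hτ_le i t (ht0ofT2 t ht))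
    intro u hu
    exact hp_nonneg i u (le_trans (ht0τ t ht) hu.1)
  have hPbdd : IsBoundedUnder (· ≥ ·) atTop (fun t : ℝ => ∫ s in τ i t..t, p i s) :=
    ⟨0, eventually_map.2 hPnn⟩
  have hPge : ∀ ε : ℝ, 0 < ε → ∀ᶠ t in atTop, q i - ε ≤ ∫ s in τ i t..t, p i s := by
    intro ε hε
    have hlt : q i - ε < liminf (fun t : ℝ => ∫ s in τ i t..t, p i s) atTop := by
      rw [hq i]; linarith
    filter_upwards [eventually_lt_of_lt_liminf hlt hPbdd] with t ht using ht.le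
  -- the improvement step
  have himp : ∀ a : ℝ, 0 ≤ a → a ∈ S → ∀ ε : ℝ, 0 < ε →
      Real.exp (a * (q i - ε)) ∈ S := by
    intro a ha haS ε hε
    obtain ⟨W', hW'⟩ := eventually_atTop.1 (haS.and (hPge ε hε))
    set W : ℝ := max W' (T2 + 1) with hW_def
    have hWW' : W' ≤ W := le_max_left _ _
    have hWT2 : T2 + 1 ≤ W := le_max_right _ _
    have hWt0 : t0 < W := by linarith
    set F : ℝ → ℝ := fun s => Real.log (x s) + a * ∫ v in W..s, p i v with hF_def
    have hWfacts : ∀ s : ℝ, W ≤ s →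
        (a ≤ x (τ i s) / x s ∧ q i - ε ≤ ∫ v in τ i s..s, p i v) := fun s hs =>
      hW' s (le_trans hWW' hs)
    show ∀ᶠ t in atTop, Real.exp (a * (q i - ε)) ≤ x (τ i t) / x t
    filter_upwards [eventually_ge_atTop W, (hτ_tendsto i).eventually_ge_atTop W] with t htW hτtW
    have hT2t : T2 ≤ t := by linarith
    have ht0t : t0 ≤ t := ht0ofT2 t hT2t
    have hτle : τ i t ≤ t := hτ_le i t ht0t
    have hkey : F t ≤ F (τ i t) := by
      apply aux_anti F (τ i t) t hτle
      · -- continuity on Icc (τ i t) t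
        intro s hs
        have hsW : W ≤ s := le_trans hτtW hs.1
        have hsT1 : T1 ≤ s := by linarith [hT2T1]
        have hxs : 0 < x s := hxpos1 s hsT1
        have hcI : ContinuousAt (fun u => ∫ v in W..u, p i v) s :=
          (hprim i W s hWt0.le (lt_of_lt_of_le hWt0 hsW)).continuousAt
        exact ((hx_cont.continuousAt.log hxs.ne').add
          (hcI.const_mul a)).continuousWithinAt
      · intro s hs
        have hsW : W ≤ s := le_trans hτtW hs.1.le
        have hT2s : T2 ≤ s := by linarith
        have hsT1 : T1 ≤ s := (hT2 s hT2s).1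
        have hxs : 0 < x s := hxpos1 s hsT1
        have hxτs : 0 < x (τ i s) := hxpos1 _ ((hT2 s hT2s).2 i)
        have ht0s : t0 ≤ s := ht0ofT2 s hT2s
        refine ⟨xd s / x s + a * p i s, ?_, ?_⟩
        · have hfs : a ≤ x (τ i s) / x s := (hWfacts s hsW).1
          have h1 : a * x s ≤ x (τ i s) := (le_div_iff₀ hxs).1 hfs
          have h2 : p i s * x (τ i s) ≤ ∑ j : Fin m, p j s * x (τ j s) :=
            Finset.single_le_sum
              (fun j _ => mul_nonneg (hp_nonneg j s ht0s) (hxpos1 _ ((hT2 s hT2s).2 j)).le)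
              (Finset.mem_univ i)
          have hps : 0 ≤ p i s := hp_nonneg i s ht0s
          have h4 : xd s ≤ -(a * p i s) * x s := by
            simp only [hxd_def]
            have : a * p i s * x s ≤ p i s * x (τ i s) := by nlinarith
            nlinarith
          have h5 : xd s / x s ≤ -(a * p i s) := (div_le_iff₀ hxs).2 h4
          linarith
        · exact ((hT0d s (le_trans hT1T0 hsT1)).log hxs.ne').add
            ((hprim i W s hWt0.le (lt_of_lt_of_le hWt0 hsW)).const_mul a)
    -- unfold the inequality
    have hτT2 : T1 ≤ τ i t := (hT2 t hT2t).2 i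
    have hxt : 0 < x t := hxpos1 t (hT2 t hT2t).1
    have hxτt : 0 < x (τ i t) := hxpos1 _ hτT2
    have ht0τt : t0 ≤ τ i t := by linarith
    have hsplit : (∫ v in W..(τ i t), p i v) + (∫ v in τ i t..t, p i v)
        = ∫ v in W..t, p i v :=
      intervalIntegral.integral_add_adjacent_intervals
        (hpInt i W (τ i t) hWt0.le ht0τt) (hpInt i (τ i t) t ht0τt ht0t)
    have hlog : a * (∫ v in τ i t..t, p i v)
        ≤ Real.log (x (τ i t)) - Real.log (x t) := by
      have h := hkey
      simp only [hF_def] at h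
      nlinarith [hsplit]
    have hPt : q i - ε ≤ ∫ v in τ i t..t, p i v := (hWfacts t htW).2
    calc Real.exp (a * (q i - ε)) ≤ Real.exp (a * ∫ v in τ i t..t, p i v) :=
          Real.exp_le_exp.2 (mul_le_mul_of_nonneg_left hPt ha)
      _ ≤ Real.exp (Real.log (x (τ i t)) - Real.log (x t)) := Real.exp_le_exp.2 hlog
      _ = x (τ i t) / x t := by
          rw [Real.exp_sub, Real.exp_log hxτt, Real.exp_log hxt]
  -- BddAbove S
  have hBdd : BddAbove S := by
    by_contra hnb
    have hften : Tendsto (fun t : ℝ => x (τ i t) / x t) atTop atTop := by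
      rw [tendsto_atTop]
      intro M
      obtain ⟨a, haS, hMa⟩ := not_bddAbove_iff.1 hnb M
      filter_upwards [haS] with t ht using le_trans hMa.le ht
    have hc : (0:ℝ) < q i / 2 := half_pos (hq_pos i)
    set c : ℝ := q i / 2 with hc_def
    have hPc : ∀ᶠ t in atTop, c ≤ ∫ s in τ i t..t, p i s := by
      have h := hPge (q i / 2) hc
      have : q i - q i / 2 = c := by rw [hc_def]; ring
      rwa [this] at h
    obtain ⟨A, hA0, hAc⟩ : ∃ A : ℝ, 0 ≤ A ∧ (A + 1) * Real.exp (-A) < c := by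
      have h1 : Tendsto (fun A : ℝ => (A + 1) * Real.exp (-A)) atTop (nhds 0) := by
        have h2 := Real.tendsto_pow_mul_exp_neg_atTop_nhds_zero 1
        have h3 := Real.tendsto_exp_neg_atTop_nhds_zero
        have h4 := h2.add h3
        rw [add_zero] at h4
        have : (fun A : ℝ => (A + 1) * Real.exp (-A))
            = fun A : ℝ => A ^ 1 * Real.exp (-A) + Real.exp (-A) := by
          funext A; ring
        rw [this]; exact h4
      obtain ⟨A, h4, h5⟩ := ((h1.eventually (gt_mem_nhds hc)).and (eventually_ge_atTop 0)).exists
      exact ⟨A, h5, h4⟩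
    obtain ⟨R', hR'⟩ := eventually_atTop.1
      (((hften.eventually_ge_atTop (Real.exp A)).and hPc).and (eventually_ge_atTop T2))
    set R : ℝ := max R' (T2 + 1) with hR_def
    have hRprops : ∀ s, R ≤ s → ((Real.exp A ≤ x (τ i s) / x s ∧
        c ≤ ∫ v in τ i s..s, p i v) ∧ T2 ≤ s) := fun s hs =>
      hR' s (le_trans (le_max_left _ _) hs)
    have hRT2 : T2 + 1 ≤ R := le_max_right _ _
    have hRt0 : t0 < R := by linarith
    have hRT1 : T1 ≤ R := by linarith
    set I : ℝ → ℝ := fun t => ∫ v in R..t, p i v with hI_def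
    have hIdv : ∀ s, R ≤ s → HasDerivAt I (p i s) s := fun s hs =>
      hprim i R s hRt0.le (lt_of_lt_of_le hRt0 hs)
    have hIcont : ContinuousOn I (Set.Ici R) := fun s hs =>
      ((hIdv s hs).continuousAt).continuousWithinAt
    set E : Set ℝ := Set.Ici R ∩ I ⁻¹' (Set.Ici c) with hE_def
    have hEclosed : IsClosed E := hIcont.preimage_isClosed_of_isClosed isClosed_Ici isClosed_Ici
    have hEne : E.Nonempty := by
      obtain ⟨u, hu⟩ := eventually_atTop.1
        ((eventually_ge_atTop R).and ((hτ_tendsto i).eventually_ge_atTop R))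
      have huR : R ≤ u := (hu u le_rfl).1
      have huτ : R ≤ τ i u := (hu u le_rfl).2
      refine ⟨u, huR, ?_⟩
      have hPu : c ≤ ∫ v in τ i u..u, p i v := ((hRprops u huR).1).2
      have hT2u : T2 ≤ u := (hRprops u huR).2
      have ht0u : t0 ≤ u := ht0ofT2 u hT2u
      have ht0τu : t0 ≤ τ i u := by linarith [hRt0]
      have hsplit : (∫ v in R..(τ i u), p i v) + (∫ v in τ i u..u, p i v) = I u :=
        intervalIntegral.integral_add_adjacent_intervals
          (hpInt i R (τ i u) hRt0.le ht0τu) (hpInt i (τ i u) u ht0τu ht0u)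
      have hnn : 0 ≤ ∫ v in R..(τ i u), p i v := by
        apply intervalIntegral.integral_nonneg huτ
        intro z hz
        exact hp_nonneg i z (le_trans hRt0.le hz.1)
      show c ≤ I u
      linarith
    have hEbdd : BddBelow E := ⟨R, fun z hz => hz.1⟩
    set r : ℝ := sInf E with hr_def
    have hrE : r ∈ E := hEclosed.csInf_mem hEne hEbdd
    have hRr : R ≤ r := hrE.1
    have hIr : c ≤ I r := hrE.2
    have hIR : I R = 0 := intervalIntegral.integral_same
    have hRltr : R < r := by
      rcases eq_or_lt_of_le hRr with h | h
      · exfalso; rw [← h, hIR] at hIr; linarith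
      · exact h
    have hlt : ∀ t, R ≤ t → t < r → I t < c := by
      intro t h1 h2
      by_contra hge
      push_neg at hge
      exact absurd (csInf_le hEbdd ⟨h1, hge⟩) (not_le.2 h2)
    have hKEY : ∀ t, R < t → t < r → τ i t < R := by
      intro t h1 h2
      by_contra hge
      push_neg at hge
      have hT2t : T2 ≤ t := (hRprops t h1.le).2
      have ht0t : t0 ≤ t := ht0ofT2 t hT2t
      have ht0τt : t0 ≤ τ i t := by linarith [hRt0]
      have hsplit : (∫ v in R..(τ i t), p i v) + (∫ v in τ i t..t, p i v) = I t :=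
        intervalIntegral.integral_add_adjacent_intervals
          (hpInt i R (τ i t) hRt0.le ht0τt) (hpInt i (τ i t) t ht0τt ht0t)
      have hP : c ≤ ∫ v in τ i t..t, p i v := ((hRprops t h1.le).1).2
      have hnn : 0 ≤ ∫ v in R..(τ i t), p i v := by
        apply intervalIntegral.integral_nonneg hge
        intro z hz
        exact hp_nonneg i z (le_trans hRt0.le hz.1)
      have : c ≤ I t := by linarith
      exact absurd this (not_le.2 (hlt t h1.le h2))
    set Y : ℝ → ℝ := fun t => Real.log (x R) - Real.log (x t) with hY_def
    set mφ : ℝ → ℝ := fun z => min (Real.exp (-A)) (Real.exp (-z)) with hmφ_def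
    have hmφc : Continuous mφ := continuous_const.min (Real.continuous_exp.comp continuous_neg)
    have hmφ_nonneg : ∀ z, 0 ≤ mφ z := fun z =>
      le_min (Real.exp_pos _).le (Real.exp_pos _).le
    set Φ : ℝ → ℝ := fun z => ∫ σ in (0:ℝ)..z, mφ σ with hΦ_def
    have hΦd : ∀ z, HasDerivAt Φ (mφ z) z := fun z =>
      intervalIntegral.integral_hasDerivAt_right (hmφc.intervalIntegrable _ _)
        ⟨Set.univ, Filter.univ_mem, hmφc.aestronglyMeasurable⟩ hmφc.continuousAt
    have hxposR : ∀ s, R ≤ s → 0 < x s := fun s hs => hxpos1 s (le_trans hRT1 hs)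
    have hcomp : I r ≤ Φ (Y r) := by
      have hmain := aux_mono (fun t => Φ (Y t) - I t) R r hRr ?_ ?_
      · have hYR : Y R = 0 := sub_self _
        have hΦ0 : Φ (0:ℝ) = 0 := intervalIntegral.integral_same
        simp only [hYR, hΦ0, hIR, sub_zero, zero_sub] at hmain
        linarith
      · -- continuity
        intro s hs
        have hsR : R ≤ s := hs.1
        have hxs : 0 < x s := hxposR s hsR
        have hYc : ContinuousAt Y s :=
          continuousAt_const.sub (hx_cont.continuousAt.log hxs.ne')
        have hΦc : ContinuousAt Φ (Y s) := (hΦd (Y s)).continuousAt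
        exact ((hΦc.comp hYc).sub (hIdv s hsR).continuousAt).continuousWithinAt
      · intro s hs
        have hsR : R ≤ s := hs.1.le
        have hT2s : T2 ≤ s := (hRprops s hsR).2
        have hsT1 : T1 ≤ s := (hT2 s hT2s).1
        have ht0s : t0 ≤ s := ht0ofT2 s hT2s
        have hxs : 0 < x s := hxposR s hsR
        have hτs_lt : τ i s < R := hKEY s hs.1 hs.2
        have hτsT1 : T1 ≤ τ i s := (hT2 s hT2s).2 i
        have hxτs : 0 < x (τ i s) := hxpos1 _ hτsT1
        have hfpos : 0 < x (τ i s) / x s := div_pos hxτs hxs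
        have hfA : Real.exp A ≤ x (τ i s) / x s := ((hRprops s hsR).1).1
        have hfY : Real.exp (Y s) ≤ x (τ i s) / x s := by
          have h1 : x R ≤ x (τ i s) := hxmono (τ i s) R hτsT1 hτs_lt.le
          have h2 : Real.exp (Y s) = x R / x s := by
            rw [hY_def]
            rw [Real.exp_sub, Real.exp_log (hxposR R le_rfl), Real.exp_log hxs]
          rw [h2]
          exact (div_le_div_iff_of_pos_right hxs).2 h1
        have hyd : HasDerivAt Y (-(xd s / x s)) s :=
          HasDerivAt.const_sub _ ((hT0d s (le_trans hT1T0 hsT1)).log hxs.ne')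
        have hgd : HasDerivAt (fun t => Φ (Y t)) (mφ (Y s) * -(xd s / x s)) s := by
          have := (hΦd (Y s)).comp s hyd
          exact this
        refine ⟨mφ (Y s) * -(xd s / x s) - p i s, ?_, hgd.sub (hIdv s hsR)⟩
        have hsum : p i s * x (τ i s) ≤ ∑ j : Fin m, p j s * x (τ j s) :=
          Finset.single_le_sum
            (fun j _ => mul_nonneg (hp_nonneg j s ht0s) (hxpos1 _ ((hT2 s hT2s).2 j)).le)
            (Finset.mem_univ i)
        have hneg : -(xd s / x s) = (∑ j : Fin m, p j s * x (τ j s)) / x s := by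
          simp only [hxd_def]
          rw [neg_div, neg_neg]
        have hyv_ge : p i s * (x (τ i s) / x s) ≤ -(xd s / x s) := by
          rw [hneg, mul_div_assoc']
          exact (div_le_div_iff_of_pos_right hxs).2 hsum
        have hps : 0 ≤ p i s := hp_nonneg i s ht0s
        have hpf_nonneg : 0 ≤ p i s * (x (τ i s) / x s) := mul_nonneg hps hfpos.le
        have hmφ_ge : (x (τ i s) / x s)⁻¹ ≤ mφ (Y s) := by
          apply le_min
          · rw [Real.exp_neg]
            exact inv_anti₀ (Real.exp_pos A) hfA
          · rw [Real.exp_neg]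
            exact inv_anti₀ (Real.exp_pos _) hfY
        have hfne : x (τ i s) / x s ≠ 0 := ne_of_gt hfpos
        have h1 : p i s = (x (τ i s) / x s)⁻¹ * (p i s * (x (τ i s) / x s)) := by
          rw [mul_comm (p i s) (x (τ i s) / x s), ← mul_assoc, inv_mul_cancel₀ hfne, one_mul]
        have hfinal : p i s ≤ mφ (Y s) * -(xd s / x s) := by
          rw [h1]
          exact mul_le_mul hmφ_ge hyv_ge hpf_nonneg (hmφ_nonneg _)
        linarith
    have hYr : 0 ≤ Y r := by
      have h1 : x r ≤ x R := hxmono R r hRT1 hRr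
      rw [hY_def]
      simp only [sub_nonneg]
      exact Real.log_le_log (hxposR r hRr) h1
    have hΦb : Φ (Y r) ≤ (A + 1) * Real.exp (-A) := by
      have hz := hYr
      set z : ℝ := Y r
      rcases le_or_gt z A with hzA | hzA
      · have hmono := intervalIntegral.integral_mono_on hz
          (hmφc.intervalIntegrable _ _) (intervalIntegrable_const (μ := volume) (c := Real.exp (-A)))
          (fun σ _ => min_le_left _ (Real.exp (-σ)))
        rw [intervalIntegral.integral_const, sub_zero, smul_eq_mul] at hmono
        have h2 : z * Real.exp (-A) ≤ A * Real.exp (-A) :=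
          mul_le_mul_of_nonneg_right hzA (Real.exp_pos _).le
        have h3 : 0 < Real.exp (-A) := Real.exp_pos _
        calc Φ z ≤ z * Real.exp (-A) := hmono
          _ ≤ A * Real.exp (-A) := h2
          _ ≤ (A + 1) * Real.exp (-A) := by nlinarith
      · have hsplit : Φ z = (∫ σ in (0:ℝ)..A, mφ σ) + ∫ σ in A..z, mφ σ :=
          (intervalIntegral.integral_add_adjacent_intervals
            (hmφc.intervalIntegrable _ _) (hmφc.intervalIntegrable _ _)).symm
        have h1 : (∫ σ in (0:ℝ)..A, mφ σ) ≤ A * Real.exp (-A) := by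
          have h := intervalIntegral.integral_mono_on hA0
            (hmφc.intervalIntegrable _ _) (intervalIntegrable_const (μ := volume) (c := Real.exp (-A)))
            (fun σ _ => min_le_left _ (Real.exp (-σ)))
          rwa [intervalIntegral.integral_const, sub_zero, smul_eq_mul] at h
        have h2 : (∫ σ in A..z, mφ σ) ≤ Real.exp (-A) - Real.exp (-z) := by
          have hle := intervalIntegral.integral_mono_on hzA.le
            (hmφc.intervalIntegrable _ _)
            (((Real.continuous_exp.comp continuous_neg : Continuous fun σ : ℝ => Real.exp (-σ))).intervalIntegrable (μ := volume) A z)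
            (fun σ _ => min_le_right (Real.exp (-A)) _)
          have heq : (∫ σ in A..z, Real.exp (-σ)) = Real.exp (-A) - Real.exp (-z) := by
            rw [intervalIntegral.integral_comp_neg (fun u => Real.exp u), integral_exp]
          simp only [Function.comp] at hle
          rw [heq] at hle
          exact hle
        have h3 : 0 < Real.exp (-z) := Real.exp_pos _
        calc Φ z = (∫ σ in (0:ℝ)..A, mφ σ) + ∫ σ in A..z, mφ σ := hsplit
          _ ≤ A * Real.exp (-A) + (Real.exp (-A) - Real.exp (-z)) := add_le_add h1 h2
          _ ≤ (A + 1) * Real.exp (-A) := by nlinarith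
    linarith
  -- final phase
  set L : ℝ := sSup S with hL_def
  have hL1 : (1:ℝ) ≤ L := le_csSup hBdd hS1
  have hstep : ∀ ε : ℝ, 0 < ε → ε < q i → Real.exp ((L - ε) * (q i - ε)) ≤ L := by
    intro ε hε hεq
    obtain ⟨a, haS, ha⟩ := exists_lt_of_lt_csSup hSne (show L - ε < L by linarith)
    have ha'S : max a 1 ∈ S := by
      filter_upwards [haS, eventually_atTop.2 ⟨T2, hf1⟩] with t h1 h2
      exact max_le h1 h2
    have ha'0 : (0:ℝ) ≤ max a 1 := le_trans zero_le_one (le_max_right a 1)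
    have hmem := himp (max a 1) ha'0 ha'S ε hε
    have hle : Real.exp ((L - ε) * (q i - ε)) ≤ Real.exp (max a 1 * (q i - ε)) := by
      apply Real.exp_le_exp.2
      apply mul_le_mul_of_nonneg_right _ (by linarith)
      exact le_trans ha.le (le_max_left a 1)
    exact le_trans hle (le_csSup hBdd hmem)
  have hLq : Real.exp (q i * L) ≤ L := by
    have hcont : ContinuousAt (fun ε : ℝ => Real.exp ((L - ε) * (q i - ε))) 0 :=
      (Real.continuous_exp.comp
        ((continuous_const.sub continuous_id).mul (continuous_const.sub continuous_id))).continuousAt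
    have htend : Tendsto (fun ε : ℝ => Real.exp ((L - ε) * (q i - ε)))
        (nhdsWithin 0 (Set.Ioi 0)) (nhds (Real.exp (q i * L))) := by
      have h := hcont.tendsto.mono_left
        (nhdsWithin_le_nhds : nhdsWithin (0:ℝ) (Set.Ioi 0) ≤ nhds 0)
      have : (L - 0) * (q i - 0) = q i * L := by ring
      rwa [this] at h
    apply le_of_tendsto htend
    filter_upwards [Ioo_mem_nhdsGT_of_mem (show (0:ℝ) ∈ Set.Ico 0 (q i) from ⟨le_rfl, hq_pos i⟩)]
      with ε hε
    exact hstep ε hε.1 hε.2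
  have hL0 : (0:ℝ) ≤ L := le_trans zero_le_one hL1
  have hIVT : ∃ z ∈ Set.Icc 0 L, Real.exp (q i * z) - z = 0 := by
    have hcont : ContinuousOn (fun z : ℝ => Real.exp (q i * z) - z) (Set.Icc 0 L) :=
      ((Real.continuous_exp.comp (continuous_const.mul continuous_id)).sub continuous_id).continuousOn
    have himage := intermediate_value_Icc' hL0 hcont
    have h0mem : (0:ℝ) ∈ Set.Icc (Real.exp (q i * L) - L) (Real.exp (q i * 0) - 0) := by
      constructor
      · linarith
      · rw [mul_zero, Real.exp_zero]; linarith
    obtain ⟨z, hz, hz0⟩ := himage h0mem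
    exact ⟨z, hz, hz0⟩
  obtain ⟨z, hz, hz0⟩ := hIVT
  have hroot_z : Real.exp (q i * z) = z := by linarith
  rw [Filter.liminf_eq]
  exact le_trans (hsmallest i z hroot_z) hz.2
end

section
/- Suppose that for each i = 1,…,m, liminf_{t→∞} ∫_{τ_i(t)}^{t} p_i(s) ds = q_i > 0, that the equation e^{q_i λ} = λ has a real root with smallest root λ_i*, and that there exist non-decreasing continuous functions σ_i : [t_0,∞) → ℝ with τ_i(t) ≤ σ_i(t) ≤ t for all t ≥ t_0 and every i, such that limsup_{ε→0+} ( limsup_{t→∞} ∏_{j=1}^m [ ∏_{i=1}^m ∫_{σ_j(t)}^{t} p_i(s) · exp( ∫_{τ_i(s)}^{σ_i(t)} ∑_{k=1}^m (λ_k* − ε) p_k(ξ) dξ ) ds ]^{1/m} ) > 1/m^m. Then every solution of the equation x'(t) + ∑_{i=1}^m p_i(t) x(τ_i(t)) = 0 is oscillatory. -/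
open Real Filter MeasureTheory

open intervalIntegral


lemma freq_of_limsup_gt {α : Type*} {f : Filter α} {u : α → ℝ} {c : ℝ}
    (hc : 0 ≤ c) (h : c < Filter.limsup u f) : ∃ᶠ x in f, c < u x := by
  by_contra hcon
  rw [Filter.not_frequently] at hcon
  have hmem : c ∈ {a : ℝ | ∀ᶠ n in f, u n ≤ a} := by
    filter_upwards [hcon] with n hn; exact not_lt.1 hn
  rw [Filter.limsup_eq] at h
  by_cases hb : BddBelow {a : ℝ | ∀ᶠ n in f, u n ≤ a}
  · exact absurd (csInf_le hb hmem) (not_le.2 h)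
  · rw [Real.sInf_of_not_bddBelow hb] at h
    exact absurd hc (not_le.2 h)

lemma ev_of_liminf_eq {u : ℝ → ℝ} {q δ : ℝ} (hq : Filter.liminf u atTop = q)
    (hqpos : 0 < q) (hδ : 0 < δ) : ∀ᶠ t in atTop, q - δ ≤ u t := by
  rw [Filter.liminf_eq] at hq
  set S := {a : ℝ | ∀ᶠ t in atTop, a ≤ u t} with hS
  have hSne : S.Nonempty := by
    by_contra hne
    rw [Set.not_nonempty_iff_eq_empty] at hne
    rw [hne, Real.sSup_empty] at hq; linarith
  have hSb : BddAbove S := by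
    by_contra hb
    rw [Real.sSup_of_not_bddAbove hb] at hq; linarith
  obtain ⟨a, haS, hla⟩ := exists_lt_of_lt_csSup hSne (by rw [hq]; linarith : q - δ < sSup S)
  filter_upwards [haS] with t ht; linarith

lemma gronwall_aux (y w : ℝ → ℝ) (hy_cont : Continuous y) (hw : Continuous w) (S : ℝ)
    (hy_pos : ∀ t, S ≤ t → 0 < y t)
    (hder : ∀ t, S ≤ t → ∃ d, HasDerivAt y d t ∧ d ≤ -(w t * y t)) :
    ∀ u v, S ≤ u → u ≤ v → y v * Real.exp (∫ s in u..v, w s) ≤ y u := by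
  intro u v hSu huv
  set G : ℝ → ℝ := fun t => Real.log (y t) + ∫ s in S..t, w s with hG
  have hprim : ∀ t : ℝ, HasDerivAt (fun r => ∫ s in S..r, w s) (w t) t := fun t =>
    intervalIntegral.integral_hasDerivAt_right (hw.intervalIntegrable S t)
      (hw.stronglyMeasurableAtFilter _ _) hw.continuousAt
  have hderG : ∀ t, S ≤ t → HasDerivAt G (deriv G t) t ∧ deriv G t ≤ 0 := by
    intro t ht
    obtain ⟨d, hd, hdle⟩ := hder t ht
    have hyt := hy_pos t ht
    have hGd : HasDerivAt G (d / y t + w t) t := (hd.log hyt.ne').add (hprim t)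
    refine ⟨hGd.deriv ▸ hGd, ?_⟩
    rw [hGd.deriv]
    have : d / y t ≤ -(w t) := by
      rw [div_le_iff₀ hyt]; linarith
    linarith
  have hanti : AntitoneOn G (Set.Ici S) := by
    have hprimc : Continuous (fun r => ∫ s in S..r, w s) :=
      (Differentiable.continuous (fun t => (hprim t).differentiableAt))
    have hcont : ContinuousOn G (Set.Ici S) :=
      ((hy_cont.continuousOn).log (fun t ht => (hy_pos t ht).ne')).add hprimc.continuousOn
    refine antitoneOn_of_deriv_nonpos (convex_Ici S) hcont ?_ ?_
    · intro t ht
      rw [interior_Ici] at ht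
      exact ((hderG t (le_of_lt ht)).1.differentiableAt).differentiableWithinAt
    · intro t ht
      rw [interior_Ici] at ht
      exact (hderG t (le_of_lt ht)).2
  have hGle : G v ≤ G u := hanti (Set.mem_Ici.2 hSu) (Set.mem_Ici.2 (hSu.trans huv)) huv
  have hsplit : (∫ s in S..v, w s) = (∫ s in S..u, w s) + ∫ s in u..v, w s :=
    (intervalIntegral.integral_add_adjacent_intervals (hw.intervalIntegrable S u)
      (hw.intervalIntegrable u v)).symm
  have hlog : Real.log (y v) ≤ Real.log (y u) + (-(∫ s in u..v, w s)) := by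
    simp only [hG, hsplit] at hGle; linarith
  have hyu := hy_pos u hSu
  have hyv := hy_pos v (hSu.trans huv)
  have := Real.exp_le_exp.2 hlog
  rw [Real.exp_add, Real.exp_log hyv, Real.exp_log hyu] at this
  calc y v * Real.exp (∫ s in u..v, w s)
      ≤ (y u * Real.exp (-(∫ s in u..v, w s))) * Real.exp (∫ s in u..v, w s) := by
        apply mul_le_mul_of_nonneg_right this (Real.exp_nonneg _)
    _ = y u := by rw [mul_assoc, ← Real.exp_add]; simp

/-- capped iteration -/
noncomputable def iterSeq (r : ℝ) : ℕ → ℝ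
  | 0 => 1
  | n + 1 => max (iterSeq r n) (Real.exp (r * iterSeq r n))

lemma iterSeq_one_le (r : ℝ) (n : ℕ) : 1 ≤ iterSeq r n := by
  induction n with
  | zero => simp [iterSeq]
  | succ n ih => exact le_trans ih (le_max_left _ _)

lemma iterSeq_mono (r : ℝ) : Monotone (iterSeq r) :=
  monotone_nat_of_le_succ (fun n => le_max_left _ _)

lemma iterSeq_cont (n : ℕ) : Continuous (fun r : ℝ => iterSeq r n) := by
  induction n with
  | zero => simpa [iterSeq] using continuous_const
  | succ n ih =>
      simp only [iterSeq]
      exact ih.max (Real.continuous_exp.comp (continuous_id.mul ih))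

lemma iterSeq_reach (q L ε : ℝ) (hq : 0 < q)
    (hroot : Real.exp (q * L) = L)
    (hsmall : ∀ l, Real.exp (q * l) = l → L ≤ l) (hε : 0 < ε) :
    ∃ δ, 0 < δ ∧ δ < q ∧ ∃ n, L - ε < iterSeq (q - δ) n := by
  have hL0 : 0 < L := hroot ▸ Real.exp_pos _
  -- the iteration at r = q is bounded by L
  have hle : ∀ n, iterSeq q n ≤ L := by
    intro n
    induction n with
    | zero =>
        simp only [iterSeq]
        calc (1:ℝ) ≤ Real.exp (q * L) := Real.one_le_exp (by positivity)
          _ = L := hroot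
    | succ n ih =>
        simp only [iterSeq, max_le_iff]
        refine ⟨ih, ?_⟩
        calc Real.exp (q * iterSeq q n) ≤ Real.exp (q * L) := by
              apply Real.exp_le_exp.2; nlinarith
          _ = L := hroot
  have hbdd : BddAbove (Set.range (iterSeq q)) := ⟨L, by rintro _ ⟨n, rfl⟩; exact hle n⟩
  set L' := ⨆ n, iterSeq q n with hL'
  have htend : Tendsto (iterSeq q) atTop (nhds L') :=
    tendsto_atTop_ciSup (iterSeq_mono q) hbdd
  have hL'le : L' ≤ L := ciSup_le hle
  have hL'0 : 0 < L' := lt_of_lt_of_le one_pos (le_ciSup hbdd 0)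
  -- limit equation
  have htend2 : Tendsto (fun n => iterSeq q (n + 1)) atTop (nhds L') :=
    htend.comp (tendsto_add_atTop_nat 1)
  have htend3 : Tendsto (fun n => max (iterSeq q n) (Real.exp (q * iterSeq q n))) atTop
      (nhds (max L' (Real.exp (q * L')))) := by
    exact (continuous_id.max (Real.continuous_exp.comp (continuous_const.mul continuous_id))).continuousAt.tendsto.comp htend
  have hlimeq : max L' (Real.exp (q * L')) = L' := by
    apply tendsto_nhds_unique htend3
    simpa [iterSeq] using htend2
  have hexp_le : Real.exp (q * L') ≤ L' := by
    by_contra hc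
    push_neg at hc
    rw [max_eq_right hc.le] at hlimeq
    linarith
  -- L ≤ L'
  have hLL' : L ≤ L' := by
    rcases eq_or_lt_of_le hexp_le with heq | hlt
    · exact hsmall L' heq
    · exfalso
      -- IVT: g(t) = exp (q t) - t, g 0 = 1 > 0 > is ≥... g L' < 0
      have hgc : ContinuousOn (fun t => Real.exp (q * t) - t) (Set.Icc 0 L') :=
        (Real.continuous_exp.comp (continuous_const.mul continuous_id)).continuousOn.sub
          continuous_id.continuousOn
      have h0 : (0:ℝ) ∈ Set.Icc (Real.exp (q * L') - L') ((fun t => Real.exp (q * t) - t) 0) := by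
        constructor
        · linarith
        · simp
      obtain ⟨r0, hr0mem, hr0⟩ := intermediate_value_Icc' hL'0.le hgc h0
      have hroot0 : Real.exp (q * r0) = r0 := by
        have : Real.exp (q * r0) - r0 = 0 := hr0
        linarith
      have h1 := hsmall r0 hroot0
      have h2 := hr0mem.2
      have : r0 = L' := le_antisymm h2 (by linarith)
      rw [this] at hroot0
      linarith
  have hL'eq : L' = L := le_antisymm hL'le hLL'
  -- pick n with iterSeq q n > L - ε/2
  have hev : ∀ᶠ n in atTop, L - ε / 2 < iterSeq q n := by
    apply htend.eventually (eventually_gt_nhds _)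
    rw [hL'eq]; linarith
  obtain ⟨n, hn⟩ := hev.exists
  -- continuity in r at r = q
  have hcont : ContinuousAt (fun r => iterSeq r n) q := (iterSeq_cont n).continuousAt
  have hev2 : ∀ᶠ r in nhds q, L - ε < iterSeq r n := by
    have : L - ε < iterSeq q n := by linarith
    exact hcont.eventually (eventually_gt_nhds this)
  have hev3 : ∀ᶠ δ in nhds (0:ℝ), L - ε < iterSeq (q - δ) n := by
    have hc2 : ContinuousAt (fun δ : ℝ => q - δ) 0 := by fun_prop
    have : Tendsto (fun δ : ℝ => q - δ) (nhds 0) (nhds q) := by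
      simpa using hc2.tendsto
    exact this.eventually hev2
  have hev4 : ∀ᶠ δ in nhdsWithin (0:ℝ) (Set.Ioi 0), L - ε < iterSeq (q - δ) n ∧ δ ∈ Set.Ioo 0 q := by
    refine Filter.Eventually.and (nhdsWithin_le_nhds hev3) ?_
    exact Filter.eventually_of_mem (Ioo_mem_nhdsGT_of_mem (by constructor <;> simp [hq]))
      (fun δ hδ => hδ)
  obtain ⟨δ, h1, h2⟩ := hev4.exists
  exact ⟨δ, h2.1, h2.2, n, h1⟩

section NoPos
variable {m : ℕ} {t0 : ℝ} {p τ : Fin m → ℝ → ℝ} {y : ℝ → ℝ}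

lemma no_pos_key
    (hp_cont : ∀ i, ContinuousOn (p i) (Set.Ici t0))
    (hp_nonneg : ∀ i t, t0 ≤ t → 0 ≤ p i t)
    (hτ_le : ∀ i t, t0 ≤ t → τ i t ≤ t)
    (hy_cont : Continuous y)
    (T1 : ℝ) (hT1 : t0 ≤ T1)
    (hy_pos : ∀ t, T1 ≤ t → 0 < y t)
    (hy_sol : ∀ t, T1 ≤ t → HasDerivAt y (-(∑ i : Fin m, p i t * y (τ i t))) t)
    (c : Fin m → ℝ) (hc : ∀ i, 0 ≤ c i)
    (hgood : ∀ᶠ t in atTop, ∀ i, c i * y t ≤ y (τ i t)) :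
    ∃ S, t0 ≤ S ∧ T1 ≤ S ∧ ∀ u v, S ≤ u → u ≤ v →
      y v * Real.exp (∫ s in u..v, ∑ k : Fin m, c k * p k (max s t0)) ≤ y u := by
  set P : Fin m → ℝ → ℝ := fun i s => p i (max s t0) with hP
  have hP_cont : ∀ i, Continuous (P i) := fun i =>
    (hp_cont i).comp_continuous (continuous_id.max continuous_const)
      (fun s => Set.mem_Ici.2 (le_max_right _ _))
  have hP_nonneg : ∀ i s, 0 ≤ P i s := fun i s =>
    hp_nonneg i _ (le_max_right _ _)
  have hP_eq : ∀ i s, t0 ≤ s → P i s = p i s := fun i s hs => by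
    simp [hP, max_eq_left hs]
  obtain ⟨Tg, hTg⟩ := eventually_atTop.1 hgood
  refine ⟨max (max t0 T1) Tg, le_trans (le_max_left _ _) (le_max_left _ _),
    le_trans (le_max_right _ _) (le_max_left _ _), ?_⟩
  set S := max (max t0 T1) Tg with hS
  have hw_cont : Continuous (fun s => ∑ k : Fin m, c k * P k s) := by
    continuity
  apply gronwall_aux y _ hy_cont hw_cont S
  · intro t ht
    exact hy_pos t (le_trans (le_trans (le_max_right _ _) (le_max_left _ _)) ht)
  · intro t ht
    have ht0 : t0 ≤ t := le_trans (le_trans (le_max_left _ _) (le_max_left _ _)) ht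
    have hT1t : T1 ≤ t := le_trans (le_trans (le_max_right _ _) (le_max_left _ _)) ht
    have hTgt : Tg ≤ t := le_trans (le_max_right _ _) ht
    refine ⟨_, hy_sol t hT1t, ?_⟩
    rw [neg_le_neg_iff, Finset.sum_mul]
    apply Finset.sum_le_sum
    intro k _
    have h1 : c k * y t ≤ y (τ k t) := hTg t hTgt k
    have h2 : (0:ℝ) ≤ p k t := hp_nonneg k t ht0
    calc c k * P k t * y t = p k t * (c k * y t) := by rw [hP_eq k t ht0]; ring
      _ ≤ p k t * y (τ k t) := mul_le_mul_of_nonneg_left h1 h2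

end NoPos
section NoPos2
variable {m : ℕ} {t0 : ℝ} {p τ : Fin m → ℝ → ℝ} {y : ℝ → ℝ} {q : Fin m → ℝ}

lemma no_pos_improve
    (hp_cont : ∀ i, ContinuousOn (p i) (Set.Ici t0))
    (hp_nonneg : ∀ i t, t0 ≤ t → 0 ≤ p i t)
    (hτ_le : ∀ i t, t0 ≤ t → τ i t ≤ t)
    (hτ_tendsto : ∀ i, Tendsto (τ i) atTop atTop)
    (hq_pos : ∀ i, 0 < q i)
    (hq : ∀ i, Filter.liminf (fun t : ℝ => ∫ s in τ i t..t, p i s) atTop = q i)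
    (hy_cont : Continuous y)
    (T1 : ℝ) (hT1 : t0 ≤ T1)
    (hy_pos : ∀ t, T1 ≤ t → 0 < y t)
    (hy_sol : ∀ t, T1 ≤ t → HasDerivAt y (-(∑ i : Fin m, p i t * y (τ i t))) t)
    (δ : Fin m → ℝ) (hδ_pos : ∀ i, 0 < δ i) (hδ_lt : ∀ i, δ i < q i)
    (c : Fin m → ℝ) (hc : ∀ i, 0 ≤ c i)
    (hgood : ∀ᶠ t in atTop, ∀ i, c i * y t ≤ y (τ i t)) :
    ∀ᶠ t in atTop, ∀ i,
      max (c i) (Real.exp ((q i - δ i) * c i)) * y t ≤ y (τ i t) := by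
  set P : Fin m → ℝ → ℝ := fun i s => p i (max s t0) with hP
  have hP_cont : ∀ i, Continuous (P i) := fun i =>
    (hp_cont i).comp_continuous (continuous_id.max continuous_const)
      (fun s => Set.mem_Ici.2 (le_max_right _ _))
  have hP_nonneg : ∀ i s, 0 ≤ P i s := fun i s => hp_nonneg i _ (le_max_right _ _)
  have hP_eq : ∀ i s, t0 ≤ s → P i s = p i s := fun i s hs => by
    simp [hP, max_eq_left hs]
  obtain ⟨S, hSt0, hST1, hkey⟩ := no_pos_key hp_cont hp_nonneg hτ_le hy_cont T1 hT1
    hy_pos hy_sol c hc hgood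
  have h1 : ∀ᶠ t in atTop, ∀ i, S ≤ τ i t :=
    eventually_all.2 fun i => (hτ_tendsto i).eventually_ge_atTop S
  have h2 : ∀ᶠ t in atTop, ∀ i, q i - δ i ≤ ∫ s in τ i t..t, p i s :=
    eventually_all.2 fun i => ev_of_liminf_eq (hq i) (hq_pos i) (hδ_pos i)
  have h3 : ∀ᶠ t in atTop, S ≤ t := eventually_ge_atTop S
  filter_upwards [h1, h2, h3, hgood] with t ht1 ht2 ht3 ht4 i
  have hyt : 0 < y t := hy_pos t (le_trans hST1 ht3)
  have ht0 : t0 ≤ t := le_trans hSt0 ht3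
  have hτit : τ i t ≤ t := hτ_le i t ht0
  have hτiS : S ≤ τ i t := ht1 i
  rw [max_mul_of_nonneg _ _ hyt.le]
  apply max_le
  · exact ht4 i
  · -- main estimate
    have hgr := hkey (τ i t) t hτiS hτit
    -- lower bound the integral
    have hints : IntervalIntegrable (fun s => c i * P i s) volume (τ i t) t :=
      (continuous_const.mul (hP_cont i)).intervalIntegrable _ _
    have hintw : IntervalIntegrable (fun s => ∑ k : Fin m, c k * P k s) volume (τ i t) t :=
      (by continuity : Continuous (fun s => ∑ k : Fin m, c k * P k s)).intervalIntegrable _ _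
    have hmono : (∫ s in τ i t..t, c i * P i s) ≤
        ∫ s in τ i t..t, ∑ k : Fin m, c k * P k s := by
      apply intervalIntegral.integral_mono_on hτit hints hintw
      intro s _
      exact Finset.single_le_sum (f := fun k => c k * P k s)
        (fun k _ => mul_nonneg (hc k) (hP_nonneg k s)) (Finset.mem_univ i)
    have hPp : (∫ s in τ i t..t, P i s) = ∫ s in τ i t..t, p i s := by
      apply intervalIntegral.integral_congr
      intro s hs
      rw [Set.uIcc_of_le hτit] at hs
      exact hP_eq i s (le_trans (le_trans hSt0 hτiS) hs.1)
    have hci : c i * (q i - δ i) ≤ ∫ s in τ i t..t, c i * P i s := by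
      rw [intervalIntegral.integral_const_mul, hPp]
      exact mul_le_mul_of_nonneg_left (ht2 i) (hc i)
    have hexp : Real.exp ((q i - δ i) * c i) ≤
        Real.exp (∫ s in τ i t..t, ∑ k : Fin m, c k * P k s) := by
      apply Real.exp_le_exp.2
      calc (q i - δ i) * c i = c i * (q i - δ i) := mul_comm _ _
        _ ≤ _ := le_trans hci hmono
    calc Real.exp ((q i - δ i) * c i) * y t
        = y t * Real.exp ((q i - δ i) * c i) := mul_comm _ _
      _ ≤ y t * Real.exp (∫ s in τ i t..t, ∑ k : Fin m, c k * P k s) :=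
          mul_le_mul_of_nonneg_left hexp hyt.le
      _ ≤ y (τ i t) := hgr

end NoPos2
section NoPos3
variable {m : ℕ} {t0 : ℝ} {p τ σ : Fin m → ℝ → ℝ} {y : ℝ → ℝ} {q lamStar : Fin m → ℝ}

lemma no_pos_solution
    (hm : 1 ≤ m)
    (hp_cont : ∀ i, ContinuousOn (p i) (Set.Ici t0))
    (hp_nonneg : ∀ i t, t0 ≤ t → 0 ≤ p i t)
    (hτ_cont : ∀ i, ContinuousOn (τ i) (Set.Ici t0))
    (hτ_le : ∀ i t, t0 ≤ t → τ i t ≤ t)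
    (hτ_tendsto : ∀ i, Tendsto (τ i) atTop atTop)
    (hq_pos : ∀ i, 0 < q i)
    (hq : ∀ i, Filter.liminf (fun t : ℝ => ∫ s in τ i t..t, p i s) atTop = q i)
    (hroot : ∀ i, Real.exp (q i * lamStar i) = lamStar i)
    (hsmallest : ∀ i lam, Real.exp (q i * lam) = lam → lamStar i ≤ lam)
    (hσ_cont : ∀ i, ContinuousOn (σ i) (Set.Ici t0))
    (hσ_mono : ∀ i, MonotoneOn (σ i) (Set.Ici t0))
    (hσ_ge : ∀ i t, t0 ≤ t → τ i t ≤ σ i t)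
    (hσ_le : ∀ i t, t0 ≤ t → σ i t ≤ t)
    (hlimsup :
      Filter.limsup (fun ε : ℝ =>
        Filter.limsup (fun t : ℝ =>
          ∏ j : Fin m,
            (∏ i : Fin m,
              ∫ s in σ j t..t, p i s *
                Real.exp (∫ ξ in τ i s..σ i t,
                  ∑ k : Fin m, (lamStar k - ε) * p k ξ)) ^ ((1 : ℝ) / m))
          atTop)
        (nhdsWithin 0 (Set.Ioi 0)) > 1 / (m : ℝ) ^ m)
    (hy_cont : Continuous y)
    (T1 : ℝ) (hT1 : t0 ≤ T1)
    (hy_pos : ∀ t, T1 ≤ t → 0 < y t)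
    (hy_sol : ∀ t, T1 ≤ t → HasDerivAt y (-(∑ i : Fin m, p i t * y (τ i t))) t) :
    False := by
  have hm0 : (m : ℝ) ≠ 0 := Nat.cast_ne_zero.2 (by omega)
  have hmpos : (0:ℝ) < (m:ℝ) := by positivity
  set P : Fin m → ℝ → ℝ := fun i s => p i (max s t0) with hP
  have hP_cont : ∀ i, Continuous (P i) := fun i =>
    (hp_cont i).comp_continuous (continuous_id.max continuous_const)
      (fun s => Set.mem_Ici.2 (le_max_right _ _))
  have hP_nonneg : ∀ i s, 0 ≤ P i s := fun i s => hp_nonneg i _ (le_max_right _ _)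
  have hP_eq : ∀ i s, t0 ≤ s → P i s = p i s := fun i s hs => by
    simp [hP, max_eq_left hs]
  -- step 2 : pick ε
  have hc₀pos : (0:ℝ) < 1 / (m : ℝ) ^ m := by positivity
  obtain ⟨ε, hFε, hε0⟩ :=
    ((freq_of_limsup_gt hc₀pos.le hlimsup).and_eventually
      (eventually_mem_nhdsWithin)).exists
  rw [Set.mem_Ioi] at hε0
  -- step 3 : iteration constants
  have hreach := fun i => iterSeq_reach (q i) (lamStar i) ε (hq_pos i) (hroot i)
    (hsmallest i) hε0
  choose δ hδ_pos hδ_lt n hn using hreach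
  set N := Finset.univ.sup n with hN
  set c : Fin m → ℝ := fun i => iterSeq (q i - δ i) N with hcdef
  have hc1 : ∀ i, 1 ≤ c i := fun i => iterSeq_one_le _ _
  have hc0 : ∀ i, 0 ≤ c i := fun i => zero_le_one.trans (hc1 i)
  have hc_ge : ∀ i, lamStar i - ε < c i := fun i =>
    lt_of_lt_of_le (hn i) (iterSeq_mono _ (Finset.le_sup (Finset.mem_univ i)))
  -- step 4 : good
  have base : ∀ᶠ t in atTop, ∀ i, (1:ℝ) * y t ≤ y (τ i t) := by
    obtain ⟨S0, hS0t0, hS0T1, hkey0⟩ := no_pos_key hp_cont hp_nonneg hτ_le hy_cont T1 hT1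
      hy_pos hy_sol (fun _ => 0) (fun _ => le_refl 0)
      (by
        filter_upwards [eventually_all.2 fun i => (hτ_tendsto i).eventually_ge_atTop T1]
          with t ht i
        simpa using (hy_pos _ (ht i)).le)
    filter_upwards [eventually_all.2 fun i => (hτ_tendsto i).eventually_ge_atTop S0,
      eventually_ge_atTop (max S0 t0)] with t ht1 ht2 i
    have ht0 : t0 ≤ t := le_trans (le_max_right _ _) ht2
    have := hkey0 (τ i t) t (ht1 i) (hτ_le i t ht0)
    simpa using this
  have good : ∀ k : ℕ, ∀ᶠ t in atTop, ∀ i, iterSeq (q i - δ i) k * y t ≤ y (τ i t) := by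
    intro k
    induction k with
    | zero => simpa [iterSeq] using base
    | succ k ih =>
        have := no_pos_improve hp_cont hp_nonneg hτ_le hτ_tendsto hq_pos hq hy_cont T1 hT1
          hy_pos hy_sol δ hδ_pos hδ_lt (fun i => iterSeq (q i - δ i) k)
          (fun i => zero_le_one.trans (iterSeq_one_le _ _)) ih
        filter_upwards [this] with t ht i
        simpa [iterSeq] using ht i
  -- step 5 : key estimate with c
  obtain ⟨S, hSt0, hST1, hkey⟩ := no_pos_key hp_cont hp_nonneg hτ_le hy_cont T1 hT1
    hy_pos hy_sol c hc0 (good N)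
  -- step 6 : threshold R
  obtain ⟨R, hR⟩ := eventually_atTop.1
    ((eventually_all.2 fun i => (hτ_tendsto i).eventually_ge_atTop S).and
      (eventually_ge_atTop S))
  -- step 7 : final t
  obtain ⟨t, hFt, hτR, hRt⟩ :=
    ((freq_of_limsup_gt hc₀pos.le hFε).and_eventually
      (((eventually_all.2 fun j => (hτ_tendsto j).eventually_ge_atTop R).and
        (eventually_ge_atTop R)))).exists
  -- ===== final contradiction at time t =====
  set I : Fin m → Fin m → ℝ := fun i j =>
    ∫ s in σ j t..t, p i s * Real.exp (∫ ξ in τ i s..σ i t,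
      ∑ k : Fin m, (lamStar k - ε) * p k ξ) with hI
  have hFt' : 1 / (m:ℝ) ^ m < ∏ j : Fin m, (∏ i : Fin m, I i j) ^ ((1:ℝ)/m) := by
    simp only [hI]; exact hFt
  have hSt : S ≤ t := (hR t hRt).2
  have ht0t : t0 ≤ t := hSt0.trans hSt
  have hfacts : ∀ s, R ≤ s → t0 ≤ s ∧ T1 ≤ s ∧ S ≤ s ∧ ∀ i, S ≤ τ i s := by
    intro s hs
    obtain ⟨h1, h2⟩ := hR s hs
    exact ⟨hSt0.trans h2, hST1.trans h2, h2, h1⟩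
  have hσR : ∀ j, R ≤ σ j t := fun j => (hτR j).trans (hσ_ge j t ht0t)
  have hσt0 : ∀ j, t0 ≤ σ j t := fun j => (hfacts _ (hσR j)).1
  have hσjt : ∀ j, σ j t ≤ t := fun j => hσ_le j t ht0t
  have hYpos : ∀ j, 0 < y (σ j t) := fun j => hy_pos _ (hfacts _ (hσR j)).2.1
  have hIccsub : ∀ j, Set.Icc (σ j t) t ⊆ Set.Ici t0 := fun j s hs =>
    Set.mem_Ici.2 ((hσt0 j).trans hs.1)
  -- global exponent functions
  set W2 : ℝ → ℝ := fun ξ => ∑ k : Fin m, (lamStar k - ε) * P k ξ with hW2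
  have hW2cont : Continuous W2 := by
    apply continuous_finset_sum
    intro k _
    exact continuous_const.mul (hP_cont k)
  set V : ℝ → ℝ := fun r => ∫ ξ in (0:ℝ)..r, W2 ξ with hV
  have hVder : ∀ r, HasDerivAt V (W2 r) r := fun r =>
    intervalIntegral.integral_hasDerivAt_right (hW2cont.intervalIntegrable _ _)
      (hW2cont.stronglyMeasurableAtFilter _ _) hW2cont.continuousAt
  have hVcont : Continuous V := Differentiable.continuous fun r => (hVder r).differentiableAt
  have hVint : ∀ a b : ℝ, (∫ ξ in a..b, W2 ξ) = V b - V a := fun a b =>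
    (integral_interval_sub_left (hW2cont.intervalIntegrable _ _)
      (hW2cont.intervalIntegrable _ _)).symm
  have hwcont : Continuous (fun s => ∑ k : Fin m, c k * P k s) := by
    apply continuous_finset_sum
    intro k _
    exact continuous_const.mul (hP_cont k)
  -- per (i,j) estimate
  have hIY : ∀ i j, I i j * y (σ i t) ≤ ∫ s in σ j t..t, p i s * y (τ i s) := by
    intro i j
    have hσiR := hσR i
    have hσiT1 := (hfacts _ hσiR).2.1
    have hyσi : 0 < y (σ i t) := hYpos i
    -- pointwise facts on the interval
    have hpoint : ∀ s ∈ Set.Icc (σ j t) t,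
        Real.exp (∫ ξ in τ i s..σ i t, ∑ k : Fin m, (lamStar k - ε) * p k ξ) * y (σ i t)
          ≤ y (τ i s) ∧
        (∫ ξ in τ i s..σ i t, ∑ k : Fin m, (lamStar k - ε) * p k ξ) = V (σ i t) - V (τ i s) := by
      intro s hs
      have hsR : R ≤ s := (hσR j).trans hs.1
      obtain ⟨hst0, hsT1, hsS, hsτ⟩ := hfacts s hsR
      have hτσ : τ i s ≤ σ i t :=
        (hσ_ge i s hst0).trans (hσ_mono i (Set.mem_Ici.2 hst0) (Set.mem_Ici.2 ht0t) hs.2)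
      have hτs0 : t0 ≤ τ i s := hSt0.trans (hsτ i)
      -- rewrite hypothesis exponent using W2
      have hcongr1 : (∫ ξ in τ i s..σ i t, ∑ k : Fin m, (lamStar k - ε) * p k ξ)
          = ∫ ξ in τ i s..σ i t, W2 ξ := by
        apply intervalIntegral.integral_congr
        intro ξ hξ
        rw [Set.uIcc_of_le hτσ] at hξ
        have : t0 ≤ ξ := hτs0.trans hξ.1
        simp only [hW2]
        refine Finset.sum_congr rfl fun k _ => ?_
        rw [hP_eq k ξ this]
      refine ⟨?_, by rw [hcongr1, hVint]⟩
      -- exponent comparison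
      have hcomp : (∫ ξ in τ i s..σ i t, W2 ξ) ≤
          ∫ ξ in τ i s..σ i t, ∑ k : Fin m, c k * P k ξ := by
        apply intervalIntegral.integral_mono_on hτσ
          (hW2cont.intervalIntegrable _ _) (hwcont.intervalIntegrable _ _)
        intro ξ _
        apply Finset.sum_le_sum
        intro k _
        exact mul_le_mul_of_nonneg_right (le_of_lt (by linarith [hc_ge k])) (hP_nonneg k ξ)
      have hkey' := hkey (τ i s) (σ i t) (hsτ i) hτσ
      calc Real.exp (∫ ξ in τ i s..σ i t, ∑ k : Fin m, (lamStar k - ε) * p k ξ) * y (σ i t)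
          = y (σ i t) * Real.exp (∫ ξ in τ i s..σ i t, W2 ξ) := by rw [hcongr1]; ring
        _ ≤ y (σ i t) * Real.exp (∫ ξ in τ i s..σ i t, ∑ k : Fin m, c k * P k ξ) :=
            mul_le_mul_of_nonneg_left (Real.exp_le_exp.2 hcomp) hyσi.le
        _ ≤ y (τ i s) := hkey'
    -- continuous version of the integrand
    have hgcont : ContinuousOn
        (fun s => p i s * Real.exp (V (σ i t) - V (τ i s)) * y (σ i t))
        (Set.Icc (σ j t) t) := by
      apply ContinuousOn.mul _ continuousOn_const
      apply ContinuousOn.mul ((hp_cont i).mono (hIccsub j))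
      exact Real.continuous_exp.comp_continuousOn
        (continuousOn_const.sub (hVcont.comp_continuousOn ((hτ_cont i).mono (hIccsub j))))
    have hτycont : ContinuousOn (fun s => p i s * y (τ i s)) (Set.Icc (σ j t) t) :=
      ((hp_cont i).mono (hIccsub j)).mul
        (hy_cont.comp_continuousOn ((hτ_cont i).mono (hIccsub j)))
    calc I i j * y (σ i t)
        = ∫ s in σ j t..t, (p i s * Real.exp (∫ ξ in τ i s..σ i t,
            ∑ k : Fin m, (lamStar k - ε) * p k ξ)) * y (σ i t) := by
          rw [hI]; exact (intervalIntegral.integral_mul_const _ _).symm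
      _ = ∫ s in σ j t..t, p i s * Real.exp (V (σ i t) - V (τ i s)) * y (σ i t) := by
          apply intervalIntegral.integral_congr
          intro s hs
          rw [Set.uIcc_of_le (hσjt j)] at hs
          beta_reduce
          rw [(hpoint s hs).2]
      _ ≤ ∫ s in σ j t..t, p i s * y (τ i s) := by
          apply intervalIntegral.integral_mono_on (hσjt j)
          · rw [intervalIntegrable_iff_integrableOn_Icc_of_le (hσjt j)]
            exact hgcont.integrableOn_compact isCompact_Icc
          · rw [intervalIntegrable_iff_integrableOn_Icc_of_le (hσjt j)]
            exact hτycont.integrableOn_compact isCompact_Icc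
          · intro s hs
            have h1 := (hpoint s hs).1
            have h2 := (hpoint s hs).2
            have hp0 : 0 ≤ p i s := hp_nonneg i s (hIccsub j hs)
            calc p i s * Real.exp (V (σ i t) - V (τ i s)) * y (σ i t)
                = p i s * (Real.exp (∫ ξ in τ i s..σ i t,
                    ∑ k : Fin m, (lamStar k - ε) * p k ξ) * y (σ i t)) := by rw [h2]; ring
              _ ≤ p i s * y (τ i s) := mul_le_mul_of_nonneg_left h1 hp0
  -- main inequality per j
  have hmain : ∀ j, (∑ i : Fin m, I i j * y (σ i t)) ≤ y (σ j t) := by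
    intro j
    have hcontn : ∀ i : Fin m, ContinuousOn (fun s => p i s * y (τ i s)) (Set.Icc (σ j t) t) :=
      fun i => ((hp_cont i).mono (hIccsub j)).mul
        (hy_cont.comp_continuousOn ((hτ_cont i).mono (hIccsub j)))
    have hintn : ∀ i : Fin m, IntervalIntegrable (fun s => p i s * y (τ i s))
        volume (σ j t) t := fun i => by
      rw [intervalIntegrable_iff_integrableOn_Icc_of_le (hσjt j)]
      exact (hcontn i).integrableOn_compact isCompact_Icc
    have hsumcont : ContinuousOn (fun s => ∑ i : Fin m, p i s * y (τ i s))
        (Set.Icc (σ j t) t) := continuousOn_finset_sum _ (fun i _ => hcontn i)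
    have hFTC : (∫ s in σ j t..t, -(∑ i : Fin m, p i s * y (τ i s))) = y t - y (σ j t) := by
      apply intervalIntegral.integral_eq_sub_of_hasDerivAt
      · intro s hs
        rw [Set.uIcc_of_le (hσjt j)] at hs
        have hsR : R ≤ s := (hσR j).trans hs.1
        exact hy_sol s (hfacts s hsR).2.1
      · rw [intervalIntegrable_iff_integrableOn_Icc_of_le (hσjt j)]
        exact (hsumcont.neg).integrableOn_compact isCompact_Icc
    rw [intervalIntegral.integral_neg] at hFTC
    have hsum_eq : (∫ s in σ j t..t, ∑ i : Fin m, p i s * y (τ i s))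
        = ∑ i : Fin m, ∫ s in σ j t..t, p i s * y (τ i s) :=
      intervalIntegral.integral_finset_sum (fun i _ => hintn i)
    have hyt : 0 < y t := hy_pos t ((hfacts t hRt).2.1)
    calc (∑ i : Fin m, I i j * y (σ i t))
        ≤ ∑ i : Fin m, ∫ s in σ j t..t, p i s * y (τ i s) :=
          Finset.sum_le_sum (fun i _ => hIY i j)
      _ = ∫ s in σ j t..t, ∑ i : Fin m, p i s * y (τ i s) := hsum_eq.symm
      _ = y (σ j t) - y t := by linarith [hFTC]
      _ ≤ y (σ j t) := by linarith
  -- AM-GM finale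
  have hInn : ∀ i j, 0 ≤ I i j := by
    intro i j
    rw [hI]
    apply intervalIntegral.integral_nonneg (hσjt j)
    intro s hs
    exact mul_nonneg (hp_nonneg i s (hIccsub j hs)) (Real.exp_nonneg _)
  set Y : Fin m → ℝ := fun j => y (σ j t) with hYdef
  have hYpos' : ∀ j, 0 < Y j := hYpos
  have hZpos : (0:ℝ) < ∏ j : Fin m, Y j := Finset.prod_pos fun j _ => hYpos' j
  have hAM : ∀ j, (∏ i : Fin m, (I i j * Y i) ^ ((1:ℝ)/m)) ≤ (1/(m:ℝ)) * Y j := by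
    intro j
    have h := Real.geom_mean_le_arith_mean_weighted Finset.univ (fun _ => (1:ℝ)/m)
      (fun i => I i j * Y i) (fun i _ => by positivity)
      (by
        rw [Finset.sum_const, Finset.card_univ, Fintype.card_fin, nsmul_eq_mul]
        field_simp)
      (fun i _ => mul_nonneg (hInn i j) (hYpos' i).le)
    calc (∏ i : Fin m, (I i j * Y i) ^ ((1:ℝ)/m))
        ≤ ∑ i : Fin m, (1/(m:ℝ)) * (I i j * Y i) := h
      _ = (1/(m:ℝ)) * ∑ i : Fin m, I i j * Y i := by rw [Finset.mul_sum]
      _ ≤ (1/(m:ℝ)) * Y j := by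
          apply mul_le_mul_of_nonneg_left (hmain j)
          positivity
  have hprodle : (∏ j : Fin m, ∏ i : Fin m, (I i j * Y i) ^ ((1:ℝ)/m))
      ≤ ∏ j : Fin m, ((1/(m:ℝ)) * Y j) :=
    Finset.prod_le_prod
      (fun j _ => Finset.prod_nonneg fun i _ => Real.rpow_nonneg
        (mul_nonneg (hInn i j) (hYpos' i).le) _)
      (fun j _ => hAM j)
  have hLHS : (∏ j : Fin m, ∏ i : Fin m, (I i j * Y i) ^ ((1:ℝ)/m))
      = (∏ j : Fin m, (∏ i : Fin m, I i j) ^ ((1:ℝ)/m)) * ∏ j : Fin m, Y j := by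
    have h1 : ∀ j, (∏ i : Fin m, (I i j * Y i) ^ ((1:ℝ)/m))
        = (∏ i : Fin m, I i j) ^ ((1:ℝ)/m) * ((∏ i : Fin m, Y i) ^ ((1:ℝ)/m)) := by
      intro j
      calc (∏ i : Fin m, (I i j * Y i) ^ ((1:ℝ)/m))
          = ∏ i : Fin m, (I i j) ^ ((1:ℝ)/m) * (Y i) ^ ((1:ℝ)/m) :=
            Finset.prod_congr rfl fun i _ =>
              Real.mul_rpow (hInn i j) (hYpos' i).le
        _ = (∏ i : Fin m, (I i j) ^ ((1:ℝ)/m)) * ∏ i : Fin m, (Y i) ^ ((1:ℝ)/m) :=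
            Finset.prod_mul_distrib
        _ = (∏ i : Fin m, I i j) ^ ((1:ℝ)/m) * ((∏ i : Fin m, Y i) ^ ((1:ℝ)/m)) := by
            rw [Real.finset_prod_rpow _ _ (fun i _ => hInn i j),
              Real.finset_prod_rpow _ _ (fun i _ => (hYpos' i).le)]
    rw [Finset.prod_congr rfl (fun j _ => h1 j), Finset.prod_mul_distrib,
      Finset.prod_const, Finset.card_univ, Fintype.card_fin]
    congr 1
    rw [← Real.rpow_natCast ((∏ i : Fin m, Y i) ^ ((1:ℝ)/m)) m,
      ← Real.rpow_mul hZpos.le, one_div_mul_cancel hm0, Real.rpow_one]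
  have hRHS : (∏ j : Fin m, ((1/(m:ℝ)) * Y j)) = (1/(m:ℝ))^m * ∏ j : Fin m, Y j := by
    rw [Finset.prod_mul_distrib, Finset.prod_const, Finset.card_univ, Fintype.card_fin]
  rw [hLHS, hRHS] at hprodle
  have hfinal : (∏ j : Fin m, (∏ i : Fin m, I i j) ^ ((1:ℝ)/m)) ≤ 1/(m:ℝ)^m := by
    have h2 := le_of_mul_le_mul_right hprodle hZpos
    calc (∏ j : Fin m, (∏ i : Fin m, I i j) ^ ((1:ℝ)/m)) ≤ (1/(m:ℝ))^m := h2
      _ = 1/(m:ℝ)^m := by rw [div_pow, one_pow]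
  exact absurd hFt' (not_lt.2 hfinal)

end NoPos3


/-- **Theorem 3.2.** Suppose `liminf_{t→∞} ∫_{τ i t}^{t} p i = q i > 0`, let `λᵢ*`
be the smallest root of `e^{q i · λ} = λ`, and suppose there exist non-decreasing
continuous functions `σ i` with `τ i t ≤ σ i t ≤ t` such that
`limsup_{ε→0+} ( limsup_{t→∞} ∏_j [∏_i ∫_{σ j t}^{t} p i s ·
exp(∫_{τ i s}^{σ i t} ∑_k (λₖ* − ε) p k) ds]^{1/m} ) > 1/mᵐ`.
Then every solution of `x'(t) + ∑ i, p i t * x (τ i t) = 0` is oscillatory. -/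
theorem oscillation_several_args_liminf_root
    (m : ℕ) (hm : 1 ≤ m) (t0 : ℝ)
    (p τ : Fin m → ℝ → ℝ)
    (hp_cont : ∀ i, ContinuousOn (p i) (Set.Ici t0))
    (hp_nonneg : ∀ i t, t0 ≤ t → 0 ≤ p i t)
    (hτ_cont : ∀ i, ContinuousOn (τ i) (Set.Ici t0))
    (hτ_nonneg : ∀ i t, t0 ≤ t → 0 ≤ τ i t)
    (hτ_le : ∀ i t, t0 ≤ t → τ i t ≤ t)
    (hτ_tendsto : ∀ i, Tendsto (τ i) atTop atTop)
    (q : Fin m → ℝ) (hq_pos : ∀ i, 0 < q i)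
    (hq : ∀ i, Filter.liminf (fun t : ℝ => ∫ s in τ i t..t, p i s) atTop = q i)
    (lamStar : Fin m → ℝ)
    (hroot : ∀ i, Real.exp (q i * lamStar i) = lamStar i)
    (hsmallest : ∀ i lam, Real.exp (q i * lam) = lam → lamStar i ≤ lam)
    (σ : Fin m → ℝ → ℝ)
    (hσ_cont : ∀ i, ContinuousOn (σ i) (Set.Ici t0))
    (hσ_mono : ∀ i, MonotoneOn (σ i) (Set.Ici t0))
    (hσ_ge : ∀ i t, t0 ≤ t → τ i t ≤ σ i t)
    (hσ_le : ∀ i t, t0 ≤ t → σ i t ≤ t)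
    (hlimsup :
      Filter.limsup (fun ε : ℝ =>
        Filter.limsup (fun t : ℝ =>
          ∏ j : Fin m,
            (∏ i : Fin m,
              ∫ s in σ j t..t, p i s *
                Real.exp (∫ ξ in τ i s..σ i t,
                  ∑ k : Fin m, (lamStar k - ε) * p k ξ)) ^ ((1 : ℝ) / m))
          atTop)
        (nhdsWithin 0 (Set.Ioi 0)) > 1 / (m : ℝ) ^ m)
    (x : ℝ → ℝ) (hx_cont : Continuous x)
    (hx_sol : ∃ T, t0 ≤ T ∧ ∀ t, T ≤ t →
      HasDerivAt x (-(∑ i : Fin m, p i t * x (τ i t))) t) :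
    ∀ T : ℝ, ∃ t, T ≤ t ∧ x t = 0 := by
  by_contra hcon
  push_neg at hcon
  obtain ⟨T₀, hT₀⟩ := hcon
  obtain ⟨Ts, hTs0, hsol⟩ := hx_sol
  set T1 := max T₀ Ts with hT1def
  have hT1t0 : t0 ≤ T1 := hTs0.trans (le_max_right _ _)
  have hT₀T1 : T₀ ≤ T1 := le_max_left _ _
  have hTsT1 : Ts ≤ T1 := le_max_right _ _
  have hne : ∀ t, T1 ≤ t → x t ≠ 0 := fun t ht => hT₀ t (hT₀T1.trans ht)
  have hsign : (∀ t, T1 ≤ t → 0 < x t) ∨ (∀ t, T1 ≤ t → x t < 0) := by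
    rcases lt_trichotomy (x T1) 0 with h | h | h
    · right
      intro t ht
      rcases lt_trichotomy (x t) 0 with h' | h' | h'
      · exact h'
      · exact absurd h' (hne t ht)
      · exfalso
        have hsub : (0:ℝ) ∈ Set.Icc (x T1) (x t) := ⟨h.le, h'.le⟩
        obtain ⟨r, hr, hr0⟩ := intermediate_value_Icc ht hx_cont.continuousOn hsub
        exact hne r hr.1 hr0
    · exact absurd h (hne T1 le_rfl)
    · left
      intro t ht
      rcases lt_trichotomy (x t) 0 with h' | h' | h'
      · exfalso
        have hsub : (0:ℝ) ∈ Set.Icc (x t) (x T1) := ⟨h'.le, h.le⟩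
        obtain ⟨r, hr, hr0⟩ := intermediate_value_Icc' ht hx_cont.continuousOn hsub
        exact hne r hr.1 hr0
      · exact absurd h' (hne t ht)
      · exact h'
  rcases hsign with hpos | hneg
  · exact no_pos_solution hm hp_cont hp_nonneg hτ_cont hτ_le hτ_tendsto hq_pos hq
      hroot hsmallest hσ_cont hσ_mono hσ_ge hσ_le hlimsup hx_cont T1 hT1t0 hpos
      (fun t ht => hsol t (hTsT1.trans ht))
  · have hysol : ∀ t, T1 ≤ t →
        HasDerivAt (fun s => -x s) (-(∑ i : Fin m, p i t * (-x (τ i t)))) t := by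
      intro t ht
      have : HasDerivAt (fun s => -x s) (-(-(∑ i : Fin m, p i t * x (τ i t)))) t :=
        (hsol t (hTsT1.trans ht)).neg
      convert this using 1
      simp [mul_neg, Finset.sum_neg_distrib]
    exact no_pos_solution hm hp_cont hp_nonneg hτ_cont hτ_le hτ_tendsto hq_pos hq
      hroot hsmallest hσ_cont hσ_mono hσ_ge hσ_le hlimsup hx_cont.neg T1 hT1t0
      (fun t ht => neg_pos.2 (hneg t ht)) hysol
end

section
/- Suppose there exists a non-decreasing continuous function σ : [t_0,∞) → ℝ with τ(t) ≤ σ(t) ≤ t for all t ≥ t_0, such that limsup_{t→∞} ∫_{σ(t)}^{t} p(s) · exp( ∫_{τ(s)}^{σ(t)} p(ξ) · exp( ∫_{τ(ξ)}^{ξ} p(u) du ) dξ ) ds > 1. Then every solution of the equation x'(t) + p(t) x(τ(t)) = 0 is oscillatory. -/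
open Real Filter MeasureTheory

private lemma hasDerivAt_prim (f : ℝ → ℝ) (hf : Continuous f) (c t : ℝ) :
    HasDerivAt (fun y => ∫ u in c..y, f u) (f t) t :=
  intervalIntegral.integral_hasDerivAt_right (hf.intervalIntegrable _ _)
    (hf.stronglyMeasurableAtFilter _ _) hf.continuousAt

private lemma prim_sub (f : ℝ → ℝ) (hf : Continuous f) (l r : ℝ) :
    (∫ u in l..r, f u) = (∫ u in (0:ℝ)..r, f u) - ∫ u in (0:ℝ)..l, f u :=
  (intervalIntegral.integral_interval_sub_left (hf.intervalIntegrable _ _)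
    (hf.intervalIntegrable _ _)).symm

private lemma gron (f q : ℝ → ℝ) (hq : Continuous q) (l r : ℝ) (hlr : l ≤ r)
    (hf : ∀ t ∈ Set.Icc l r, ∃ d, HasDerivAt f d t ∧ d ≤ -(q t * f t)) :
    f r * Real.exp (∫ u in l..r, q u) ≤ f l := by
  set F : ℝ → ℝ := fun y => f y * Real.exp (∫ u in l..y, q u) with hFdef
  have hFd : ∀ t ∈ Set.Icc l r, ∃ d, HasDerivAt F d t ∧ d ≤ 0 := by
    intro t ht
    obtain ⟨d, hd, hle⟩ := hf t ht
    have hQ : HasDerivAt (fun y => Real.exp (∫ u in l..y, q u))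
        (Real.exp (∫ u in l..t, q u) * q t) t :=
      (hasDerivAt_prim q hq l t).exp
    refine ⟨_, hd.mul hQ, ?_⟩
    have he : (0:ℝ) < Real.exp (∫ u in l..t, q u) := Real.exp_pos _
    nlinarith [mul_le_mul_of_nonneg_right hle he.le]
  have hanti : AntitoneOn F (Set.Icc l r) := by
    apply antitoneOn_of_deriv_nonpos (convex_Icc l r)
    · intro t ht
      obtain ⟨d, hd, _⟩ := hFd t ht
      exact hd.continuousAt.continuousWithinAt
    · intro t ht
      rw [interior_Icc] at ht
      obtain ⟨d, hd, _⟩ := hFd t (Set.mem_Icc_of_Ioo ht)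
      exact hd.differentiableAt.differentiableWithinAt
    · intro t ht
      rw [interior_Icc] at ht
      obtain ⟨d, hd, hle⟩ := hFd t (Set.mem_Icc_of_Ioo ht)
      rw [hd.deriv]; exact hle
  have h := hanti (Set.left_mem_Icc.mpr hlr) (Set.right_mem_Icc.mpr hlr) hlr
  simpa [hFdef, intervalIntegral.integral_same] using h

private lemma aux_no_pos_sol
    (t0 : ℝ) (p τ : ℝ → ℝ)
    (hp_cont : ContinuousOn p (Set.Ici t0))
    (hp_nonneg : ∀ t, t0 ≤ t → 0 ≤ p t)
    (hτ_cont : ContinuousOn τ (Set.Ici t0))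
    (hτ_le : ∀ t, t0 ≤ t → τ t ≤ t)
    (hτ_tendsto : Tendsto τ atTop atTop)
    (σ : ℝ → ℝ)
    (hσ_mono : MonotoneOn σ (Set.Ici t0))
    (hσ_ge : ∀ t, t0 ≤ t → τ t ≤ σ t)
    (hσ_le : ∀ t, t0 ≤ t → σ t ≤ t)
    (hlimsup : Filter.limsup (fun t : ℝ =>
        ∫ s in σ t..t, p s *
          Real.exp (∫ ξ in τ s..σ t,
            p ξ * Real.exp (∫ u in τ ξ..ξ, p u))) atTop > 1)
    (x : ℝ → ℝ) (hx_cont : Continuous x)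
    (a : ℝ) (ha : t0 ≤ a)
    (hx_pos : ∀ t, a ≤ t → 0 < x t)
    (hx_sol : ∀ t, a ≤ t → HasDerivAt x (-(p t * x (τ t))) t) : False := by
  -- continuous extensions of p and τ
  have hmax : Continuous (fun u : ℝ => max u t0) := continuous_id.max continuous_const
  have hmem : ∀ u : ℝ, max u t0 ∈ Set.Ici t0 := fun u => le_max_right u t0
  set p' : ℝ → ℝ := fun u => p (max u t0) with hp'def
  set τ' : ℝ → ℝ := fun u => τ (max u t0) with hτ'def
  have hp'c : Continuous p' := hp_cont.comp_continuous hmax hmem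
  have hτ'c : Continuous τ' := hτ_cont.comp_continuous hmax hmem
  have hp'eq : ∀ u, t0 ≤ u → p' u = p u := by
    intro u hu; simp only [hp'def, max_eq_left hu]
  have hτ'eq : ∀ u, t0 ≤ u → τ' u = τ u := by
    intro u hu; simp only [hτ'def, max_eq_left hu]
  set P : ℝ → ℝ := fun y => ∫ u in (0:ℝ)..y, p' u with hPdef
  have hPc : Continuous P :=
    continuous_iff_continuousAt.mpr fun t => (hasDerivAt_prim p' hp'c 0 t).continuousAt
  set q1 : ℝ → ℝ := fun ξ => p' ξ * Real.exp (P ξ - P (τ' ξ)) with hq1def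
  have hq1c : Continuous q1 :=
    hp'c.mul (Real.continuous_exp.comp (hPc.sub (hPc.comp hτ'c)))
  set Q : ℝ → ℝ := fun y => ∫ u in (0:ℝ)..y, q1 u with hQdef
  have hQc : Continuous Q :=
    continuous_iff_continuousAt.mpr fun t => (hasDerivAt_prim q1 hq1c 0 t).continuousAt
  -- p-integral in terms of P
  have hPint : ∀ l r : ℝ, t0 ≤ l → t0 ≤ r → (∫ u in l..r, p u) = P r - P l := by
    intro l r hl hr
    have he : (∫ u in l..r, p u) = ∫ u in l..r, p' u := by
      apply intervalIntegral.integral_congr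
      intro u hu
      have : t0 ≤ u := le_trans (le_min hl hr) hu.1
      exact (hp'eq u this).symm
    rw [he, prim_sub p' hp'c l r]
  -- thresholds
  have hex : ∀ r : ℝ, ∃ m : ℝ, r ≤ m ∧ ∀ t, m ≤ t → r ≤ τ t := by
    intro r
    obtain ⟨m0, hm0⟩ := (eventually_atTop).mp (hτ_tendsto.eventually_ge_atTop r)
    exact ⟨max r m0, le_max_left _ _,
      fun t ht => hm0 t (le_trans (le_max_right _ _) ht)⟩
  obtain ⟨b, hab, hb⟩ := hex a
  obtain ⟨c, hbc, hc⟩ := hex b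
  obtain ⟨d, hcd, hd⟩ := hex c
  obtain ⟨e, hde, he⟩ := hex d
  have ht0b : t0 ≤ b := le_trans ha hab
  have ht0c : t0 ≤ c := le_trans ht0b hbc
  have ht0d : t0 ≤ d := le_trans ht0c hcd
  have ht0e : t0 ≤ e := le_trans ht0d hde
  have had : a ≤ d := le_trans hab (le_trans hbc hcd)
  -- E1 : x is antitone on [b, ∞)
  have hx_anti : ∀ u v : ℝ, b ≤ u → u ≤ v → x v ≤ x u := by
    intro u v hu huv
    have h := gron x (fun _ => (0:ℝ)) continuous_const u v huv ?_
    · simpa using h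
    · intro t ht
      refine ⟨_, hx_sol t (le_trans hab (le_trans hu ht.1)), ?_⟩
      have h1 : 0 ≤ p t := hp_nonneg t (le_trans ht0b (le_trans hu ht.1))
      have h2 : 0 < x (τ t) := hx_pos _ (hb t (le_trans hu ht.1))
      simp only [zero_mul, neg_zero]
      nlinarith
  -- E2
  have hE2 : ∀ ξ, d ≤ ξ → x ξ * Real.exp (P ξ - P (τ ξ)) ≤ x (τ ξ) := by
    intro ξ hξ
    have ht0ξ : t0 ≤ ξ := le_trans ht0d hξ
    have hcτξ : c ≤ τ ξ := hd ξ hξ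
    have h := gron x p' hp'c (τ ξ) ξ (hτ_le ξ ht0ξ) ?_
    · rw [prim_sub p' hp'c] at h; exact h
    · intro t ht
      have hct : c ≤ t := le_trans hcτξ ht.1
      have ht0t : t0 ≤ t := le_trans ht0c hct
      refine ⟨_, hx_sol t (le_trans hab (le_trans hbc hct)), ?_⟩
      rw [hp'eq t ht0t]
      have h1 : x t ≤ x (τ t) := hx_anti (τ t) t (hc t hct) (hτ_le t ht0t)
      have h2 : 0 ≤ p t := hp_nonneg t ht0t
      nlinarith
  -- E3
  have hE3 : ∀ s t : ℝ, d ≤ τ s → τ s ≤ σ t →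
      x (σ t) * Real.exp (Q (σ t) - Q (τ s)) ≤ x (τ s) := by
    intro s t hds hst
    have h := gron x q1 hq1c (τ s) (σ t) hst ?_
    · rw [prim_sub q1 hq1c] at h; exact h
    · intro ξ hξ
      have hdξ : d ≤ ξ := le_trans hds hξ.1
      have ht0ξ : t0 ≤ ξ := le_trans ht0d hdξ
      refine ⟨_, hx_sol ξ (le_trans had hdξ), ?_⟩
      have hq1e : q1 ξ = p ξ * Real.exp (P ξ - P (τ ξ)) := by
        rw [hq1def]
        simp only
        rw [hp'eq ξ ht0ξ, hτ'eq ξ ht0ξ]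
      rw [hq1e]
      have h2 := hE2 ξ hdξ
      have h3 : 0 ≤ p ξ := hp_nonneg ξ ht0ξ
      nlinarith [mul_le_mul_of_nonneg_left h2 h3]
  -- key estimate
  have key : ∀ t : ℝ, e ≤ t → e ≤ σ t →
      (∫ s in σ t..t, p s *
        Real.exp (∫ ξ in τ s..σ t, p ξ * Real.exp (∫ u in τ ξ..ξ, p u))) ≤ 1 := by
    intro t het heσ
    have ht0t : t0 ≤ t := le_trans ht0e het
    have ht0σ : t0 ≤ σ t := le_trans ht0e heσ
    have haσ : a ≤ σ t := le_trans (le_trans hab (le_trans hbc (le_trans hcd hde))) heσ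
    have hσt_le : σ t ≤ t := hσ_le t ht0t
    -- rewrite the integrand
    have hIeq : (∫ s in σ t..t, p s *
          Real.exp (∫ ξ in τ s..σ t, p ξ * Real.exp (∫ u in τ ξ..ξ, p u)))
        = ∫ s in σ t..t, p s * Real.exp (Q (σ t) - Q (τ s)) := by
      apply intervalIntegral.integral_congr
      intro s hs
      beta_reduce
      rw [Set.uIcc_of_le hσt_le] at hs
      have hes : e ≤ s := le_trans heσ hs.1
      have ht0s : t0 ≤ s := le_trans ht0e hes
      have hds : d ≤ τ s := he s hes
      have hτsσ : τ s ≤ σ t := le_trans (hσ_ge s ht0s) (hσ_mono ht0s ht0t hs.2)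
      have h1 : (∫ ξ in τ s..σ t, p ξ * Real.exp (∫ u in τ ξ..ξ, p u))
          = ∫ ξ in τ s..σ t, q1 ξ := by
        apply intervalIntegral.integral_congr
        intro ξ hξ
        beta_reduce
        rw [Set.uIcc_of_le hτsσ] at hξ
        have hdξ : d ≤ ξ := le_trans hds hξ.1
        have ht0ξ : t0 ≤ ξ := le_trans ht0d hdξ
        have ht0τξ : t0 ≤ τ ξ := le_trans ht0b (hc ξ (le_trans hcd hdξ))
        have hq1e : q1 ξ = p ξ * Real.exp (P ξ - P (τ ξ)) := by
          rw [hq1def]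
          simp only
          rw [hp'eq ξ ht0ξ, hτ'eq ξ ht0ξ]
        rw [hq1e, hPint (τ ξ) ξ ht0τξ ht0ξ]
      rw [h1, prim_sub q1 hq1c]
    rw [hIeq]
    -- continuity facts for integrands on [σ t, t]
    have hsub : Set.uIcc (σ t) t ⊆ Set.Ici t0 := by
      rw [Set.uIcc_of_le hσt_le]
      intro u hu; exact le_trans ht0σ hu.1
    have hcont1 : ContinuousOn (fun s => p s * x (τ s)) (Set.uIcc (σ t) t) :=
      (hp_cont.mono hsub).mul (hx_cont.comp_continuousOn (hτ_cont.mono hsub))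
    have hcont2 : ContinuousOn (fun s => p s * Real.exp (Q (σ t) - Q (τ s)))
        (Set.uIcc (σ t) t) :=
      (hp_cont.mono hsub).mul (Real.continuous_exp.comp_continuousOn
        (continuousOn_const.sub (hQc.comp_continuousOn (hτ_cont.mono hsub))))
    -- FTC
    have hftc : (∫ s in σ t..t, p s * x (τ s)) = x (σ t) - x t := by
      have hd1 : ∀ s ∈ Set.uIcc (σ t) t, HasDerivAt x (-(p s * x (τ s))) s := by
        intro s hs
        rw [Set.uIcc_of_le hσt_le] at hs
        exact hx_sol s (le_trans haσ hs.1)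
      have h := intervalIntegral.integral_eq_sub_of_hasDerivAt hd1
        (hcont1.neg.intervalIntegrable)
      rw [intervalIntegral.integral_neg] at h
      linarith
    -- monotone integral comparison
    have hmono : (∫ s in σ t..t, p s * Real.exp (Q (σ t) - Q (τ s))) * x (σ t)
        ≤ ∫ s in σ t..t, p s * x (τ s) := by
      rw [← intervalIntegral.integral_mul_const]
      apply intervalIntegral.integral_mono_on hσt_le
        ((hcont2.mul continuousOn_const).intervalIntegrable)
        (hcont1.intervalIntegrable)
      intro s hs
      have hes : e ≤ s := le_trans heσ hs.1
      have ht0s : t0 ≤ s := le_trans ht0e hes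
      have hds : d ≤ τ s := he s hes
      have hτsσ : τ s ≤ σ t := le_trans (hσ_ge s ht0s) (hσ_mono ht0s ht0t hs.2)
      have h3 := hE3 s t hds hτsσ
      have h4 : 0 ≤ p s := hp_nonneg s ht0s
      show p s * Real.exp (Q (σ t) - Q (τ s)) * x (σ t) ≤ p s * x (τ s)
      nlinarith [mul_le_mul_of_nonneg_left h3 h4]
    have hxσ : 0 < x (σ t) := hx_pos _ haσ
    have hxt : 0 < x t := hx_pos _ (le_trans haσ hσt_le)
    nlinarith
  -- conclude via limsup
  set I : ℝ → ℝ := fun t => ∫ s in σ t..t, p s *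
      Real.exp (∫ ξ in τ s..σ t, p ξ * Real.exp (∫ u in τ ξ..ξ, p u)) with hIdef
  have hev : ∀ᶠ t in atTop, I t ≤ 1 := by
    filter_upwards [eventually_ge_atTop e, eventually_ge_atTop t0,
      hτ_tendsto.eventually_ge_atTop e] with t h1 h2 h3
    exact key t h1 (le_trans h3 (hσ_ge t h2))
  have hnonneg : ∀ᶠ t in atTop, 0 ≤ I t := by
    filter_upwards [eventually_ge_atTop t0, hτ_tendsto.eventually_ge_atTop t0]
      with t h1 h2
    have hσ0 : t0 ≤ σ t := le_trans h2 (hσ_ge t h1)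
    apply intervalIntegral.integral_nonneg (hσ_le t h1)
    intro s hs
    have : 0 ≤ p s := hp_nonneg s (le_trans hσ0 hs.1)
    positivity
  have hcob : IsCoboundedUnder (· ≤ ·) atTop I := by
    refine ⟨0, fun r hr => ?_⟩
    rw [eventually_map] at hr
    obtain ⟨t, h0, h1⟩ := (hnonneg.and hr).exists
    linarith
  have hle : Filter.limsup I atTop ≤ 1 := Filter.limsup_le_of_le hcob hev
  rw [hIdef] at hle
  linarith [hlimsup, hle]

/-- **Corollary 3.1.** Suppose there is a non-decreasing continuous function `σ`
with `τ t ≤ σ t ≤ t` such that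
`limsup_{t→∞} ∫_{σ t}^{t} p s · exp(∫_{τ s}^{σ t} p ξ · exp(∫_{τ ξ}^{ξ} p u du) dξ) ds > 1`.
Then every solution of `x'(t) + p t * x (τ t) = 0` is oscillatory. -/
theorem oscillation_single_nonmonotone_arg
    (t0 : ℝ) (p τ : ℝ → ℝ)
    (hp_cont : ContinuousOn p (Set.Ici t0))
    (hp_nonneg : ∀ t, t0 ≤ t → 0 ≤ p t)
    (hτ_cont : ContinuousOn τ (Set.Ici t0))
    (hτ_nonneg : ∀ t, t0 ≤ t → 0 ≤ τ t)
    (hτ_le : ∀ t, t0 ≤ t → τ t ≤ t)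
    (hτ_tendsto : Tendsto τ atTop atTop)
    (σ : ℝ → ℝ)
    (hσ_cont : ContinuousOn σ (Set.Ici t0))
    (hσ_mono : MonotoneOn σ (Set.Ici t0))
    (hσ_ge : ∀ t, t0 ≤ t → τ t ≤ σ t)
    (hσ_le : ∀ t, t0 ≤ t → σ t ≤ t)
    (hlimsup :
      Filter.limsup (fun t : ℝ =>
        ∫ s in σ t..t, p s *
          Real.exp (∫ ξ in τ s..σ t,
            p ξ * Real.exp (∫ u in τ ξ..ξ, p u))) atTop > 1)
    (x : ℝ → ℝ) (hx_cont : Continuous x)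
    (hx_sol : ∃ T, t0 ≤ T ∧ ∀ t, T ≤ t →
      HasDerivAt x (-(p t * x (τ t))) t) :
    ∀ T : ℝ, ∃ t, T ≤ t ∧ x t = 0 := by
  by_contra hcon
  push_neg at hcon
  obtain ⟨T, hT⟩ := hcon
  obtain ⟨T0, hT0, hsol⟩ := hx_sol
  set A := max T T0 with hAdef
  have hAt0 : t0 ≤ A := le_trans hT0 (le_max_right _ _)
  have hAne : ∀ t, A ≤ t → x t ≠ 0 := fun t ht => hT t (le_trans (le_max_left _ _) ht)
  have hsolA : ∀ t, A ≤ t → HasDerivAt x (-(p t * x (τ t))) t :=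
    fun t ht => hsol t (le_trans (le_max_right _ _) ht)
  have hsign : (∀ t, A ≤ t → 0 < x t) ∨ (∀ t, A ≤ t → x t < 0) := by
    rcases lt_or_gt_of_ne (hAne A le_rfl) with hneg | hpos
    · right; intro t ht
      by_contra hle
      push_neg at hle
      have hpos' : 0 < x t := lt_of_le_of_ne hle (Ne.symm (hAne t ht))
      have hm : (0:ℝ) ∈ Set.Icc (x A) (x t) := ⟨hneg.le, hpos'.le⟩
      obtain ⟨s, hs, hxs⟩ := intermediate_value_Icc ht hx_cont.continuousOn hm
      exact hAne s hs.1 hxs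
    · left; intro t ht
      by_contra hle
      push_neg at hle
      have hneg' : x t < 0 := lt_of_le_of_ne hle (hAne t ht)
      have hm : (0:ℝ) ∈ Set.Icc (x t) (x A) := ⟨hneg'.le, hpos.le⟩
      obtain ⟨s, hs, hxs⟩ := intermediate_value_Icc' ht hx_cont.continuousOn hm
      exact hAne s hs.1 hxs
  rcases hsign with hpos | hneg
  · exact aux_no_pos_sol t0 p τ hp_cont hp_nonneg hτ_cont hτ_le hτ_tendsto σ
      hσ_mono hσ_ge hσ_le hlimsup x hx_cont A hAt0 hpos hsolA
  · refine aux_no_pos_sol t0 p τ hp_cont hp_nonneg hτ_cont hτ_le hτ_tendsto σ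
      hσ_mono hσ_ge hσ_le hlimsup (fun y => -x y) hx_cont.neg A hAt0
      (fun t ht => neg_pos.mpr (hneg t ht)) ?_
    intro t ht
    have h := (hsolA t ht).neg
    refine h.congr_deriv ?_
    beta_reduce
    ring
end

section
/- Suppose each τ_i is non-decreasing and either (a) limsup_{t→∞} ∏_{j=1}^m [ ∏_{i=1}^m ∫_{τ_j(t)}^{t} p_i(s) · exp( ∫_{τ_i(s)}^{τ_i(t)} ∑_{k=1}^m p_k(ξ) · exp( ∫_{τ_k(ξ)}^{ξ} ∑_{l=1}^m p_l(u) du ) dξ ) ds ]^{1/m} > 1/m^m, or (b) for each i, liminf_{t→∞} ∫_{τ_i(t)}^{t} p_i(s) ds = q_i > 0, the equation e^{q_i λ} = λ has a real root with smallest root λ_i*, and limsup_{ε→0+} ( limsup_{t→∞} ∏_{j=1}^m [ ∏_{i=1}^m ∫_{τ_j(t)}^{t} p_i(s) · exp( ∫_{τ_i(s)}^{τ_i(t)} ∑_{k=1}^m (λ_k* − ε) p_k(ξ) dξ ) ds ]^{1/m} ) > 1/m^m. Then every solution of the equation x'(t) + ∑_{i=1}^m p_i(t) x(τ_i(t)) =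 0 is oscillatory. -/
open Real Filter MeasureTheory Set

lemma aux_freq_of_limsup_gt {α : Type*} {f : Filter α} {u : α → ℝ} {c : ℝ} (hc : 0 < c)
    (h : c < Filter.limsup u f) : ∃ᶠ x in f, c < u x := by
  by_contra hcon
  rw [Filter.not_frequently] at hcon
  have hc' : ∀ᶠ x in f, u x ≤ c := hcon.mono fun x hx => not_lt.1 hx
  have hmem : c ∈ {a | ∀ᶠ x in f, u x ≤ a} := hc'
  rw [Filter.limsup_eq] at h
  by_cases hb : BddBelow {a : ℝ | ∀ᶠ x in f, u x ≤ a}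
  · exact absurd (csInf_le hb hmem) (not_le.2 h)
  · rw [Real.sInf_of_not_bddBelow hb] at h
    exact absurd h (not_lt.2 hc.le)

lemma aux_ev_of_liminf {u : ℝ → ℝ} {q c : ℝ} (h : Filter.liminf u atTop = q) (hq : 0 < q)
    (hc : c < q) : ∀ᶠ t in atTop, c < u t := by
  by_contra hcon
  have hS : {a : ℝ | ∀ᶠ t in atTop, a ≤ u t} ⊆ Set.Iic c := by
    intro a ha
    by_contra hac
    rw [Set.mem_Iic, not_le] at hac
    exact hcon (ha.mono fun t ht => lt_of_lt_of_le hac ht)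
  rw [Filter.liminf_eq] at h
  rcases Set.eq_empty_or_nonempty {a : ℝ | ∀ᶠ t in atTop, a ≤ u t} with he | hne
  · rw [he, Real.sSup_empty] at h
    exact absurd h.symm hq.ne'
  · have h2 := csSup_le hne fun a ha => hS ha
    rw [h] at h2
    exact absurd (lt_of_le_of_lt h2 hc) (lt_irrefl _)

lemma aux_exp_rep (g f : ℝ → ℝ) (A a b : ℝ) (hA : A < a) (hab : a ≤ b)
    (hg : ContinuousOn g (Set.Ioi A))
    (hf : ∀ t, A < t → HasDerivAt f (-(g t * f t)) t) :
    f a = f b * Real.exp (∫ ξ in a..b, g ξ) := by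
  set φ : ℝ → ℝ := fun t => f t * Real.exp (∫ ξ in a..t, g ξ) with hφ
  have hsub : ∀ t, a ≤ t → t ≤ b → Set.uIcc a t ⊆ Set.Ioi A := by
    intro t hat htb
    rw [Set.uIcc_of_le hat]
    exact fun z hz => lt_of_lt_of_le hA hz.1
  have hderiv : ∀ t, a ≤ t → t ≤ b → HasDerivAt φ 0 t := by
    intro t hat htb
    have htA : A < t := lt_of_lt_of_le hA hat
    have hint : IntervalIntegrable g volume a t :=
      (hg.mono (hsub t hat htb)).intervalIntegrable
    have hmeas : StronglyMeasurableAtFilter g (nhds t) volume :=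
      ContinuousOn.stronglyMeasurableAtFilter isOpen_Ioi hg t htA
    have hcont : ContinuousAt g t :=
      (hg t htA).continuousAt (Ioi_mem_nhds htA)
    have hF : HasDerivAt (fun u => ∫ ξ in a..u, g ξ) (g t) t :=
      intervalIntegral.integral_hasDerivAt_right hint hmeas hcont
    have hE : HasDerivAt (fun u => Real.exp (∫ ξ in a..u, g ξ))
        (Real.exp (∫ ξ in a..t, g ξ) * g t) t := hF.exp
    have : HasDerivAt (fun u => f u * Real.exp (∫ ξ in a..u, g ξ))
        (-(g t * f t) * Real.exp (∫ ξ in a..t, g ξ) + f t * (Real.exp (∫ ξ in a..t, g ξ) * g t)) t :=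
      (hf t htA).mul hE
    convert this using 1
    ring
  have hconst : ∀ t ∈ Set.Icc a b, φ t = φ a := by
    apply constant_of_has_deriv_right_zero
    · intro t ht
      exact ((hderiv t ht.1 ht.2).continuousAt).continuousWithinAt
    · intro t ht
      exact (hderiv t ht.1 ht.2.le).hasDerivWithinAt
  have hb' := hconst b ⟨hab, le_refl b⟩
  have ha' : φ a = f a := by
    simp [hφ, intervalIntegral.integral_same]
  rw [ha'] at hb'
  exact hb'.symm
open Real Filter

/-- iteration sequence `a 0 = 1`, `a (n+1) = exp (θ * a n)` -/
noncomputable def oscAux : ℕ → ℝ → ℝ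
  | 0, _ => 1
  | n + 1, θ => Real.exp (θ * oscAux n θ)

lemma oscAux_pos (n : ℕ) (θ : ℝ) : 0 < oscAux n θ := by
  cases n with
  | zero => rw [oscAux]; norm_num
  | succ n => exact Real.exp_pos _

lemma oscAux_le (q L θ : ℝ) (hL : Real.exp (q * L) = L) (hθ0 : 0 ≤ θ) (hθq : θ ≤ q) :
    ∀ n, oscAux n θ ≤ L := by
  have hL1 : 1 ≤ L := by
    rw [← hL]
    have hL0 : 0 < L := by rw [← hL]; exact Real.exp_pos _
    have : 0 ≤ q * L := mul_nonneg (hθ0.trans hθq) hL0.le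
    calc (1:ℝ) = Real.exp 0 := by simp
    _ ≤ Real.exp (q * L) := Real.exp_le_exp.2 this
  intro n
  induction n with
  | zero => simpa [oscAux] using hL1
  | succ n ih =>
    rw [oscAux, ← hL]
    apply Real.exp_le_exp.2
    exact mul_le_mul hθq ih (oscAux_pos n θ).le ((hθ0.trans hθq))

lemma oscAux_mono (θ : ℝ) (hθ : 0 ≤ θ) : Monotone (fun n => oscAux n θ) := by
  apply monotone_nat_of_le_succ
  intro n
  induction n with
  | zero =>
    show (1:ℝ) ≤ Real.exp (θ * 1)
    calc (1:ℝ) = Real.exp 0 := by simp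
    _ ≤ _ := Real.exp_le_exp.2 (by nlinarith)
  | succ n ih =>
    show oscAux (n+1) θ ≤ oscAux (n+1+1) θ
    rw [oscAux, oscAux]
    exact Real.exp_le_exp.2 (mul_le_mul_of_nonneg_left ih hθ)

lemma oscAux_continuous (n : ℕ) : Continuous (fun θ => oscAux n θ) := by
  induction n with
  | zero => simpa [oscAux] using continuous_const
  | succ n ih =>
    show Continuous fun θ => Real.exp (θ * oscAux n θ)
    exact (continuous_id.mul ih).rexp

lemma oscAux_tendsto (q L : ℝ) (hq : 0 < q) (hL : Real.exp (q * L) = L)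
    (hmin : ∀ lam, Real.exp (q * lam) = lam → L ≤ lam) :
    Filter.Tendsto (fun n => oscAux n q) Filter.atTop (nhds L) := by
  have hbdd : BddAbove (Set.range fun n => oscAux n q) := by
    refine ⟨L, ?_⟩
    rintro _ ⟨n, rfl⟩
    exact oscAux_le q L q hL hq.le le_rfl n
  have hmono := oscAux_mono q hq.le
  have htend := tendsto_atTop_ciSup hmono hbdd
  set S := ⨆ n, oscAux n q with hS
  -- S is a fixed point
  have htend' : Filter.Tendsto (fun n => oscAux (n+1) q) Filter.atTop (nhds S) :=
    htend.comp (Filter.tendsto_add_atTop_nat 1)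
  have htend'' : Filter.Tendsto (fun n => Real.exp (q * oscAux n q)) Filter.atTop
      (nhds (Real.exp (q * S))) :=
    (Real.continuous_exp.tendsto _).comp ((continuous_const.mul continuous_id).tendsto S |>.comp htend)
  have hfix : Real.exp (q * S) = S := by
    have : Filter.Tendsto (fun n => oscAux (n+1) q) Filter.atTop (nhds (Real.exp (q * S))) := by
      simpa [oscAux] using htend''
    exact tendsto_nhds_unique this htend'
  have hSL : S = L := by
    apply le_antisymm
    · exact ciSup_le fun n => oscAux_le q L q hL hq.le le_rfl n
    · exact hmin S hfix
  rwa [hSL] at htend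

lemma aux_uIcc_subset_Ioi {A a b : ℝ} (ha : A < a) (hb : A < b) :
    Set.uIcc a b ⊆ Set.Ioi A := by
  intro z hz
  rcases Set.mem_uIcc.1 hz with ⟨h1, _⟩ | ⟨h1, _⟩ <;> [exact lt_of_lt_of_le ha h1;
    exact lt_of_lt_of_le hb h1]

lemma aux_uIcc_subset_Ici {A a b : ℝ} (ha : A ≤ a) (hb : A ≤ b) :
    Set.uIcc a b ⊆ Set.Ici A := by
  intro z hz
  rcases Set.mem_uIcc.1 hz with ⟨h1, _⟩ | ⟨h1, _⟩ <;> [exact le_trans ha h1;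
    exact le_trans hb h1]

lemma aux_primitive_contOn (h : ℝ → ℝ) (A c : ℝ) (hc : A < c)
    (hh : ContinuousOn h (Set.Ioi A)) :
    ContinuousOn (fun u => ∫ ξ in c..u, h ξ) (Set.Ioi A) := by
  intro u hu
  have hd : HasDerivAt (fun u => ∫ ξ in c..u, h ξ) (h u) u := by
    apply intervalIntegral.integral_hasDerivAt_right
    · exact (hh.mono (aux_uIcc_subset_Ioi hc hu)).intervalIntegrable
    · exact ContinuousOn.stronglyMeasurableAtFilter isOpen_Ioi hh u hu
    · exact (hh u hu).continuousAt (Ioi_mem_nhds hu)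
  exact hd.continuousAt.continuousWithinAt

lemma aux_integral_split (h : ℝ → ℝ) (A c a b : ℝ) (hc : A < c) (ha : A < a) (hb : A < b)
    (hh : ContinuousOn h (Set.Ioi A)) :
    ∫ ξ in a..b, h ξ = (∫ ξ in c..b, h ξ) - (∫ ξ in c..a, h ξ) :=
  (intervalIntegral.integral_interval_sub_left
    ((hh.mono (aux_uIcc_subset_Ioi hc hb)).intervalIntegrable)
    ((hh.mono (aux_uIcc_subset_Ioi hc ha)).intervalIntegrable)).symm

/-- **Theorem 3.3.** Suppose each `τ i` is non-decreasing and either condition (a)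
or condition (b) below holds. Then every solution of
`x'(t) + ∑ i, p i t * x (τ i t) = 0` is oscillatory. -/
theorem oscillation_several_monotone_args
    (m : ℕ) (hm : 1 ≤ m) (t0 : ℝ)
    (p τ : Fin m → ℝ → ℝ)
    (hp_cont : ∀ i, ContinuousOn (p i) (Set.Ici t0))
    (hp_nonneg : ∀ i t, t0 ≤ t → 0 ≤ p i t)
    (hτ_cont : ∀ i, ContinuousOn (τ i) (Set.Ici t0))
    (hτ_nonneg : ∀ i t, t0 ≤ t → 0 ≤ τ i t)
    (hτ_le : ∀ i t, t0 ≤ t → τ i t ≤ t)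
    (hτ_tendsto : ∀ i, Tendsto (τ i) atTop atTop)
    (hτ_mono : ∀ i, MonotoneOn (τ i) (Set.Ici t0))
    (hyp :
      (Filter.limsup (fun t : ℝ =>
        ∏ j : Fin m,
          (∏ i : Fin m,
            ∫ s in τ j t..t, p i s *
              Real.exp (∫ ξ in τ i s..τ i t,
                ∑ k : Fin m, p k ξ *
                  Real.exp (∫ u in τ k ξ..ξ, ∑ l : Fin m, p l u))) ^ ((1 : ℝ) / m))
        atTop > 1 / (m : ℝ) ^ m) ∨
      (∃ (q : Fin m → ℝ) (lamStar : Fin m → ℝ),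
        (∀ i, 0 < q i) ∧
        (∀ i, Filter.liminf (fun t : ℝ => ∫ s in τ i t..t, p i s) atTop = q i) ∧
        (∀ i, Real.exp (q i * lamStar i) = lamStar i) ∧
        (∀ i lam, Real.exp (q i * lam) = lam → lamStar i ≤ lam) ∧
        Filter.limsup (fun ε : ℝ =>
          Filter.limsup (fun t : ℝ =>
            ∏ j : Fin m,
              (∏ i : Fin m,
                ∫ s in τ j t..t, p i s *
                  Real.exp (∫ ξ in τ i s..τ i t,
                    ∑ k : Fin m, (lamStar k - ε) * p k ξ)) ^ ((1 : ℝ) / m))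
            atTop)
          (nhdsWithin 0 (Set.Ioi 0)) > 1 / (m : ℝ) ^ m))
    (x : ℝ → ℝ) (hx_cont : Continuous x)
    (hx_sol : ∃ T, t0 ≤ T ∧ ∀ t, T ≤ t →
      HasDerivAt x (-(∑ i : Fin m, p i t * x (τ i t))) t) :
    ∀ T : ℝ, ∃ t, T ≤ t ∧ x t = 0 := by
  intro T
  by_contra hcon
  push_neg at hcon
  obtain ⟨T0, hT0, hsol0⟩ := hx_sol
  have hm0 : (0:ℝ) < (m : ℝ) := by exact_mod_cast Nat.lt_of_lt_of_le Nat.zero_lt_one hm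
  have hmne : (m:ℝ) ≠ 0 := hm0.ne'
  have hcpos : (0:ℝ) < 1 / (m : ℝ) ^ m := one_div_pos.2 (pow_pos hm0 m)
  -- x never vanishes on [T1', ∞)
  set T1' : ℝ := max T T0 with hT1'def
  have hne : ∀ t, T1' ≤ t → x t ≠ 0 := fun t ht => hcon t ((le_max_left T T0).trans ht)
  have hsol1 : ∀ t, T1' ≤ t → HasDerivAt x (-(∑ i : Fin m, p i t * x (τ i t))) t :=
    fun t ht => hsol0 t ((le_max_right T T0).trans ht)
  -- sign constancy
  have hsign : (∀ t, T1' ≤ t → 0 < x t) ∨ (∀ t, T1' ≤ t → x t < 0) := by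
    rcases (hne T1' le_rfl).lt_or_gt with hneg | hpos
    · right; intro t ht
      rcases (hne t ht).lt_or_gt with h | h
      · exact h
      · exfalso
        have h0 : (0:ℝ) ∈ Set.Icc (x T1') (x t) := ⟨hneg.le, h.le⟩
        obtain ⟨z, hz, hz0⟩ := intermediate_value_Icc ht hx_cont.continuousOn h0
        exact hne z hz.1 hz0
    · left; intro t ht
      rcases (hne t ht).lt_or_gt with h | h
      · exfalso
        have h0 : (0:ℝ) ∈ Set.Icc (x t) (x T1') := ⟨h.le, hpos.le⟩
        obtain ⟨z, hz, hz0⟩ := intermediate_value_Icc' ht hx_cont.continuousOn h0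
        exact hne z hz.1 hz0
      · exact h
  -- replace x by a positive solution y
  obtain ⟨y, hy_cont, hy_pos1, hy_sol1⟩ :
      ∃ y : ℝ → ℝ, Continuous y ∧ (∀ t, T1' ≤ t → 0 < y t) ∧
        (∀ t, T1' ≤ t → HasDerivAt y (-(∑ i : Fin m, p i t * y (τ i t))) t) := by
    rcases hsign with hs | hs
    · exact ⟨x, hx_cont, hs, hsol1⟩
    · refine ⟨fun t => -(x t), hx_cont.neg, fun t ht => by simpa using hs t ht,
        fun t ht => ?_⟩
      have hd : HasDerivAt (fun t => -(x t)) (-(-(∑ i : Fin m, p i t * x (τ i t)))) t :=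
        (hsol1 t ht).neg
      convert hd using 1
      simp [mul_neg, Finset.sum_neg_distrib]
  -- shift threshold above t0
  set T1 : ℝ := max T1' (t0 + 1) with hT1def
  have ht0T1 : t0 < T1 := lt_of_lt_of_le (lt_add_one t0) (le_max_right _ _)
  have hT1t0 : t0 ≤ T1 := ht0T1.le
  have hy_pos : ∀ t, T1 ≤ t → 0 < y t := fun t ht => hy_pos1 t ((le_max_left _ _).trans ht)
  have hy_sol : ∀ t, T1 ≤ t → HasDerivAt y (-(∑ i : Fin m, p i t * y (τ i t))) t :=
    fun t ht => hy_sol1 t ((le_max_left _ _).trans ht)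
  -- threshold extractor
  have hthr : ∀ C : ℝ, ∃ S : ℝ, C ≤ S ∧ T1 ≤ S ∧ ∀ t, S ≤ t → ∀ i, C ≤ τ i t := by
    intro C
    have h1 : ∀ᶠ t in atTop, ∀ i : Fin m, C ≤ τ i t :=
      eventually_all.2 fun i => (hτ_tendsto i).eventually_ge_atTop C
    obtain ⟨S0, hS0⟩ := eventually_atTop.1 h1
    exact ⟨max S0 (max C T1), le_max_of_le_right (le_max_left _ _),
      le_max_of_le_right (le_max_right _ _),
      fun t ht i => hS0 t ((le_max_left _ _).trans ht) i⟩
  obtain ⟨T2, hT2a, hT2b, hT2⟩ := hthr T1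
  have hT2t0 : t0 < T2 := lt_of_lt_of_le ht0T1 hT2b
  -- y is antitone on [T2, ∞)
  have hanti : AntitoneOn y (Set.Ici T2) := by
    apply antitoneOn_of_deriv_nonpos (convex_Ici T2) hy_cont.continuousOn
    · intro t ht
      rw [interior_Ici] at ht
      exact ((hy_sol t (hT2b.trans ht.le)).differentiableAt).differentiableWithinAt
    · intro t ht
      rw [interior_Ici] at ht
      have ht1 : T1 ≤ t := hT2b.trans ht.le
      rw [(hy_sol t ht1).deriv]
      rw [neg_nonpos]
      apply Finset.sum_nonneg
      intro i _
      exact mul_nonneg (hp_nonneg i t (hT1t0.trans ht1))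
        (hy_pos _ (hT2 t ht.le i)).le
  obtain ⟨T3, hT3a, hT3b, hT3⟩ := hthr (T2 + 1)
  have hT3T2 : T2 < T3 := lt_of_lt_of_le (lt_add_one T2) hT3a
  have hT3T1 : T1 ≤ T3 := hT2b.trans hT3T2.le
  have hT3t0 : t0 < T3 := lt_of_lt_of_le ht0T1 hT3T1
  have hposT3 : ∀ ξ, T3 ≤ ξ → 0 < y ξ := fun ξ h => hy_pos ξ (hT3T1.trans h)
  have hposτ : ∀ (i : Fin m) ξ, T3 ≤ ξ → 0 < y (τ i ξ) := by
    intro i ξ hξ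
    have := hT3 ξ hξ i
    exact hy_pos _ (hT2b.trans (by linarith))
  -- the logarithmic derivative function
  set g : ℝ → ℝ := fun ξ => ∑ i : Fin m, p i ξ * (y (τ i ξ) / y ξ) with hg_def
  have hg_cont : ContinuousOn g (Set.Ioi T2) := by
    have hsub : Set.Ioi T2 ⊆ Set.Ici t0 := fun z hz => le_of_lt (lt_of_lt_of_le hT2t0 hz.le)
    apply continuousOn_finset_sum
    intro i _
    apply ContinuousOn.mul ((hp_cont i).mono hsub)
    apply ContinuousOn.div
    · exact hy_cont.comp_continuousOn ((hτ_cont i).mono hsub)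
    · exact hy_cont.continuousOn
    · intro ξ hξ
      exact (hy_pos ξ (hT2b.trans hξ.le)).ne'
  -- exponential representation of y
  have hrep : ∀ a b, T2 < a → a ≤ b → y a = y b * Real.exp (∫ ξ in a..b, g ξ) := by
    intro a b ha hab
    apply aux_exp_rep g y T2 a b ha hab hg_cont
    intro t ht
    have ht1 : T1 ≤ t := hT2b.trans ht.le
    have hyt : y t ≠ 0 := (hy_pos t ht1).ne'
    have heq : g t * y t = ∑ i : Fin m, p i t * y (τ i t) := by
      rw [hg_def, Finset.sum_mul]
      apply Finset.sum_congr rfl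
      intro i _
      field_simp
    rw [heq]
    exact hy_sol t ht1
  -- basic ratio bounds
  have hratio1 : ∀ (i : Fin m) (ξ : ℝ), T3 ≤ ξ → y ξ ≤ y (τ i ξ) := by
    intro i ξ hξ
    have hξ0 : t0 ≤ ξ := (hT3t0.trans_le hξ).le
    have hτξ : T2 ≤ τ i ξ := by have := hT3 ξ hξ i; linarith
    exact hanti hτξ (Set.mem_Ici.2 (hT3T2.le.trans hξ)) (hτ_le i ξ hξ0)
  have hg_ge_p : ∀ ξ, T3 ≤ ξ → (∑ i : Fin m, p i ξ) ≤ g ξ := by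
    intro ξ hξ
    apply Finset.sum_le_sum
    intro i _
    have hp0 := hp_nonneg i ξ ((hT3t0.trans_le hξ).le)
    have h1 : 1 ≤ y (τ i ξ) / y ξ := (one_le_div (hposT3 ξ hξ)).2 (hratio1 i ξ hξ)
    calc p i ξ = p i ξ * 1 := (mul_one _).symm
    _ ≤ p i ξ * (y (τ i ξ) / y ξ) := mul_le_mul_of_nonneg_left h1 hp0
  have hg_ge_single : ∀ (k : Fin m) ξ, T3 ≤ ξ → p k ξ * (y (τ k ξ) / y ξ) ≤ g ξ := by
    intro k ξ hξ
    exact Finset.single_le_sum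
      (f := fun i => p i ξ * (y (τ i ξ) / y ξ))
      (fun i _ => mul_nonneg (hp_nonneg i ξ ((hT3t0.trans_le hξ).le))
        (div_nonneg (hposτ i ξ hξ).le (hposT3 ξ hξ).le))
      (Finset.mem_univ k)
  -- KEY estimate: for any comparison function h below g, the product expression
  -- is eventually at most 1/m^m
  have hkey : ∀ (h : ℝ → ℝ) (C : ℝ), T3 ≤ C → ContinuousOn h (Set.Ioi C) →
      (∀ ξ, C < ξ → h ξ ≤ g ξ) →
      ∀ᶠ t in atTop, ∏ j : Fin m, (∏ i : Fin m,
          ∫ s in τ j t..t, p i s * Real.exp (∫ ξ in τ i s..τ i t, h ξ)) ^ ((1:ℝ)/m)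
        ≤ 1 / (m : ℝ) ^ m := by
    intro h C hC hh_cont hh_le
    have hCt0 : t0 < C := lt_of_lt_of_le hT3t0 hC
    have hCT2 : T2 < C := lt_of_lt_of_le hT3T2 hC
    obtain ⟨D, hDa, hDb, hD⟩ := hthr (C + 1)
    obtain ⟨E, hEa, hEb, hE⟩ := hthr (max D T3)
    filter_upwards [eventually_ge_atTop (max E T3)] with t htE'
    have htE : E ≤ t := le_trans (le_max_left _ _) htE'
    have htT3 : T3 ≤ t := le_trans (le_max_right _ _) htE'
    have ht0 : t0 ≤ t := hT3t0.le.trans htT3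
    have hτjD : ∀ j : Fin m, D ≤ τ j t := fun j => le_trans (le_max_left D T3) (hE t htE j)
    have hτjT3 : ∀ j : Fin m, T3 ≤ τ j t := fun j => le_trans (le_max_right D T3) (hE t htE j)
    have hτjC : ∀ j : Fin m, C < τ j t :=
      fun j => lt_of_lt_of_le (lt_add_one C) (hDa.trans (hτjD j))
    have hτjt : ∀ j : Fin m, τ j t ≤ t := fun j => hτ_le j t ht0
    have hτjt0 : ∀ j : Fin m, t0 ≤ τ j t := fun j => (hCt0.trans (hτjC j)).le
    have hyτ_pos : ∀ i : Fin m, 0 < y (τ i t) := fun i => hposT3 _ (hτjT3 i)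
    -- main estimate per j
    have hstep : ∀ j : Fin m, ∑ i : Fin m, y (τ i t) *
        (∫ s in τ j t..t, p i s * Real.exp (∫ ξ in τ i s..τ i t, h ξ)) ≤ y (τ j t) := by
      intro j
      have hIccsub : Set.Icc (τ j t) t ⊆ Set.Ici t0 := fun z hz => le_trans (hτjt0 j) hz.1
      have hH := aux_primitive_contOn h C (C + 1) (lt_add_one C) hh_cont
      have hτiC : ∀ (i : Fin m), ∀ s ∈ Set.Icc (τ j t) t, C < τ i s := by
        intro i s hs
        have h1 : C + 1 ≤ τ i s := hD s (le_trans (hτjD j) hs.1) i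
        linarith
      have hconthi : ∀ i : Fin m,
          ContinuousOn (fun s => ∫ ξ in τ i s..τ i t, h ξ) (Set.Icc (τ j t) t) := by
        intro i
        have hmapsTo : Set.MapsTo (τ i) (Set.Icc (τ j t) t) (Set.Ioi C) :=
          fun s hs => hτiC i s hs
        have hcomp : ContinuousOn
            (fun s => (∫ ξ in (C+1)..(τ i t), h ξ) - ∫ ξ in (C+1)..(τ i s), h ξ)
            (Set.Icc (τ j t) t) :=
          continuousOn_const.sub (hH.comp ((hτ_cont i).mono hIccsub) hmapsTo)
        apply ContinuousOn.congr hcomp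
        intro s hs
        exact aux_integral_split h C (C+1) (τ i s) (τ i t) (lt_add_one C)
          (hτiC i s hs) (hτjC i) hh_cont
      have hf3 : ∀ i : Fin m, ∀ s ∈ Set.Icc (τ j t) t,
          y (τ i t) * Real.exp (∫ ξ in τ i s..τ i t, h ξ) ≤ y (τ i s) := by
        intro i s hs
        have hst0 : t0 ≤ s := hIccsub hs
        have hτisC : C + 1 ≤ τ i s := hD s (le_trans (hτjD j) hs.1) i
        have hτisT2 : T2 < τ i s := by linarith
        have hab : τ i s ≤ τ i t := hτ_mono i (Set.mem_Ici.2 hst0) (Set.mem_Ici.2 ht0) hs.2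
        have hrepi := hrep (τ i s) (τ i t) hτisT2 hab
        have hIcc2 : Set.Icc (τ i s) (τ i t) ⊆ Set.Ioi C :=
          fun z hz => lt_of_lt_of_le (by linarith : C < τ i s) hz.1
        have hIcc2' : Set.Icc (τ i s) (τ i t) ⊆ Set.Ioi T2 :=
          fun z hz => lt_of_lt_of_le hτisT2 hz.1
        have hintle : (∫ ξ in τ i s..τ i t, h ξ) ≤ ∫ ξ in τ i s..τ i t, g ξ := by
          apply intervalIntegral.integral_mono_on hab
          · apply (hh_cont.mono ?_).intervalIntegrable
            rw [Set.uIcc_of_le hab]; exact hIcc2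
          · apply (hg_cont.mono ?_).intervalIntegrable
            rw [Set.uIcc_of_le hab]; exact hIcc2'
          · intro z hz
            exact hh_le z (hIcc2 hz)
        rw [hrepi]
        exact mul_le_mul_of_nonneg_left (Real.exp_le_exp.2 hintle) (hyτ_pos i).le
      have hint2 : ∀ i : Fin m,
          IntervalIntegrable (fun s => p i s * y (τ i s)) volume (τ j t) t := by
        intro i
        apply ContinuousOn.intervalIntegrable
        rw [Set.uIcc_of_le (hτjt j)]
        exact ((hp_cont i).mono hIccsub).mul
          (hy_cont.comp_continuousOn ((hτ_cont i).mono hIccsub))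
      have hf4 : ∀ i : Fin m, y (τ i t) *
          (∫ s in τ j t..t, p i s * Real.exp (∫ ξ in τ i s..τ i t, h ξ))
          ≤ ∫ s in τ j t..t, p i s * y (τ i s) := by
        intro i
        rw [← intervalIntegral.integral_const_mul]
        apply intervalIntegral.integral_mono_on (hτjt j)
        · apply ContinuousOn.intervalIntegrable
          rw [Set.uIcc_of_le (hτjt j)]
          exact continuousOn_const.mul (((hp_cont i).mono hIccsub).mul
            (Real.continuous_exp.comp_continuousOn (hconthi i)))
        · exact hint2 i
        · intro s hs
          have hps : 0 ≤ p i s := hp_nonneg i s (hIccsub hs)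
          calc y (τ i t) * (p i s * Real.exp (∫ ξ in τ i s..τ i t, h ξ))
              = p i s * (y (τ i t) * Real.exp (∫ ξ in τ i s..τ i t, h ξ)) := by ring
            _ ≤ p i s * y (τ i s) := mul_le_mul_of_nonneg_left (hf3 i s hs) hps
      have hf5 : (∫ s in τ j t..t, ∑ i : Fin m, p i s * y (τ i s)) = y (τ j t) - y t := by
        have hFTC : (∫ s in τ j t..t, -(∑ i : Fin m, p i s * y (τ i s))) = y t - y (τ j t) := by
          apply intervalIntegral.integral_eq_sub_of_hasDerivAt
          · intro s hs
            rw [Set.uIcc_of_le (hτjt j)] at hs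
            exact hy_sol s (le_trans (hT3T1.trans (hτjT3 j)) hs.1)
          · apply IntervalIntegrable.neg
            apply ContinuousOn.intervalIntegrable
            rw [Set.uIcc_of_le (hτjt j)]
            apply continuousOn_finset_sum
            intro i _
            exact ((hp_cont i).mono hIccsub).mul
              (hy_cont.comp_continuousOn ((hτ_cont i).mono hIccsub))
        rw [intervalIntegral.integral_neg] at hFTC
        linarith
      calc ∑ i : Fin m, y (τ i t) *
            (∫ s in τ j t..t, p i s * Real.exp (∫ ξ in τ i s..τ i t, h ξ))
          ≤ ∑ i : Fin m, ∫ s in τ j t..t, p i s * y (τ i s) :=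
            Finset.sum_le_sum fun i _ => hf4 i
        _ = ∫ s in τ j t..t, ∑ i : Fin m, p i s * y (τ i s) :=
            (intervalIntegral.integral_finset_sum (fun i _ => hint2 i)).symm
        _ = y (τ j t) - y t := hf5
        _ ≤ y (τ j t) := by linarith [hy_pos t (hT3T1.trans htT3)]
    -- nonnegativity of the inner integrals
    have hInn : ∀ i j : Fin m,
        0 ≤ ∫ s in τ j t..t, p i s * Real.exp (∫ ξ in τ i s..τ i t, h ξ) := by
      intro i j
      apply intervalIntegral.integral_nonneg (hτjt j)
      intro u hu
      exact mul_nonneg (hp_nonneg i u (le_trans (hτjt0 j) hu.1)) (Real.exp_pos _).le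
    -- AM-GM
    have hAMGM : ∀ j : Fin m,
        (m:ℝ) * ((∏ i : Fin m, y (τ i t) ^ ((1:ℝ)/m)) *
          (∏ i : Fin m, ∫ s in τ j t..t, p i s *
            Real.exp (∫ ξ in τ i s..τ i t, h ξ)) ^ ((1:ℝ)/m)) ≤ y (τ j t) := by
      intro j
      have hz : ∀ i ∈ Finset.univ (α := Fin m), 0 ≤ y (τ i t) *
          ∫ s in τ j t..t, p i s * Real.exp (∫ ξ in τ i s..τ i t, h ξ) :=
        fun i _ => mul_nonneg (hyτ_pos i).le (hInn i j)
      have hw : ∀ i ∈ Finset.univ (α := Fin m), (0:ℝ) ≤ 1/(m:ℝ) := fun _ _ => by positivity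
      have hw1 : ∑ _i : Fin m, (1:ℝ)/(m:ℝ) = 1 := by
        rw [Finset.sum_const, Finset.card_univ, Fintype.card_fin, nsmul_eq_mul]
        field_simp
      have hgm := Real.geom_mean_le_arith_mean_weighted Finset.univ (fun _ => (1:ℝ)/(m:ℝ))
        (fun i => y (τ i t) * ∫ s in τ j t..t, p i s *
          Real.exp (∫ ξ in τ i s..τ i t, h ξ)) hw hw1 hz
      have hL : (∏ i : Fin m, (y (τ i t) * ∫ s in τ j t..t, p i s *
            Real.exp (∫ ξ in τ i s..τ i t, h ξ)) ^ ((1:ℝ)/(m:ℝ)))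
          = (∏ i : Fin m, y (τ i t) ^ ((1:ℝ)/(m:ℝ))) *
            (∏ i : Fin m, ∫ s in τ j t..t, p i s *
              Real.exp (∫ ξ in τ i s..τ i t, h ξ)) ^ ((1:ℝ)/(m:ℝ)) := by
        rw [← Real.finset_prod_rpow Finset.univ _ (fun i _ => hInn i j) _,
          ← Finset.prod_mul_distrib]
        exact Finset.prod_congr rfl fun i _ => Real.mul_rpow (hyτ_pos i).le (hInn i j)
      have hR : ∑ i : Fin m, (1:ℝ)/(m:ℝ) * (y (τ i t) * ∫ s in τ j t..t, p i s *
            Real.exp (∫ ξ in τ i s..τ i t, h ξ)) ≤ 1/(m:ℝ) * y (τ j t) := by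
        rw [← Finset.mul_sum]
        exact mul_le_mul_of_nonneg_left (hstep j) (by positivity)
      rw [hL] at hgm
      have hfin := le_trans hgm hR
      calc (m:ℝ) * ((∏ i : Fin m, y (τ i t) ^ ((1:ℝ)/m)) *
            (∏ i : Fin m, ∫ s in τ j t..t, p i s *
              Real.exp (∫ ξ in τ i s..τ i t, h ξ)) ^ ((1:ℝ)/m))
          ≤ (m:ℝ) * (1/(m:ℝ) * y (τ j t)) := mul_le_mul_of_nonneg_left hfin hm0.le
        _ = y (τ j t) := by field_simp
    -- take the product over j
    have hP0 : (0:ℝ) ≤ ∏ i : Fin m, y (τ i t) ^ ((1:ℝ)/m) :=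
      Finset.prod_nonneg fun i _ => Real.rpow_nonneg (hyτ_pos i).le _
    have hQ0 : ∀ j : Fin m, (0:ℝ) ≤ (∏ i : Fin m, ∫ s in τ j t..t, p i s *
        Real.exp (∫ ξ in τ i s..τ i t, h ξ)) ^ ((1:ℝ)/m) :=
      fun j => Real.rpow_nonneg (Finset.prod_nonneg fun i _ => hInn i j) _
    have hprod : ∏ j : Fin m, ((m:ℝ) * ((∏ i : Fin m, y (τ i t) ^ ((1:ℝ)/m)) *
        (∏ i : Fin m, ∫ s in τ j t..t, p i s *
          Real.exp (∫ ξ in τ i s..τ i t, h ξ)) ^ ((1:ℝ)/m)))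
        ≤ ∏ j : Fin m, y (τ j t) :=
      Finset.prod_le_prod
        (fun j _ => mul_nonneg hm0.le (mul_nonneg hP0 (hQ0 j)))
        (fun j _ => hAMGM j)
    have hPm : (∏ i : Fin m, y (τ i t) ^ ((1:ℝ)/m)) ^ m = ∏ i : Fin m, y (τ i t) := by
      rw [← Finset.prod_pow]
      apply Finset.prod_congr rfl
      intro i _
      rw [← Real.rpow_natCast (y (τ i t) ^ ((1:ℝ)/m)) m, ← Real.rpow_mul (hyτ_pos i).le,
        one_div_mul_cancel hmne, Real.rpow_one]
    have hLHS : ∏ j : Fin m, ((m:ℝ) * ((∏ i : Fin m, y (τ i t) ^ ((1:ℝ)/m)) *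
        (∏ i : Fin m, ∫ s in τ j t..t, p i s *
          Real.exp (∫ ξ in τ i s..τ i t, h ξ)) ^ ((1:ℝ)/m)))
        = (m:ℝ)^m * (∏ i : Fin m, y (τ i t)) *
          ∏ j : Fin m, (∏ i : Fin m, ∫ s in τ j t..t, p i s *
            Real.exp (∫ ξ in τ i s..τ i t, h ξ)) ^ ((1:ℝ)/m) := by
      rw [Finset.prod_mul_distrib, Finset.prod_mul_distrib, Finset.prod_const,
        Finset.prod_const, Finset.card_univ, Fintype.card_fin, hPm]
      ring
    rw [hLHS] at hprod
    have hXpos : (0:ℝ) < ∏ j : Fin m, y (τ j t) := Finset.prod_pos fun j _ => hyτ_pos j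
    -- conclude
    have hmm : (0:ℝ) < (m:ℝ)^m := pow_pos hm0 m
    rw [le_div_iff₀ hmm]
    nlinarith [hprod, hXpos, Finset.prod_nonneg (fun j (_ : j ∈ Finset.univ (α := Fin m)) => hQ0 j)]
  rcases hyp with ha | hb
  · -- condition (a)
    obtain ⟨C, hCa, hCb, hCthr⟩ := hthr (T3 + 1)
    have hCT3 : T3 ≤ C := le_trans (le_of_lt (lt_add_one T3)) hCa
    have hCt0 : t0 < C := lt_of_lt_of_le hT3t0 hCT3
    have hh_le : ∀ ξ, C < ξ →
        (∑ k : Fin m, p k ξ * Real.exp (∫ u in τ k ξ..ξ, ∑ l : Fin m, p l u)) ≤ g ξ := by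
      intro ξ hξ
      have hξt0 : t0 ≤ ξ := (hCt0.trans hξ).le
      apply Finset.sum_le_sum
      intro k _
      have hτk : T3 + 1 ≤ τ k ξ := hCthr ξ hξ.le k
      have h2T : T2 < τ k ξ := by linarith
      have hτξ : τ k ξ ≤ ξ := hτ_le k ξ hξt0
      have hyξ : 0 < y ξ := hposT3 ξ (by linarith)
      have hrepk := hrep (τ k ξ) ξ h2T hτξ
      have hIccs : Set.Icc (τ k ξ) ξ ⊆ Set.Ici t0 := fun z hz =>
        le_trans (by linarith [hT3t0] : t0 ≤ τ k ξ) hz.1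
      have hintle : (∫ u in τ k ξ..ξ, ∑ l : Fin m, p l u) ≤ ∫ u in τ k ξ..ξ, g u := by
        apply intervalIntegral.integral_mono_on hτξ
        · apply ContinuousOn.intervalIntegrable
          rw [Set.uIcc_of_le hτξ]
          exact continuousOn_finset_sum _ fun l _ => (hp_cont l).mono hIccs
        · apply (hg_cont.mono ?_).intervalIntegrable
          rw [Set.uIcc_of_le hτξ]
          exact fun z hz => lt_of_lt_of_le h2T hz.1
        · intro z hz
          exact hg_ge_p z (le_trans (by linarith : T3 ≤ τ k ξ) hz.1)
      have hratio : Real.exp (∫ u in τ k ξ..ξ, ∑ l : Fin m, p l u) ≤ y (τ k ξ) / y ξ := by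
        rw [hrepk, mul_comm, mul_div_assoc, div_self hyξ.ne', mul_one]
        exact Real.exp_le_exp.2 hintle
      exact mul_le_mul_of_nonneg_left hratio (hp_nonneg k ξ hξt0)
    have hh_cont : ContinuousOn (fun ξ => ∑ k : Fin m, p k ξ *
        Real.exp (∫ u in τ k ξ..ξ, ∑ l : Fin m, p l u)) (Set.Ioi C) := by
      have hsub : Set.Ioi C ⊆ Set.Ici t0 := fun z hz => (hCt0.trans hz).le
      have hsumc : ContinuousOn (fun u => ∑ l : Fin m, p l u) (Set.Ioi t0) :=
        continuousOn_finset_sum _ fun l _ => (hp_cont l).mono (fun z hz => Set.mem_Ici.2 (le_of_lt hz))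
      have hPP := aux_primitive_contOn (fun u => ∑ l : Fin m, p l u) t0 (t0 + 1)
        (lt_add_one t0) hsumc
      apply continuousOn_finset_sum
      intro k _
      apply ContinuousOn.mul ((hp_cont k).mono hsub)
      apply Real.continuous_exp.comp_continuousOn
      have hτkt0 : ∀ ξ ∈ Set.Ioi C, t0 < τ k ξ := by
        intro ξ hξ
        have := hCthr ξ (le_of_lt hξ) k
        linarith [hT3t0]
      have hmapsTo : Set.MapsTo (τ k) (Set.Ioi C) (Set.Ioi t0) := fun ξ hξ => hτkt0 ξ hξ
      have hcomp : ContinuousOn (fun ξ => (∫ u in (t0+1)..ξ, ∑ l : Fin m, p l u) -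
          ∫ u in (t0+1)..(τ k ξ), ∑ l : Fin m, p l u) (Set.Ioi C) :=
        (hPP.mono (fun z hz => hCt0.trans hz)).sub
          (hPP.comp ((hτ_cont k).mono hsub) hmapsTo)
      apply ContinuousOn.congr hcomp
      intro ξ hξ
      exact aux_integral_split (fun u => ∑ l : Fin m, p l u) t0 (t0+1) (τ k ξ) ξ
        (lt_add_one t0) (hτkt0 ξ hξ) (hCt0.trans hξ) hsumc
    have hev := hkey (fun ξ => ∑ k : Fin m, p k ξ *
        Real.exp (∫ u in τ k ξ..ξ, ∑ l : Fin m, p l u)) C hCT3 hh_cont hh_le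
    have hfreq := aux_freq_of_limsup_gt hcpos ha
    obtain ⟨t, hle, hlt⟩ := (hev.and_frequently hfreq).exists
    exact absurd hlt (not_lt.2 hle)
  · obtain ⟨q, lamStar, hq_pos, hliminf, hroot, hminlam, hlimsup⟩ := hb
    have hfreqε := aux_freq_of_limsup_gt hcpos hlimsup
    have hmemε : ∀ᶠ ε in nhdsWithin 0 (Set.Ioi 0), ε ∈ Set.Ioi (0:ℝ) :=
      eventually_mem_nhdsWithin
    obtain ⟨ε, hGε, hε⟩ := (hfreqε.and_eventually hmemε).exists
    rw [Set.mem_Ioi] at hε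
    -- eventual ratio lower bound  y (τ k ξ) ≥ (lamStar k - ε) y ξ
    have hratioStar : ∀ k : Fin m, ∀ᶠ ξ in atTop, (lamStar k - ε) * y ξ ≤ y (τ k ξ) := by
      intro k
      have hqk := hq_pos k
      have htendn := oscAux_tendsto (q k) (lamStar k) hqk (hroot k) (hminlam k)
      have hlt : lamStar k - ε < lamStar k := by linarith
      obtain ⟨n, hn⟩ := (htendn.eventually_const_lt hlt).exists
      have hcontn : Filter.Tendsto (fun θ => oscAux n θ) (nhds (q k))
          (nhds (oscAux n (q k))) := (oscAux_continuous n).continuousAt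
      have hev1 : ∀ᶠ θ in nhdsWithin (q k) (Set.Iio (q k)), lamStar k - ε < oscAux n θ :=
        (hcontn.eventually_const_lt hn).filter_mono nhdsWithin_le_nhds
      have hev2 : ∀ᶠ θ in nhdsWithin (q k) (Set.Iio (q k)), (0:ℝ) < θ :=
        (eventually_gt_nhds hqk).filter_mono nhdsWithin_le_nhds
      have hev3 : ∀ᶠ θ in nhdsWithin (q k) (Set.Iio (q k)), θ ∈ Set.Iio (q k) :=
        eventually_mem_nhdsWithin
      obtain ⟨θ, ⟨hθn, hθ0⟩, hθmem⟩ := ((hev1.and hev2).and hev3).exists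
      have hθlt : θ < q k := Set.mem_Iio.1 hθmem
      have hclaim : ∀ N : ℕ, ∀ᶠ ξ in atTop, oscAux N θ * y ξ ≤ y (τ k ξ) := by
        intro N
        induction N with
        | zero =>
          filter_upwards [eventually_ge_atTop T3] with ξ hξ
          rw [show oscAux 0 θ = 1 from rfl, one_mul]
          exact hratio1 k ξ hξ
        | succ N ih =>
          have hliminfk : ∀ᶠ t in atTop, θ < ∫ s in τ k t..t, p k s :=
            aux_ev_of_liminf (hliminf k) hqk hθlt
          obtain ⟨S, hS⟩ := eventually_atTop.1 ih
          have hτev : ∀ᶠ t in atTop, max S T3 ≤ τ k t :=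
            (hτ_tendsto k).eventually_ge_atTop _
          filter_upwards [hliminfk, hτev, eventually_ge_atTop T3] with t h1 h2 h3
          have hτkT3 : T3 ≤ τ k t := le_trans (le_max_right S T3) h2
          have hτkS : S ≤ τ k t := le_trans (le_max_left S T3) h2
          have hT2τ : T2 < τ k t := lt_of_lt_of_le hT3T2 hτkT3
          have ht0t : t0 ≤ t := hT3t0.le.trans h3
          have hτt : τ k t ≤ t := hτ_le k t ht0t
          have hrept := hrep (τ k t) t hT2τ hτt
          have haN : 0 < oscAux N θ := oscAux_pos N θ
          have hIccs : Set.Icc (τ k t) t ⊆ Set.Ici t0 := fun z hz =>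
            le_trans (hT3t0.le.trans hτkT3) hz.1
          have hmono_int : oscAux N θ * (∫ s in τ k t..t, p k s)
              ≤ ∫ z in τ k t..t, g z := by
            rw [← intervalIntegral.integral_const_mul]
            apply intervalIntegral.integral_mono_on hτt
            · apply ContinuousOn.intervalIntegrable
              rw [Set.uIcc_of_le hτt]
              exact continuousOn_const.mul ((hp_cont k).mono hIccs)
            · apply (hg_cont.mono ?_).intervalIntegrable
              rw [Set.uIcc_of_le hτt]
              exact fun z hz => lt_of_lt_of_le hT2τ hz.1
            · intro z hz
              have hzT3 : T3 ≤ z := le_trans hτkT3 hz.1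
              have hz2 := hS z (le_trans hτkS hz.1)
              have hyz : 0 < y z := hposT3 z hzT3
              have hratio : oscAux N θ ≤ y (τ k z) / y z := (le_div_iff₀ hyz).2 hz2
              calc oscAux N θ * p k z = p k z * oscAux N θ := mul_comm _ _
                _ ≤ p k z * (y (τ k z) / y z) :=
                  mul_le_mul_of_nonneg_left hratio (hp_nonneg k z (hIccs hz))
                _ ≤ g z := hg_ge_single k z hzT3
          have hstep : θ * oscAux N θ ≤ ∫ z in τ k t..t, g z := by
            have h4 : θ * oscAux N θ ≤ oscAux N θ * ∫ s in τ k t..t, p k s := by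
              rw [mul_comm]
              exact mul_le_mul_of_nonneg_left h1.le haN.le
            linarith
          show oscAux (N+1) θ * y t ≤ y (τ k t)
          rw [show oscAux (N+1) θ = Real.exp (θ * oscAux N θ) from rfl, hrept,
            mul_comm (Real.exp (θ * oscAux N θ)) (y t)]
          exact mul_le_mul_of_nonneg_left (Real.exp_le_exp.2 hstep)
            (hy_pos t (hT3T1.trans h3)).le
      filter_upwards [hclaim n, eventually_ge_atTop T3] with ξ h1 h2
      calc (lamStar k - ε) * y ξ ≤ oscAux n θ * y ξ :=
          mul_le_mul_of_nonneg_right hθn.le (hposT3 ξ h2).le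
        _ ≤ y (τ k ξ) := h1
    -- assemble the comparison function and conclude
    obtain ⟨C0, hC0⟩ := eventually_atTop.1 ((eventually_all.2 hratioStar).and
      (eventually_ge_atTop (T3+1)))
    have hCT3 : T3 ≤ max C0 T3 := le_max_right _ _
    have hh_le : ∀ ξ, max C0 T3 < ξ → (∑ k : Fin m, (lamStar k - ε) * p k ξ) ≤ g ξ := by
      intro ξ hξ
      have hξC0 : C0 ≤ ξ := (le_max_left _ _).trans hξ.le
      obtain ⟨hk, hξ3⟩ := hC0 ξ hξC0
      have hξT3 : T3 ≤ ξ := by linarith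
      apply Finset.sum_le_sum
      intro k _
      have hyξ : 0 < y ξ := hposT3 ξ hξT3
      have hdiv : lamStar k - ε ≤ y (τ k ξ) / y ξ := (le_div_iff₀ hyξ).2 (hk k)
      calc (lamStar k - ε) * p k ξ = p k ξ * (lamStar k - ε) := mul_comm _ _
        _ ≤ p k ξ * (y (τ k ξ) / y ξ) :=
          mul_le_mul_of_nonneg_left hdiv (hp_nonneg k ξ (hT3t0.le.trans hξT3))
    have hh_cont : ContinuousOn (fun ξ => ∑ k : Fin m, (lamStar k - ε) * p k ξ)
        (Set.Ioi (max C0 T3)) := by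
      apply continuousOn_finset_sum
      intro k _
      exact continuousOn_const.mul ((hp_cont k).mono (fun z hz =>
        (hT3t0.trans (lt_of_le_of_lt (le_max_right C0 T3) hz)).le))
    have hev := hkey (fun ξ => ∑ k : Fin m, (lamStar k - ε) * p k ξ) (max C0 T3)
      hCT3 hh_cont hh_le
    have hfreq := aux_freq_of_limsup_gt hcpos hGε
    obtain ⟨t, hle, hlt⟩ := (hev.and_frequently hfreq).exists
    exact absurd hlt (not_lt.2 hle)
end

section
/- Suppose each τ_i is non-decreasing and limsup_{t→∞} ∏_{j=1}^m ( ∏_{i=1}^m ∫_{τ_j(t)}^{t} p_i(s) ds )^{1/m} > 1/m^m. Then every solution of the equation x'(t) + ∑_{i=1}^m p_i(t) x(τ_i(t)) = 0 is oscillatory. -/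
open Real Filter MeasureTheory

private lemma osc_aux
    (m : ℕ) (hm : 1 ≤ m) (t0 : ℝ)
    (p τ : Fin m → ℝ → ℝ)
    (hp_cont : ∀ i, ContinuousOn (p i) (Set.Ici t0))
    (hp_nonneg : ∀ i t, t0 ≤ t → 0 ≤ p i t)
    (hτ_cont : ∀ i, ContinuousOn (τ i) (Set.Ici t0))
    (hτ_le : ∀ i t, t0 ≤ t → τ i t ≤ t)
    (hτ_tendsto : ∀ i, Tendsto (τ i) atTop atTop)
    (hτ_mono : ∀ i, MonotoneOn (τ i) (Set.Ici t0))
    (x : ℝ → ℝ) (hx_cont : Continuous x)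
    (Ts : ℝ) (hTs0 : t0 ≤ Ts)
    (hsol : ∀ t, Ts ≤ t → HasDerivAt x (-(∑ i : Fin m, p i t * x (τ i t))) t)
    (T : ℝ) (hTsT : Ts ≤ T) (hpos : ∀ t, T ≤ t → 0 < x t) :
    ∀ᶠ t in atTop,
      (∏ j : Fin m, (∏ i : Fin m, ∫ s in τ j t..t, p i s) ^ ((1 : ℝ) / m))
        ≤ 1 / (m : ℝ) ^ m := by
  have hm0 : (0:ℝ) < m := Nat.cast_pos.mpr hm
  have ht0T : t0 ≤ T := hTs0.trans hTsT
  -- a helper to push delays beyond a threshold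
  have hdelay : ∀ C : ℝ, ∃ D, C ≤ D ∧ ∀ t, D ≤ t → ∀ i, C ≤ τ i t := by
    intro C
    have h1 : ∀ᶠ t in atTop, ∀ i, C ≤ τ i t :=
      eventually_all.2 fun i => (hτ_tendsto i).eventually_ge_atTop C
    obtain ⟨D, hD⟩ := eventually_atTop.1 h1
    exact ⟨max C D, le_max_left _ _, fun t ht i => hD t ((le_max_right C D).trans ht) i⟩
  obtain ⟨T2, hTT2, hT2⟩ := hdelay T
  obtain ⟨T3, hT2T3, hT3⟩ := hdelay T2
  obtain ⟨T4, hT3T4, hT4⟩ := hdelay T3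
  have hTsT2 : Ts ≤ T2 := hTsT.trans hTT2
  have ht0T2 : t0 ≤ T2 := hTs0.trans hTsT2
  have ht0T3 : t0 ≤ T3 := ht0T2.trans hT2T3
  -- continuity of the right-hand side
  have hg_cont : ContinuousOn (fun s => ∑ i : Fin m, p i s * x (τ i s)) (Set.Ici t0) := by
    apply continuousOn_finset_sum
    intro i _
    exact (hp_cont i).mul (hx_cont.comp_continuousOn (hτ_cont i))
  -- x is antitone on [T2, ∞)
  have hanti : AntitoneOn x (Set.Ici T2) := by
    apply antitoneOn_of_deriv_nonpos (convex_Ici T2) hx_cont.continuousOn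
    · rw [interior_Ici]
      intro t ht
      exact (hsol t (hTsT2.trans ht.le)).differentiableAt.differentiableWithinAt
    · rw [interior_Ici]
      intro t ht
      rw [(hsol t (hTsT2.trans ht.le)).deriv]
      apply neg_nonpos.mpr
      apply Finset.sum_nonneg
      intro i _
      exact mul_nonneg (hp_nonneg i t (ht0T2.trans ht.le))
        (hpos _ (hT2 t ht.le i)).le
  filter_upwards [eventually_ge_atTop T4] with t ht4
  have ht0t : t0 ≤ t := ht0T3.trans (hT3T4.trans ht4)
  have hτT3 : ∀ i, T3 ≤ τ i t := hT4 t ht4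
  have hτT2 : ∀ i, T2 ≤ τ i t := fun i => hT2T3.trans (hτT3 i)
  have hxτpos : ∀ i, 0 < x (τ i t) := fun i => hpos _ (hTT2.trans (hτT2 i))
  -- Step A : integral inequality
  have key : ∀ j : Fin m,
      (∑ i : Fin m, x (τ i t) * ∫ s in τ j t..t, p i s) ≤ x (τ j t) := by
    intro j
    set a := τ j t with ha
    have haT3 : T3 ≤ a := hτT3 j
    have hat : a ≤ t := hτ_le j t ht0t
    have ht0a : t0 ≤ a := ht0T3.trans haT3
    have hsub : Set.uIcc a t ⊆ Set.Ici t0 := by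
      rw [Set.uIcc_of_le hat]
      exact fun s hs => ht0a.trans hs.1
    have hint : IntervalIntegrable (fun s => -(∑ i : Fin m, p i s * x (τ i s)))
        volume a t := ((hg_cont.mono hsub).neg).intervalIntegrable
    have hftc : (∫ s in a..t, -(∑ i : Fin m, p i s * x (τ i s))) = x t - x a := by
      apply intervalIntegral.integral_eq_sub_of_hasDerivAt
      · intro s hs
        rw [Set.uIcc_of_le hat] at hs
        exact hsol s (hTsT.trans ((hTT2.trans (hT2T3.trans haT3)).trans hs.1))
      · exact hint
    have heq : (∫ s in a..t, ∑ i : Fin m, p i s * x (τ i s)) = x a - x t := by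
      have := hftc
      rw [intervalIntegral.integral_neg] at this
      linarith
    -- pointwise lower bound on [a, t]
    have hintegrable1 : IntervalIntegrable
        (fun s => ∑ i : Fin m, p i s * x (τ i t)) volume a t := by
      apply ContinuousOn.intervalIntegrable
      apply continuousOn_finset_sum
      intro i _
      exact ((hp_cont i).mono hsub).mul continuousOn_const
    have hintegrable2 : IntervalIntegrable
        (fun s => ∑ i : Fin m, p i s * x (τ i s)) volume a t :=
      (hg_cont.mono hsub).intervalIntegrable
    have hmono : (∫ s in a..t, ∑ i : Fin m, p i s * x (τ i t))
        ≤ ∫ s in a..t, ∑ i : Fin m, p i s * x (τ i s) := by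
      apply intervalIntegral.integral_mono_on hat hintegrable1 hintegrable2
      intro s hs
      apply Finset.sum_le_sum
      intro i _
      have ht0s : t0 ≤ s := ht0a.trans hs.1
      apply mul_le_mul_of_nonneg_left _ (hp_nonneg i s ht0s)
      apply hanti
      · exact Set.mem_Ici.2 (hT3 s (haT3.trans hs.1) i)
      · exact Set.mem_Ici.2 (hτT2 i)
      · exact hτ_mono i (Set.mem_Ici.2 ht0s) (Set.mem_Ici.2 ht0t) hs.2
    have hsum : (∫ s in a..t, ∑ i : Fin m, p i s * x (τ i t))
        = ∑ i : Fin m, x (τ i t) * ∫ s in a..t, p i s := by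
      rw [intervalIntegral.integral_finset_sum]
      · apply Finset.sum_congr rfl
        intro i _
        rw [intervalIntegral.integral_mul_const, mul_comm]
      · intro i _
        exact (((hp_cont i).mono hsub).mul continuousOn_const).intervalIntegrable
    have hxt : 0 < x t := hpos t (hTT2.trans (hT2T3.trans (hT3T4.trans ht4)))
    calc (∑ i : Fin m, x (τ i t) * ∫ s in a..t, p i s)
        = ∫ s in a..t, ∑ i : Fin m, p i s * x (τ i t) := hsum.symm
      _ ≤ ∫ s in a..t, ∑ i : Fin m, p i s * x (τ i s) := hmono
      _ = x a - x t := heq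
      _ ≤ x a := by linarith
  -- notation
  set I : Fin m → Fin m → ℝ := fun i j => ∫ s in τ j t..t, p i s with hI
  have hInn : ∀ i j, 0 ≤ I i j := by
    intro i j
    apply intervalIntegral.integral_nonneg (hτ_le j t ht0t)
    intro u hu
    exact hp_nonneg i u ((ht0T3.trans (hτT3 j)).trans hu.1)
  set P : ℝ := ∏ i : Fin m, x (τ i t) with hP
  have hPpos : 0 < P := Finset.prod_pos fun i _ => hxτpos i
  -- Step B : AM-GM
  have amgm : ∀ j : Fin m,
      (m : ℝ) * (P ^ ((1:ℝ)/m) * (∏ i : Fin m, I i j) ^ ((1:ℝ)/m)) ≤ x (τ j t) := by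
    intro j
    have hz : ∀ i ∈ (Finset.univ : Finset (Fin m)), 0 ≤ x (τ i t) * I i j :=
      fun i _ => mul_nonneg (hxτpos i).le (hInn i j)
    have hgm := Real.geom_mean_le_arith_mean_weighted Finset.univ
      (fun _ => (1:ℝ)/m) (fun i => x (τ i t) * I i j)
      (fun i _ => by positivity) (by
        simp [Finset.sum_const, Finset.card_univ]
        field_simp) hz
    have hprodeq : (∏ i : Fin m, (x (τ i t) * I i j) ^ ((1:ℝ)/m))
        = P ^ ((1:ℝ)/m) * (∏ i : Fin m, I i j) ^ ((1:ℝ)/m) := by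
      rw [Real.finset_prod_rpow _ _ hz, Finset.prod_mul_distrib,
        Real.mul_rpow (Finset.prod_nonneg fun i _ => (hxτpos i).le)
          (Finset.prod_nonneg fun i _ => hInn i j)]
    have hsum2 : (∑ i : Fin m, (1:ℝ)/m * (x (τ i t) * I i j))
        = (1/m) * ∑ i : Fin m, x (τ i t) * I i j := by
      rw [Finset.mul_sum]
    rw [hprodeq, hsum2] at hgm
    have := key j
    calc (m : ℝ) * (P ^ ((1:ℝ)/m) * (∏ i : Fin m, I i j) ^ ((1:ℝ)/m))
        ≤ (m : ℝ) * ((1/m) * ∑ i : Fin m, x (τ i t) * I i j) := by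
          apply mul_le_mul_of_nonneg_left hgm hm0.le
      _ = ∑ i : Fin m, x (τ i t) * I i j := by field_simp
      _ ≤ x (τ j t) := this
  -- Step C : multiply over j
  have hprodle : (∏ j : Fin m,
      ((m : ℝ) * (P ^ ((1:ℝ)/m) * (∏ i : Fin m, I i j) ^ ((1:ℝ)/m)))) ≤ P := by
    rw [hP]
    apply Finset.prod_le_prod _ (fun j _ => amgm j)
    intro j _
    have h1 : (0:ℝ) ≤ P ^ ((1:ℝ)/m) := Real.rpow_nonneg hPpos.le _
    have h2 : (0:ℝ) ≤ (∏ i : Fin m, I i j) ^ ((1:ℝ)/m) :=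
      Real.rpow_nonneg (Finset.prod_nonneg fun i _ => hInn i j) _
    positivity
  have hlhs : (∏ j : Fin m,
      ((m : ℝ) * (P ^ ((1:ℝ)/m) * (∏ i : Fin m, I i j) ^ ((1:ℝ)/m))))
      = (m : ℝ) ^ m * P * ∏ j : Fin m, (∏ i : Fin m, I i j) ^ ((1:ℝ)/m) := by
    rw [Finset.prod_mul_distrib, Finset.prod_mul_distrib, Finset.prod_const,
      Finset.prod_const, Finset.card_univ, Fintype.card_fin]
    have hPm : (P ^ ((1:ℝ)/m)) ^ m = P := by
      rw [← Real.rpow_natCast (P ^ ((1:ℝ)/m)) m, ← Real.rpow_mul hPpos.le]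
      have : (1:ℝ)/m * m = 1 := by field_simp
      rw [this, Real.rpow_one]
    rw [hPm]
    ring
  rw [hlhs] at hprodle
  have hFle : (m : ℝ) ^ m * (∏ j : Fin m, (∏ i : Fin m, I i j) ^ ((1:ℝ)/m)) ≤ 1 := by
    have hmm : (0:ℝ) < (m:ℝ) ^ m := by positivity
    nlinarith [hprodle, hPpos]
  rw [le_div_iff₀ (by positivity : (0:ℝ) < (m:ℝ)^m)]
  calc (∏ j : Fin m, (∏ i : Fin m, I i j) ^ ((1:ℝ)/m)) * (m:ℝ)^m
      = (m : ℝ) ^ m * (∏ j : Fin m, (∏ i : Fin m, I i j) ^ ((1:ℝ)/m)) := by ring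
    _ ≤ 1 := hFle

/-- **Corollary 3.3.** Suppose each `τ i` is non-decreasing and
`limsup_{t→∞} ∏_j (∏_i ∫_{τ j t}^{t} p i s ds)^{1/m} > 1/mᵐ`.
Then every solution of `x'(t) + ∑ i, p i t * x (τ i t) = 0` is oscillatory. -/
theorem oscillation_several_args_product_condition
    (m : ℕ) (hm : 1 ≤ m) (t0 : ℝ)
    (p τ : Fin m → ℝ → ℝ)
    (hp_cont : ∀ i, ContinuousOn (p i) (Set.Ici t0))
    (hp_nonneg : ∀ i t, t0 ≤ t → 0 ≤ p i t)
    (hτ_cont : ∀ i, ContinuousOn (τ i) (Set.Ici t0))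
    (hτ_nonneg : ∀ i t, t0 ≤ t → 0 ≤ τ i t)
    (hτ_le : ∀ i t, t0 ≤ t → τ i t ≤ t)
    (hτ_tendsto : ∀ i, Tendsto (τ i) atTop atTop)
    (hτ_mono : ∀ i, MonotoneOn (τ i) (Set.Ici t0))
    (hlimsup :
      Filter.limsup (fun t : ℝ =>
        ∏ j : Fin m,
          (∏ i : Fin m, ∫ s in τ j t..t, p i s) ^ ((1 : ℝ) / m))
        atTop > 1 / (m : ℝ) ^ m)
    (x : ℝ → ℝ) (hx_cont : Continuous x)
    (hx_sol : ∃ T, t0 ≤ T ∧ ∀ t, T ≤ t →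
      HasDerivAt x (-(∑ i : Fin m, p i t * x (τ i t))) t) :
    ∀ T : ℝ, ∃ t, T ≤ t ∧ x t = 0 := by
  intro T0
  by_contra hcon
  push_neg at hcon
  obtain ⟨Ts, hTs0, hsol⟩ := hx_sol
  set T : ℝ := max T0 Ts with hT
  have hTsT : Ts ≤ T := le_max_right _ _
  have hne : ∀ t, T ≤ t → x t ≠ 0 := fun t ht => hcon t ((le_max_left _ _).trans ht)
  -- x has constant sign on [T, ∞)
  have hsign : (∀ t, T ≤ t → 0 < x t) ∨ (∀ t, T ≤ t → x t < 0) := by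
    rcases lt_or_gt_of_ne (hne T le_rfl).symm with hTpos | hTneg
    · left
      intro t ht
      by_contra hle
      push_neg at hle
      have hlt : x t < 0 := lt_of_le_of_ne hle (hne t ht)
      have hmem : (0:ℝ) ∈ Set.uIcc (x T) (x t) := by
        rw [Set.mem_uIcc]
        right; exact ⟨hlt.le, hTpos.le⟩
      obtain ⟨c, hc, hxc⟩ := intermediate_value_uIcc (hx_cont.continuousOn) hmem
      rw [Set.uIcc_of_le ht] at hc
      exact hne c hc.1 hxc
    · right
      intro t ht
      by_contra hle
      push_neg at hle
      have hlt : 0 < x t := lt_of_le_of_ne hle (Ne.symm (hne t ht))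
      have hmem : (0:ℝ) ∈ Set.uIcc (x T) (x t) := by
        rw [Set.mem_uIcc]
        left; exact ⟨hTneg.le, hlt.le⟩
      obtain ⟨c, hc, hxc⟩ := intermediate_value_uIcc (hx_cont.continuousOn) hmem
      rw [Set.uIcc_of_le ht] at hc
      exact hne c hc.1 hxc
  -- eventual bound on the limsup function
  have hev : ∀ᶠ t in atTop,
      (∏ j : Fin m, (∏ i : Fin m, ∫ s in τ j t..t, p i s) ^ ((1 : ℝ) / m))
        ≤ 1 / (m : ℝ) ^ m := by
    rcases hsign with hp' | hn'
    · exact osc_aux m hm t0 p τ hp_cont hp_nonneg hτ_cont hτ_le hτ_tendsto hτ_mono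
        x hx_cont Ts hTs0 hsol T hTsT hp'
    · have hsol' : ∀ t, Ts ≤ t →
          HasDerivAt (fun u => -x u) (-(∑ i : Fin m, p i t * (-x (τ i t)))) t := by
        intro t ht
        have h := (hsol t ht).neg
        simp only [mul_neg, Finset.sum_neg_distrib, neg_neg] at h ⊢
        exact h
      exact osc_aux m hm t0 p τ hp_cont hp_nonneg hτ_cont hτ_le hτ_tendsto hτ_mono
        (fun u => -x u) hx_cont.neg Ts hTs0 hsol' T hTsT
        (fun t ht => by simpa using (hn' t ht))
  -- contradiction with the limsup hypothesis
  have hnonneg : ∀ᶠ t in atTop, (0:ℝ) ≤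
      ∏ j : Fin m, (∏ i : Fin m, ∫ s in τ j t..t, p i s) ^ ((1 : ℝ) / m) := by
    have hτt0 : ∀ᶠ t in atTop, ∀ i, t0 ≤ τ i t :=
      eventually_all.2 fun i => (hτ_tendsto i).eventually_ge_atTop t0
    filter_upwards [eventually_ge_atTop t0, hτt0] with t ht hτt
    apply Finset.prod_nonneg
    intro j _
    apply Real.rpow_nonneg
    apply Finset.prod_nonneg
    intro i _
    apply intervalIntegral.integral_nonneg (hτ_le j t ht)
    intro u hu
    exact hp_nonneg i u ((hτt j).trans hu.1)
  have hco : IsCoboundedUnder (· ≤ ·) atTop (fun t : ℝ =>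
      ∏ j : Fin m, (∏ i : Fin m, ∫ s in τ j t..t, p i s) ^ ((1 : ℝ) / m)) :=
    isCoboundedUnder_le_of_eventually_le atTop hnonneg
  have hle := limsup_le_of_le hco hev
  exact absurd hlimsup (not_lt.2 hle)
end
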